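/- arXiv:2208.05169 — 5 statements merged into one kernel-verified Lean document; each statement's English description precedes it below -/
import Mathlib

section
/- With the construction 𝔉(x,b) described in the context: the GD-IFS 𝔉(x,b) satisfies the COSC; for each vertex i ∈ V the basic gaps of the attractor F_i are exactly the open intervals (b_i^{(k)} + |x_i^{(k)}|·l_{ω(e_i(k))}, b_i^{(k+1)}) for 1 ≤ k ≤ d_i − 1, arranged in order from left to right, with lengths b_i^{(k+1)} − (b_i^{(k)} + |x_i^{(k)}|·l_{ω(e_i(k))}) = ξ_i^{(k)}; and if moreover ξ_i^{(k)} > 0 for all i ∈ V and 1 ≤ k ≤ d_i − 1, then 𝔉(x,b) satisfies the CSSC. -/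
open Set Polynomial Matrix

attribute [local instance] Matrix.linftyOpNormedRing Matrix.linftyOpNormedAlgebra

section Helpers

lemma affMono {a : ℝ} (ha : 0 ≤ a) (b : ℝ) : Monotone (fun t : ℝ => a * t + b) :=
  fun _ _ h => add_le_add (mul_le_mul_of_nonneg_left h ha) le_rfl

lemma affAnti {a : ℝ} (ha : a ≤ 0) (b : ℝ) : Antitone (fun t : ℝ => a * t + b) :=
  fun _ _ h => add_le_add (mul_le_mul_of_nonpos_left h ha) le_rfl

lemma affCont (a b : ℝ) : Continuous (fun t : ℝ => a * t + b) :=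
  (continuous_const.mul continuous_id).add continuous_const

lemma affInfPos {a : ℝ} (ha : 0 ≤ a) (b : ℝ) {K : Set ℝ} (hne : K.Nonempty)
    (hbd : BddBelow K) : sInf ((fun t : ℝ => a * t + b) '' K) = a * sInf K + b :=
  (Monotone.map_csInf_of_continuousAt ((affCont a b).continuousAt) (affMono ha b) hne hbd).symm

lemma affSupPos {a : ℝ} (ha : 0 ≤ a) (b : ℝ) {K : Set ℝ} (hne : K.Nonempty)
    (hbd : BddAbove K) : sSup ((fun t : ℝ => a * t + b) '' K) = a * sSup K + b :=
  (Monotone.map_csSup_of_continuousAt ((affCont a b).continuousAt) (affMono ha b) hne hbd).symm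

lemma affInfNeg {a : ℝ} (ha : a ≤ 0) (b : ℝ) {K : Set ℝ} (hne : K.Nonempty)
    (hbd : BddAbove K) : sInf ((fun t : ℝ => a * t + b) '' K) = a * sSup K + b :=
  (Antitone.map_csSup_of_continuousAt ((affCont a b).continuousAt) (affAnti ha b) hne hbd).symm

lemma affSupNeg {a : ℝ} (ha : a ≤ 0) (b : ℝ) {K : Set ℝ} (hne : K.Nonempty)
    (hbd : BddBelow K) : sSup ((fun t : ℝ => a * t + b) '' K) = a * sInf K + b :=
  (Antitone.map_csInf_of_continuousAt ((affCont a b).continuousAt) (affAnti ha b) hne hbd).symm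

lemma affIccPos {a : ℝ} (ha : 0 < a) (b c d : ℝ) :
    (fun t : ℝ => a * t + b) '' Icc c d = Icc (a * c + b) (a * d + b) :=
  Set.image_affine_Icc' ha b c d

lemma affIooPos {a : ℝ} (ha : 0 < a) (b c d : ℝ) :
    (fun t : ℝ => a * t + b) '' Ioo c d = Ioo (a * c + b) (a * d + b) :=
  Set.image_affine_Ioo ha b c d

lemma affIccNeg {a : ℝ} (ha : a < 0) (b c d : ℝ) :
    (fun t : ℝ => a * t + b) '' Icc c d = Icc (a * d + b) (a * c + b) := by
  have h1 : (fun t : ℝ => a * t + b) = (fun t : ℝ => (-a) * t + b) ∘ (fun t : ℝ => -t) := by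
    funext t; simp only [Function.comp_apply]; ring
  rw [h1, Set.image_comp]
  have h2 : (fun t : ℝ => -t) '' Icc c d = Icc (-d) (-c) := by
    simpa using Set.image_neg_Icc (a := c) (b := d)
  rw [h2, affIccPos (neg_pos.mpr ha)]
  congr 1 <;> ring

lemma affIooNeg {a : ℝ} (ha : a < 0) (b c d : ℝ) :
    (fun t : ℝ => a * t + b) '' Ioo c d = Ioo (a * d + b) (a * c + b) := by
  have h1 : (fun t : ℝ => a * t + b) = (fun t : ℝ => (-a) * t + b) ∘ (fun t : ℝ => -t) := by
    funext t; simp only [Function.comp_apply]; ring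
  rw [h1, Set.image_comp]
  have h2 : (fun t : ℝ => -t) '' Ioo c d = Ioo (-d) (-c) := by
    simpa using Set.image_neg_Ioo (a := c) (b := d)
  rw [h2, affIooPos (neg_pos.mpr ha)]
  congr 1 <;> ring

lemma convexHullCompact {K : Set ℝ} (hK : IsCompact K) (hne : K.Nonempty) :
    convexHull ℝ K = Icc (sInf K) (sSup K) := by
  apply Subset.antisymm
  · exact convexHull_min (fun t ht => ⟨csInf_le hK.bddBelow ht, le_csSup hK.bddAbove ht⟩)
      (convex_Icc _ _)
  · rw [← segment_eq_Icc (csInf_le_csSup hne hK.bddBelow hK.bddAbove)]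
    exact segment_subset_convexHull (hK.sInf_mem hne) (hK.sSup_mem hne)

lemma evalCharpoly {n R : Type} [Fintype n] [DecidableEq n] [CommRing R]
    (A : Matrix n n R) (μ : R) :
    (A.charpoly).eval μ = (Matrix.diagonal (fun _ => μ) - A).det := by
  rw [Matrix.charpoly, ← Polynomial.coe_evalRingHom, RingHom.map_det]
  congr 1
  ext i j
  by_cases h : i = j <;>
    simp [h, Matrix.charmatrix_apply, Matrix.diagonal_apply_ne, Matrix.map_apply]

lemma specRad {V : Type} [Fintype V] [DecidableEq V] [Nonempty V] (A : Matrix V V ℂ)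
    (hspec : ∀ μ : ℂ, (A.charpoly.IsRoot μ) → ‖μ‖ < 1) :
    spectralRadius ℂ A < 1 := by
  have hsub : ∀ μ ∈ spectrum ℂ A, (‖μ‖₊ : NNReal) < 1 := by
    intro μ hμ
    rw [spectrum.mem_iff] at hμ
    have : A.charpoly.IsRoot μ := by
      by_contra hroot
      apply hμ
      rw [Matrix.isUnit_iff_isUnit_det]
      apply Ne.isUnit
      intro hdet
      apply hroot
      have halg : (algebraMap ℂ (Matrix V V ℂ)) μ = Matrix.diagonal (fun _ => μ) := by
        ext i j
        by_cases h : i = j <;>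
          simp [Matrix.algebraMap_matrix_apply, Matrix.diagonal_apply, h]
      rw [Polynomial.IsRoot, evalCharpoly, ← halg, hdet]
    have := hspec μ this
    rw [← NNReal.coe_lt_coe]
    simpa using this
  have := spectrum.spectralRadius_lt_of_forall_lt_of_nonempty (spectrum.nonempty A) hsub
  simpa using this

lemma powNormLt {V : Type} [Fintype V] [DecidableEq V] [Nonempty V] (M : Matrix V V ℝ)
    (hspec : ∀ μ : ℂ, ((M.map (fun t : ℝ => (t : ℂ))).charpoly.IsRoot μ) → ‖μ‖ < 1) :
    ∃ n, 1 ≤ n ∧ ‖M ^ n‖ < 1 := by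
  set A := M.map (fun t : ℝ => (t : ℂ)) with hA
  have hnorm : ∀ N : Matrix V V ℝ, ‖N.map (fun t : ℝ => (t : ℂ))‖₊ = ‖N‖₊ := by
    intro N
    simp [Matrix.linfty_opNNNorm_def, Matrix.map_apply]
  have hpow : ∀ n : ℕ, (M ^ n).map (fun t : ℝ => (t : ℂ)) = A ^ n := by
    intro n
    rw [hA]
    have h1m : ∀ N : Matrix V V ℝ, N.map (fun t : ℝ => (t : ℂ))
        = (algebraMap ℝ ℂ).mapMatrix N := fun N => rfl
    rw [h1m, h1m, map_pow]
  have hrad := specRad A hspec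
  have hg := spectrum.pow_nnnorm_pow_one_div_tendsto_nhds_spectralRadius A
  have hev : ∀ᶠ n : ℕ in Filter.atTop, (‖A ^ n‖₊ : ENNReal) ^ (1 / (n : ℝ)) < 1 :=
    hg.eventually_lt_const hrad
  obtain ⟨n, hnlt, hn1⟩ := (hev.and (Filter.eventually_ge_atTop 1)).exists
  have hAn : ‖A ^ n‖₊ < 1 := by
    by_contra hge
    push_neg at hge
    have : (1 : ENNReal) ≤ (‖A ^ n‖₊ : ENNReal) ^ (1 / (n : ℝ)) := by
      rw [← ENNReal.one_rpow (1 / (n : ℝ))]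
      apply ENNReal.rpow_le_rpow _ (by positivity)
      exact_mod_cast hge
    exact absurd hnlt (not_lt.mpr this)
  refine ⟨n, hn1, ?_⟩
  have : ‖M ^ n‖₊ < 1 := by rw [← hnorm, hpow]; exact hAn
  exact this

lemma keyL {V : Type} [Fintype V] [DecidableEq V] [Nonempty V] (M : Matrix V V ℝ)
    (hMnn : ∀ i j, 0 ≤ M i j)
    (hspec : ∀ μ : ℂ, ((M.map (fun t : ℝ => (t : ℂ))).charpoly.IsRoot μ) → ‖μ‖ < 1)
    (s : V → ℝ) (hs : ∀ i, 0 ≤ s i)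
    (l : V → ℝ) (hl : l = ((1 - M)⁻¹).mulVec s) :
    ((1 - M).mulVec l = s) ∧ ∀ i, 0 ≤ l i := by
  have hdet : (1 - M).det ≠ 0 := by
    intro h0
    have h1 : ¬ ((M.map (fun t : ℝ => (t : ℂ))).charpoly.IsRoot 1) := by
      intro hr
      simpa using hspec 1 hr
    apply h1
    rw [Polynomial.IsRoot, evalCharpoly]
    have h1m : ∀ N : Matrix V V ℝ, N.map (fun t : ℝ => (t : ℂ))
        = (algebraMap ℝ ℂ).mapMatrix N := fun N => rfl
    have hmap : (Matrix.diagonal (fun _ : V => (1 : ℂ))) - M.map (fun t : ℝ => (t : ℂ))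
        = ((1 : Matrix V V ℝ) - M).map (fun t : ℝ => (t : ℂ)) := by
      rw [h1m, h1m, map_sub, Matrix.diagonal_one]
      simp
    rw [hmap]
    have hdet2 : (((1 : Matrix V V ℝ) - M).map (fun t : ℝ => (t : ℂ))).det
        = (((1 : Matrix V V ℝ) - M).det : ℂ) := by
      rw [h1m, ← RingHom.map_det]
      rfl
    rw [hdet2, h0]
    simp
  have hUnit : IsUnit (1 - M).det := Ne.isUnit hdet
  have h1 : (1 - M).mulVec l = s := by
    rw [hl, Matrix.mulVec_mulVec, Matrix.mul_nonsing_inv _ hUnit, Matrix.one_mulVec]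
  refine ⟨h1, ?_⟩
  have hMl : ∀ i, (M.mulVec l) i = l i - s i := by
    intro i
    have h2 := congrFun h1 i
    rw [Matrix.sub_mulVec, Matrix.one_mulVec] at h2
    have h3 : l i - (M.mulVec l) i = s i := h2
    linarith
  have hub : ∀ n : ℕ, ∀ i, ((M ^ n).mulVec l) i ≤ l i := by
    intro n
    induction n with
    | zero => intro i; simp [Matrix.one_mulVec]
    | succ n ih =>
        intro i
        have hstep : (M ^ (n + 1)).mulVec l = M.mulVec ((M ^ n).mulVec l) := by
          rw [Matrix.mulVec_mulVec, ← pow_succ']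
        rw [hstep]
        have hle : (M.mulVec ((M ^ n).mulVec l)) i ≤ (M.mulVec l) i := by
          simp only [Matrix.mulVec, dotProduct]
          exact Finset.sum_le_sum fun j _ => mul_le_mul_of_nonneg_left (ih j) (hMnn i j)
        calc (M.mulVec ((M ^ n).mulVec l)) i ≤ (M.mulVec l) i := hle
          _ = l i - s i := hMl i
          _ ≤ l i := by linarith [hs i]
  intro i
  obtain ⟨n0, hn0, hlt⟩ := powNormLt M hspec
  set c := ‖M ^ n0‖ with hc
  have hc0 : 0 ≤ c := norm_nonneg _
  have htend : Filter.Tendsto (fun t : ℕ => -(c ^ t * ‖l‖)) Filter.atTop (nhds 0) := by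
    have := (tendsto_pow_atTop_nhds_zero_of_lt_one hc0 hlt).mul_const ‖l‖
    simpa using this.neg
  refine le_of_tendsto htend ?_
  filter_upwards [Filter.eventually_ge_atTop 1] with t ht
  have hnorm1 : ‖(M ^ (n0 * t)).mulVec l‖ ≤ c ^ t * ‖l‖ := by
    calc ‖(M ^ (n0 * t)).mulVec l‖ ≤ ‖M ^ (n0 * t)‖ * ‖l‖ :=
          Matrix.linfty_opNorm_mulVec _ _
      _ ≤ c ^ t * ‖l‖ := by
          apply mul_le_mul_of_nonneg_right _ (norm_nonneg l)
          rw [pow_mul]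
          exact norm_pow_le' _ (lt_of_lt_of_le one_pos (by exact_mod_cast ht))
  have hcomp : -(c ^ t * ‖l‖) ≤ ((M ^ (n0 * t)).mulVec l) i := by
    have h2 : |((M ^ (n0 * t)).mulVec l) i| ≤ ‖(M ^ (n0 * t)).mulVec l‖ := by
      have := norm_le_pi_norm ((M ^ (n0 * t)).mulVec l) i
      simpa using this
    have := abs_le.mp h2
    linarith
  exact le_trans hcomp (hub _ i)

end Helpers

theorem stmt7 {V E : Type} [Fintype V] [Fintype E] [DecidableEq V]
    (α ω : E → V)
    (d : V → ℕ) (hd : ∀ v, d v = Nat.card {e : E // α e = v}) (hd2 : ∀ v, 2 ≤ d v)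
    (en : V → ℕ → E) (hen : ∀ v, Set.BijOn (en v) (Set.Iio (d v)) {e : E | α e = v})
    (x : V → ℕ → ℝ) (hx : ∀ i k, k < d i → |x i k| < 1 ∧ x i k ≠ 0)
    (ξ : V → ℕ → ℝ) (hξ : ∀ i k, k + 1 < d i → 0 ≤ ξ i k)
    (hξsum : ∀ i, 0 < ∑ k ∈ Finset.range (d i - 1), ξ i k)
    (M : Matrix V V ℝ)
    (hM : ∀ i j, M i j = ∑ k ∈ Finset.range (d i), if ω (en i k) = j then |x i k| else 0)
    (hspec : ∀ μ : ℂ, ((M.map (fun t : ℝ => (t : ℂ))).charpoly.IsRoot μ) → ‖μ‖ < 1)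
    (l : V → ℝ) (hl : l = ((1 - M)⁻¹).mulVec (fun i => ∑ k ∈ Finset.range (d i - 1), ξ i k))
    (b0 : V → ℝ) (bb : V → ℕ → ℝ)
    (hbb0 : ∀ i, bb i 0 = b0 i)
    (hbbs : ∀ i k, k + 1 < d i →
      bb i (k + 1) = bb i k + |x i k| * l (ω (en i k)) + ξ i k)
    (S : E → ℝ → ℝ)
    (hS : ∀ i k, k < d i → ∀ t : ℝ, S (en i k) t =
      x i k * (t - b0 (ω (en i k))) + bb i k -
        x i k * l (ω (en i k)) * (if x i k < 0 then 1 else 0))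
    (F : V → Set ℝ)
    (hFc : ∀ v, IsCompact (F v) ∧ (F v).Nonempty)
    (hFeq : ∀ v, F v = ⋃ e ∈ {e : E | α e = v}, S e '' F (ω e)) :
    -- (a) 𝔉(x,b) satisfies the COSC
    (∃ U : V → Set ℝ,
      (∀ v, (U v).Nonempty ∧ IsOpen (U v) ∧ Bornology.IsBounded (U v) ∧ Convex ℝ (U v)) ∧
      (∀ e, S e '' U (ω e) ⊆ U (α e)) ∧
      (∀ e e', e ≠ e' → α e = α e' → Disjoint (S e '' U (ω e)) (S e' '' U (ω e')))) ∧
    -- (b) the image of conv F_{ω(e_i(k))} under S_{e_i(k)} is the interval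
    --     [b_i^{(k)}, b_i^{(k)} + |x_i^{(k)}| l_{ω(e_i(k))}]
    (∀ i k, k < d i → S (en i k) '' convexHull ℝ (F (ω (en i k))) =
      Set.Icc (bb i k) (bb i k + |x i k| * l (ω (en i k)))) ∧
    -- (c) these intervals are arranged from left to right, so the basic gaps of F_i are
    --     exactly the open intervals (b_i^{(k)} + |x_i^{(k)}| l_{ω(e_i(k))}, b_i^{(k+1)})
    (∀ i k, k + 1 < d i → bb i k + |x i k| * l (ω (en i k)) ≤ bb i (k + 1)) ∧
    -- (d) the basic gap lengths are ξ_i^{(k)}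
    (∀ i k, k + 1 < d i →
      bb i (k + 1) - (bb i k + |x i k| * l (ω (en i k))) = ξ i k) ∧
    -- (e) if all ξ_i^{(k)} > 0 then 𝔉(x,b) satisfies the CSSC
    ((∀ i k, k + 1 < d i → 0 < ξ i k) →
      ∀ e e', e ≠ e' → α e = α e' →
        Disjoint (S e '' convexHull ℝ (F (ω e))) (S e' '' convexHull ℝ (F (ω e')))) := by
  classical
  rcases isEmpty_or_nonempty V with hV | hV
  · have hE : IsEmpty E := ⟨fun e => hV.false (α e)⟩
    exact ⟨⟨fun _ => Set.Ioo 0 1, fun v => isEmptyElim v, fun e => isEmptyElim e,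
      fun e => isEmptyElim e⟩, fun i => isEmptyElim i, fun i => isEmptyElim i,
      fun i => isEmptyElim i, fun _ e => isEmptyElim e⟩
  -- main case
  · have hMnn : ∀ i j, 0 ≤ M i j := by
      intro i j
      rw [hM]
      apply Finset.sum_nonneg
      intro k _
      split
      · exact abs_nonneg _
      · exact le_refl 0
    have hs : ∀ i, 0 ≤ (fun i => ∑ k ∈ Finset.range (d i - 1), ξ i k) i := by
      intro i
      exact le_of_lt (hξsum i)
    obtain ⟨heq1, hlnn⟩ := keyL M hMnn hspec _ hs l hl
    have hMl : ∀ i, (M.mulVec l) i = l i - ∑ k ∈ Finset.range (d i - 1), ξ i k := by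
      intro i
      have h2 := congrFun heq1 i
      rw [Matrix.sub_mulVec, Matrix.one_mulVec] at h2
      have h3 : l i - (M.mulVec l) i = ∑ k ∈ Finset.range (d i - 1), ξ i k := h2
      linarith
    have hKrow : ∀ i, (M.mulVec l) i
        = ∑ k ∈ Finset.range (d i), |x i k| * l (ω (en i k)) := by
      intro i
      simp only [Matrix.mulVec, dotProduct, hM, Finset.sum_mul, ite_mul, zero_mul]
      rw [Finset.sum_comm]
      simp [Finset.sum_ite_eq]
    have hK3 : ∀ i, l i = (∑ k ∈ Finset.range (d i), |x i k| * l (ω (en i k)))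
        + ∑ k ∈ Finset.range (d i - 1), ξ i k := by
      intro i
      have h1 := hMl i
      have h2 := hKrow i
      linarith
    have hl0 : ∀ i, 0 < l i := by
      intro i
      have h1 := hK3 i
      have h2 : 0 ≤ ∑ k ∈ Finset.range (d i), |x i k| * l (ω (en i k)) :=
        Finset.sum_nonneg fun k _ => mul_nonneg (abs_nonneg _) (hlnn _)
      have h3 := hξsum i
      linarith
    -- bb facts
    have hbstep : ∀ i k, k + 1 < d i → bb i k ≤ bb i (k + 1) := by
      intro i k h
      rw [hbbs i k h]
      have h1 := mul_nonneg (abs_nonneg (x i k)) (hlnn (ω (en i k)))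
      have h2 := hξ i k h
      linarith
    have hbmono : ∀ i k k', k ≤ k' → k' < d i → bb i k ≤ bb i k' := by
      intro i k k' hkk hk'
      induction k' with
      | zero => simp [Nat.le_zero.mp hkk]
      | succ n ih =>
          rcases Nat.eq_or_lt_of_le hkk with rfl | hlt
          · exact le_refl _
          · exact le_trans (ih (by omega) (by omega)) (hbstep i n hk')
    have htel : ∀ i k, k < d i → bb i k
        = b0 i + (∑ m ∈ Finset.range k, |x i m| * l (ω (en i m)))
          + ∑ m ∈ Finset.range k, ξ i m := by
      intro i k
      induction k with
      | zero => intro _; simp [hbb0]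
      | succ n ih =>
          intro h
          rw [hbbs i n h, ih (by omega), Finset.sum_range_succ, Finset.sum_range_succ]
          ring
    have hbbge : ∀ i k, k < d i → b0 i ≤ bb i k := by
      intro i k hk
      rw [← hbb0 i]
      exact hbmono i 0 k (Nat.zero_le _) hk
    have hbbtop : ∀ i k, k < d i → bb i k + |x i k| * l (ω (en i k)) ≤ b0 i + l i := by
      intro i k hk
      rw [htel i k hk, hK3 i]
      have h1 : ∑ m ∈ Finset.range (k + 1), |x i m| * l (ω (en i m))
          ≤ ∑ m ∈ Finset.range (d i), |x i m| * l (ω (en i m)) :=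
        Finset.sum_le_sum_of_subset_of_nonneg (Finset.range_subset_range.mpr (by omega))
          (fun m _ _ => mul_nonneg (abs_nonneg _) (hlnn _))
      have h2 : ∑ m ∈ Finset.range k, ξ i m ≤ ∑ m ∈ Finset.range (d i - 1), ξ i m := by
        apply Finset.sum_le_sum_of_subset_of_nonneg (Finset.range_subset_range.mpr (by omega))
        intro m hm _
        have := Finset.mem_range.mp hm
        exact hξ i m (by omega)
      rw [Finset.sum_range_succ] at h1
      linarith
    have heqlast : ∀ i, bb i (d i - 1) + |x i (d i - 1)| * l (ω (en i (d i - 1)))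
        = b0 i + l i := by
      intro i
      have hk : d i - 1 < d i := by have := hd2 i; omega
      rw [htel i _ hk, hK3 i]
      have hr : Finset.range (d i) = Finset.range ((d i - 1) + 1) := by
        congr 1
        have := hd2 i
        omega
      rw [hr, Finset.sum_range_succ]
      ring
    -- the contraction constant
    have hVne : (Finset.univ : Finset V).Nonempty := Finset.univ_nonempty
    have hrne : ∀ i : V, (Finset.range (d i)).Nonempty := by
      intro i
      rw [Finset.nonempty_range_iff]
      have := hd2 i
      omega
    obtain ⟨c, hcdef⟩ : ∃ c : ℝ, c = Finset.univ.sup' hVne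
        (fun i => (Finset.range (d i)).sup' (hrne i) (fun k => |x i k|)) := ⟨_, rfl⟩
    have hcx : ∀ i k, k < d i → |x i k| ≤ c := by
      intro i k hk
      rw [hcdef]
      exact le_trans (Finset.le_sup' (fun k => |x i k|) (Finset.mem_range.mpr hk))
        (Finset.le_sup' (fun i => (Finset.range (d i)).sup' (hrne i) (fun k => |x i k|))
          (Finset.mem_univ i))
    have hc1 : c < 1 := by
      rw [hcdef, Finset.sup'_lt_iff]
      intro i _
      rw [Finset.sup'_lt_iff]
      intro k hk
      exact (hx i k (Finset.mem_range.mp hk)).1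
    have hc0 : 0 ≤ c := by
      obtain ⟨i⟩ := hV
      exact le_trans (abs_nonneg (x i 0)) (hcx i 0 (by have := hd2 i; omega))
    -- functional form of S
    have hSfun : ∀ i k, k < d i → S (en i k) = fun t => x i k * t +
        (bb i k - x i k * b0 (ω (en i k))
          - x i k * l (ω (en i k)) * (if x i k < 0 then 1 else 0)) := by
      intro i k hk
      funext t
      rw [hS i k hk t]
      ring
    have hScont : ∀ i k, k < d i → Continuous (S (en i k)) := by
      intro i k hk
      rw [hSfun i k hk]
      exact affCont _ _
    -- union facts
    have hcover : ∀ i, ∀ t ∈ F i, ∃ k, k < d i ∧ t ∈ S (en i k) '' F (ω (en i k)) := by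
      intro i t ht
      rw [hFeq i] at ht
      simp only [Set.mem_iUnion] at ht
      obtain ⟨e, he, hte⟩ := ht
      obtain ⟨k, hkI, hke⟩ := (hen i).surjOn he
      refine ⟨k, hkI, ?_⟩
      rw [hke]
      exact hte
    have hsub : ∀ i k, k < d i → S (en i k) '' F (ω (en i k)) ⊆ F i := by
      intro i k hk
      rw [hFeq i]
      exact Set.subset_biUnion_of_mem (u := fun e => S e '' F (ω e))
        ((hen i).mapsTo (Set.mem_Iio.mpr hk))
    -- the H (deviation) bound
    obtain ⟨H, hHdef⟩ : ∃ H : ℝ, H = Finset.univ.sup' hVne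
        (fun v => max |sInf (F v) - b0 v| |sSup (F v) - (b0 v + l v)|) := ⟨_, rfl⟩
    have hvH : ∀ v, max |sInf (F v) - b0 v| |sSup (F v) - (b0 v + l v)| ≤ H := by
      intro v
      rw [hHdef]
      exact Finset.le_sup'
        (fun v => max |sInf (F v) - b0 v| |sSup (F v) - (b0 v + l v)|) (Finset.mem_univ v)
    have hH0 : 0 ≤ H := by
      obtain ⟨v⟩ := hV
      exact le_trans (le_trans (abs_nonneg _) (le_max_left _ _)) (hvH v)
    have hLR : ∀ i k, k < d i →
        |sInf (S (en i k) '' F (ω (en i k))) - bb i k| ≤ c * H ∧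
        |sSup (S (en i k) '' F (ω (en i k))) - (bb i k + |x i k| * l (ω (en i k)))|
          ≤ c * H := by
      intro i k hk
      have hne := (hFc (ω (en i k))).2
      have hbdb := (hFc (ω (en i k))).1.bddBelow
      have hbda := (hFc (ω (en i k))).1.bddAbove
      have hmH : |sInf (F (ω (en i k))) - b0 (ω (en i k))| ≤ H :=
        le_trans (le_max_left _ _) (hvH _)
      have hMH : |sSup (F (ω (en i k))) - (b0 (ω (en i k)) + l (ω (en i k)))| ≤ H :=
        le_trans (le_max_right _ _) (hvH _)
      have hcHle : ∀ y z : ℝ, |y| ≤ H → z = x i k * y → |z| ≤ c * H := by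
        intro y z hy hz
        rw [hz, abs_mul]
        exact mul_le_mul (hcx i k hk) hy (abs_nonneg _) hc0
      rw [hSfun i k hk]
      rcases lt_or_gt_of_ne (hx i k hk).2 with hneg | hpos
      · rw [if_pos hneg]
        rw [affInfNeg hneg.le _ hne hbda, affSupNeg hneg.le _ hne hbdb]
        constructor
        · apply hcHle _ _ hMH
          ring
        · apply hcHle _ _ hmH
          rw [abs_of_neg hneg]
          ring
      · rw [if_neg (not_lt.mpr hpos.le)]
        rw [affInfPos hpos.le _ hne hbdb, affSupPos hpos.le _ hne hbda]
        constructor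
        · apply hcHle _ _ hmH
          ring
        · apply hcHle _ _ hMH
          rw [abs_of_pos hpos]
          ring
    have hvc : ∀ i, max |sInf (F i) - b0 i| |sSup (F i) - (b0 i + l i)| ≤ c * H := by
      intro i
      have h0k : 0 < d i := by have := hd2 i; omega
      have hdk : d i - 1 < d i := by have := hd2 i; omega
      have h1 : sInf (F i) ≤ b0 i + c * H := by
        have hsubs := hsub i 0 h0k
        have h := csInf_le_csInf (hFc i).1.bddBelow ((hFc _).2.image _) hsubs
        have hL := abs_le.mp (hLR i 0 h0k).1
        have hb := hbb0 i
        linarith [hL.1, hL.2]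
      have h2 : b0 i - c * H ≤ sInf (F i) := by
        apply le_csInf (hFc i).2
        intro t ht
        obtain ⟨k, hk, htk⟩ := hcover i t ht
        have hbd : BddBelow (S (en i k) '' F (ω (en i k))) :=
          ((hFc _).1.image (hScont i k hk)).bddBelow
        have hLt := csInf_le hbd htk
        have hL := abs_le.mp (hLR i k hk).1
        have hge := hbbge i k hk
        linarith [hL.1, hL.2]
      have h3 : sSup (F i) ≤ b0 i + l i + c * H := by
        apply csSup_le (hFc i).2
        intro t ht
        obtain ⟨k, hk, htk⟩ := hcover i t ht
        have hbd : BddAbove (S (en i k) '' F (ω (en i k))) :=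
          ((hFc _).1.image (hScont i k hk)).bddAbove
        have hRt := le_csSup hbd htk
        have hR := abs_le.mp (hLR i k hk).2
        have htop := hbbtop i k hk
        linarith [hR.1, hR.2]
      have h4 : b0 i + l i - c * H ≤ sSup (F i) := by
        have h := csSup_le_csSup (hFc i).1.bddAbove ((hFc _).2.image _) (hsub i _ hdk)
        have hR := abs_le.mp (hLR i _ hdk).2
        have hlast := heqlast i
        linarith [hR.1, hR.2]
      exact max_le (abs_le.mpr ⟨by linarith, by linarith⟩)
        (abs_le.mpr ⟨by linarith, by linarith⟩)
    have hHle : H ≤ c * H := by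
      nth_rewrite 1 [hHdef]
      exact Finset.sup'_le _ _ fun i _ => hvc i
    have hH : H = 0 := by nlinarith
    have hmveq : ∀ v, sInf (F v) = b0 v := by
      intro v
      have h0 := (hvH v).trans_eq hH
      have h1 : |sInf (F v) - b0 v| ≤ 0 := le_trans (le_max_left _ _) h0
      have h2 := abs_nonneg (sInf (F v) - b0 v)
      have h3 : |sInf (F v) - b0 v| = 0 := le_antisymm h1 h2
      rw [abs_eq_zero, sub_eq_zero] at h3
      exact h3
    have hMveq : ∀ v, sSup (F v) = b0 v + l v := by
      intro v
      have h0 := (hvH v).trans_eq hH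
      have h1 : |sSup (F v) - (b0 v + l v)| ≤ 0 := le_trans (le_max_right _ _) h0
      have h2 := abs_nonneg (sSup (F v) - (b0 v + l v))
      have h3 : |sSup (F v) - (b0 v + l v)| = 0 := le_antisymm h1 h2
      rw [abs_eq_zero, sub_eq_zero] at h3
      exact h3
    have hconv : ∀ v, convexHull ℝ (F v) = Set.Icc (b0 v) (b0 v + l v) := by
      intro v
      rw [convexHullCompact (hFc v).1 (hFc v).2, hmveq v, hMveq v]
    -- interval images
    have himgIcc : ∀ i k, k < d i →
        S (en i k) '' Set.Icc (b0 (ω (en i k))) (b0 (ω (en i k)) + l (ω (en i k)))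
          = Set.Icc (bb i k) (bb i k + |x i k| * l (ω (en i k))) := by
      intro i k hk
      rw [hSfun i k hk]
      rcases lt_or_gt_of_ne (hx i k hk).2 with hneg | hpos
      · rw [if_pos hneg, affIccNeg hneg, abs_of_neg hneg]
        congr 1 <;> ring
      · rw [if_neg (not_lt.mpr hpos.le), affIccPos hpos, abs_of_pos hpos]
        congr 1 <;> ring
    have himgIoo : ∀ i k, k < d i →
        S (en i k) '' Set.Ioo (b0 (ω (en i k))) (b0 (ω (en i k)) + l (ω (en i k)))
          = Set.Ioo (bb i k) (bb i k + |x i k| * l (ω (en i k))) := by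
      intro i k hk
      rw [hSfun i k hk]
      rcases lt_or_gt_of_ne (hx i k hk).2 with hneg | hpos
      · rw [if_pos hneg, affIooNeg hneg, abs_of_neg hneg]
        congr 1 <;> ring
      · rw [if_neg (not_lt.mpr hpos.le), affIooPos hpos, abs_of_pos hpos]
        congr 1 <;> ring
    have hpartb : ∀ i k, k < d i → S (en i k) '' convexHull ℝ (F (ω (en i k)))
        = Set.Icc (bb i k) (bb i k + |x i k| * l (ω (en i k))) := by
      intro i k hk
      rw [hconv, himgIcc i k hk]
    have hpartc : ∀ i k, k + 1 < d i →
        bb i k + |x i k| * l (ω (en i k)) ≤ bb i (k + 1) := by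
      intro i k h
      rw [hbbs i k h]
      linarith [hξ i k h]
    have hord : ∀ v k k', k < k' → k' < d v →
        bb v k + |x v k| * l (ω (en v k)) ≤ bb v k' := by
      intro v k k' hkk hk'
      exact le_trans (hpartc v k (by omega)) (hbmono v (k + 1) k' (by omega) hk')
    refine ⟨?_, hpartb, hpartc, ?_, ?_⟩
    · -- COSC
      refine ⟨fun v => Set.Ioo (b0 v) (b0 v + l v), ?_, ?_, ?_⟩
      · intro v
        exact ⟨Set.nonempty_Ioo.mpr (by linarith [hl0 v]), isOpen_Ioo,
          Metric.isBounded_Ioo _ _, convex_Ioo _ _⟩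
      · intro e
        obtain ⟨k, hkI, hke⟩ := (hen (α e)).surjOn (show e ∈ {u : E | α u = α e} from rfl)
        have hk : k < d (α e) := hkI
        have h : S (en (α e) k) '' Set.Ioo (b0 (ω (en (α e) k)))
            (b0 (ω (en (α e) k)) + l (ω (en (α e) k)))
            ⊆ Set.Ioo (b0 (α e)) (b0 (α e) + l (α e)) := by
          rw [himgIoo (α e) k hk]
          exact Set.Ioo_subset_Ioo (hbbge (α e) k hk) (hbbtop (α e) k hk)
        rw [hke] at h
        exact h
      · intro e e' hnee heq
        obtain ⟨k, hkI, hke⟩ := (hen (α e)).surjOn (show e ∈ {u : E | α u = α e} from rfl)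
        obtain ⟨k', hk'I, hke'⟩ :=
          (hen (α e)).surjOn (show e' ∈ {u : E | α u = α e} from heq.symm)
        have hk : k < d (α e) := hkI
        have hk' : k' < d (α e) := hk'I
        have hkk : k ≠ k' := by
          intro h
          apply hnee
          rw [← hke, ← hke', h]
        have hgen : ∀ a b : ℕ, a < b → b < d (α e) →
            Disjoint (S (en (α e) a) '' Set.Ioo (b0 (ω (en (α e) a)))
                (b0 (ω (en (α e) a)) + l (ω (en (α e) a))))
              (S (en (α e) b) '' Set.Ioo (b0 (ω (en (α e) b)))
                (b0 (ω (en (α e) b)) + l (ω (en (α e) b)))) := by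
          intro a b hab hb
          rw [himgIoo (α e) a (by omega), himgIoo (α e) b hb, Set.disjoint_left]
          rintro t ⟨ht1, ht2⟩ ⟨ht3, ht4⟩
          have := hord (α e) a b hab hb
          linarith
        rcases lt_or_gt_of_ne hkk with h | h
        · have hd2 := hgen k k' h hk'
          rw [hke, hke'] at hd2
          exact hd2
        · have hd2 := (hgen k' k h hk).symm
          rw [hke, hke'] at hd2
          exact hd2
    · -- gap lengths
      intro i k h
      rw [hbbs i k h]
      ring
    · -- CSSC
      intro hξpos e e' hnee heq
      obtain ⟨k, hkI, hke⟩ := (hen (α e)).surjOn (show e ∈ {u : E | α u = α e} from rfl)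
      obtain ⟨k', hk'I, hke'⟩ :=
        (hen (α e)).surjOn (show e' ∈ {u : E | α u = α e} from heq.symm)
      have hk : k < d (α e) := hkI
      have hk' : k' < d (α e) := hk'I
      have hkk : k ≠ k' := by
        intro h
        apply hnee
        rw [← hke, ← hke', h]
      have hordlt : ∀ a b : ℕ, a < b → b < d (α e) →
          bb (α e) a + |x (α e) a| * l (ω (en (α e) a)) < bb (α e) b := by
        intro a b hab hb
        have h1 : bb (α e) a + |x (α e) a| * l (ω (en (α e) a)) < bb (α e) (a + 1) := by
          rw [hbbs (α e) a (by omega)]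
          linarith [hξpos (α e) a (by omega)]
        exact lt_of_lt_of_le h1 (hbmono (α e) (a + 1) b (by omega) hb)
      have hgen : ∀ a b : ℕ, a < b → b < d (α e) →
          Disjoint (S (en (α e) a) '' convexHull ℝ (F (ω (en (α e) a))))
            (S (en (α e) b) '' convexHull ℝ (F (ω (en (α e) b)))) := by
        intro a b hab hb
        rw [hpartb (α e) a (by omega), hpartb (α e) b hb, Set.disjoint_left]
        rintro t ⟨ht1, ht2⟩ ⟨ht3, ht4⟩
        have := hordlt a b hab hb
        linarith
      rcases lt_or_gt_of_ne hkk with h | h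
      · have hd2 := hgen k k' h hk'
        rw [hke, hke'] at hd2
        exact hd2
      · have hd2 := (hgen k' k h hk).symm
        rw [hke, hke'] at hd2
        exact hd2
end

section
/- Let (V,E) be a strongly connected digraph with d_j ≥ 2 for every vertex j ∈ V, containing a directed circuit that does not pass through a vertex i ∈ V. With the construction 𝔉(x) of the context (0 < δ < min_{j∈V} 1/(d_j − 1), |x_j^{(1)}| + ⋯ + |x_j^{(d_j)}| = 1 − (d_j − 1)δ for all j), suppose that for every vertex j ≠ i there exist integers m_j, n_j with 1 ≤ m_j, n_j ≤ d_j − 1 such that |x_i^{(1)}| ∈ (|x_j^{(1)}| + ⋯ + |x_j^{(m_j)}| + (m_j − 1)δ, |x_j^{(1)}| + ⋯ + |x_j^{(m_j)}| + m_jδ) and 1 − |x_i^{(1)}| ∈ (|x_j^{(1)}| + ⋯ + |x_j^{(n_j)}| + (n_j − 1)δ, |x_j^{(1)}| + ⋯ + |x_j^{(n_j)}| + n_jδ). Then the attractor F_i of 𝔉(x) is not the attractor of any standard IFS on ℝ (with or without any separation condition). -/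
/-- `p` is a (nonempty) directed path from `u` to `v`. -/
def IsPathFromTo {E V : Type} (α ω : E → V) (p : List E) (u v : V) : Prop :=
  p ≠ [] ∧ p.Chain' (fun e f => ω e = α f) ∧ (∀ e ∈ p.head?, α e = u) ∧
    (∀ e ∈ p.getLast?, ω e = v)

namespace Stmt13Aux

/-- directed path predicate, by recursion on the edge list -/
def pt {V E : Type} (α ω : E → V) : List E → V → V → Prop
  | [], v, u => v = u
  | e :: l, v, u => α e = v ∧ pt α ω l (ω e) u

/-- the "block": iterated image of `F u` under the maps along an edge list -/
def blk {V E : Type} (S : E → ℝ → ℝ) (F : V → Set ℝ) : List E → V → Set ℝ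
  | [], u => F u
  | e :: l, u => S e '' blk S F l u

structure Ctx (V E : Type) where
  α : E → V
  ω : E → V
  d : V → ℕ
  en : V → ℕ → E
  δ : ℝ
  x : V → ℕ → ℝ
  bb : V → ℕ → ℝ
  S : E → ℝ → ℝ
  F : V → Set ℝ
  hd2 : ∀ v, 2 ≤ d v
  hen : ∀ v, Set.BijOn (en v) (Set.Iio (d v)) {e : E | α e = v}
  hδ0 : 0 < δ
  hx : ∀ i k, k < d i → |x i k| < 1 ∧ x i k ≠ 0
  hxsum : ∀ i, ∑ k ∈ Finset.range (d i), |x i k| = 1 - ((d i : ℝ) - 1) * δ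
  hbb0 : ∀ i, bb i 0 = 0
  hbbs : ∀ i k, k + 1 < d i →
    bb i (k + 1) = (∑ t ∈ Finset.range (k + 1), |x i t|) + (k + 1) * δ
  hS : ∀ i k, k < d i → ∀ t : ℝ,
    S (en i k) t = x i k * t + bb i k - x i k * (if x i k < 0 then 1 else 0)
  hFc : ∀ v, IsCompact (F v) ∧ (F v).Nonempty
  hFeq : ∀ v, F v = ⋃ e ∈ {e : E | α e = v}, S e '' F (ω e)

namespace Ctx

variable {V E : Type} (c : Ctx V E)

lemma alpha_en {v : V} {k : ℕ} (hk : k < c.d v) : c.α (c.en v k) = v :=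
  (c.hen v).mapsTo hk

lemma exists_kn (e : E) : ∃ k, k < c.d (c.α e) ∧ c.en (c.α e) k = e := by
  have := (c.hen (c.α e)).surjOn (show e ∈ {e' : E | c.α e' = c.α e} from rfl)
  obtain ⟨k, hk, hke⟩ := this
  exact ⟨k, hk, hke⟩

noncomputable def kn (e : E) : ℕ := (c.exists_kn e).choose

lemma kn_lt (e : E) : c.kn e < c.d (c.α e) := (c.exists_kn e).choose_spec.1

lemma en_kn (e : E) : c.en (c.α e) (c.kn e) = e := (c.exists_kn e).choose_spec.2

lemma kn_en {v : V} {k : ℕ} (hk : k < c.d v) : c.kn (c.en v k) = k := by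
  have h1 : c.α (c.en v k) = v := c.alpha_en hk
  have h2 := c.en_kn (c.en v k)
  have h3 := c.kn_lt (c.en v k)
  rw [h1] at h2 h3
  exact (c.hen v).injOn h3 hk h2


lemma bbf {v : V} {k : ℕ} (hk : k < c.d v) :
    c.bb v k = (∑ t ∈ Finset.range k, |c.x v t|) + k * c.δ := by
  cases k with
  | zero => simp [c.hbb0 v]
  | succ n =>
    have := c.hbbs v n hk
    push_cast at this ⊢
    linarith

lemma b1_nonneg {v : V} {k : ℕ} (hk : k < c.d v) : 0 ≤ c.bb v k := by
  rw [c.bbf hk]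
  have h1 : (0:ℝ) ≤ ∑ t ∈ Finset.range k, |c.x v t| :=
    Finset.sum_nonneg fun t _ => abs_nonneg _
  have := c.hδ0
  positivity

lemma b2_le_one {v : V} {k : ℕ} (hk : k < c.d v) : c.bb v k + |c.x v k| ≤ 1 := by
  rw [c.bbf hk]
  have key : (∑ t ∈ Finset.range k, |c.x v t|) + |c.x v k|
      ≤ ∑ t ∈ Finset.range (c.d v), |c.x v t| := by
    rw [← Finset.sum_range_succ]
    exact Finset.sum_le_sum_of_subset_of_nonneg
      (Finset.range_subset_range.2 hk) (fun t _ _ => abs_nonneg _)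
  have h2 : (k:ℝ) * c.δ ≤ ((c.d v : ℝ) - 1) * c.δ := by
    have h3 : (k:ℝ) ≤ (c.d v : ℝ) - 1 := by
      have : (k:ℝ) + 1 ≤ (c.d v : ℝ) := by exact_mod_cast hk
      linarith
    have := c.hδ0
    nlinarith
  have := c.hxsum v
  linarith

lemma b2_last (v : V) : c.bb v (c.d v - 1) + |c.x v (c.d v - 1)| = 1 := by
  have hd1 : c.d v - 1 < c.d v := by have := c.hd2 v; omega
  rw [c.bbf hd1]
  have hsucc : c.d v - 1 + 1 = c.d v := by have := c.hd2 v; omega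
  have hsum : (∑ t ∈ Finset.range (c.d v - 1), |c.x v t|) + |c.x v (c.d v - 1)|
      = ∑ t ∈ Finset.range (c.d v), |c.x v t| := by
    rw [← Finset.sum_range_succ, hsucc]
  have hcast : ((c.d v - 1 : ℕ) : ℝ) = (c.d v : ℝ) - 1 := by
    have := c.hd2 v
    push_cast [Nat.cast_sub (by omega : 1 ≤ c.d v)]
    ring
  rw [c.hxsum v] at hsum
  rw [hcast]
  linarith

lemma b1_succ {v : V} {k : ℕ} (hk : k + 1 < c.d v) :
    c.bb v (k + 1) = c.bb v k + |c.x v k| + c.δ := by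
  rw [c.bbf hk, c.bbf (by omega : k < c.d v), Finset.sum_range_succ]
  push_cast; ring

lemma b2_lt_b1 {v : V} {k k' : ℕ} (h : k < k') (h' : k' < c.d v) :
    c.bb v k + |c.x v k| + c.δ ≤ c.bb v k' := by
  rw [c.bbf h', c.bbf (by omega : k < c.d v)]
  have h1 : (∑ t ∈ Finset.range k, |c.x v t|) + |c.x v k|
      ≤ ∑ t ∈ Finset.range k', |c.x v t| := by
    rw [← Finset.sum_range_succ]
    exact Finset.sum_le_sum_of_subset_of_nonneg
      (Finset.range_subset_range.2 h) (fun t _ _ => abs_nonneg _)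
  have h2 : ((k:ℝ) + 1) * c.δ ≤ (k':ℝ) * c.δ := by
    have h3 : (k:ℝ) + 1 ≤ (k':ℝ) := by exact_mod_cast h
    have := c.hδ0
    nlinarith
  linarith

lemma b1_mono {v : V} {k k' : ℕ} (h : k ≤ k') (h' : k' < c.d v) :
    c.bb v k ≤ c.bb v k' := by
  rcases eq_or_lt_of_le h with rfl | hlt
  · exact le_rfl
  · have h1 := c.b2_lt_b1 hlt h'
    have h2 := abs_nonneg (c.x v k)
    have := c.hδ0
    linarith

lemma S_mem_Icc {v : V} {k : ℕ} (hk : k < c.d v) {t : ℝ} (ht : t ∈ Set.Icc (0:ℝ) 1) :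
    c.S (c.en v k) t ∈ Set.Icc (c.bb v k) (c.bb v k + |c.x v k|) := by
  have hSt := c.hS v k hk t
  obtain ⟨ht0, ht1⟩ := ht
  rcases lt_or_ge (c.x v k) 0 with hneg | hpos
  · rw [if_pos hneg] at hSt
    rw [abs_of_neg hneg]
    constructor <;> [nlinarith; nlinarith]
  · rw [if_neg (not_lt.2 hpos)] at hSt
    rw [abs_of_nonneg hpos]
    constructor <;> [nlinarith; nlinarith]

lemma piece_sub {e : E} {v : V} (he : c.α e = v) : c.S e '' c.F (c.ω e) ⊆ c.F v := by
  rw [c.hFeq v]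
  exact Set.subset_biUnion_of_mem (u := fun e => c.S e '' c.F (c.ω e)) (x := e) he

lemma mem_decomp {v : V} {y : ℝ} (hy : y ∈ c.F v) :
    ∃ k, k < c.d v ∧ y ∈ c.S (c.en v k) '' c.F (c.ω (c.en v k)) := by
  rw [c.hFeq v] at hy
  simp only [Set.mem_iUnion, Set.mem_setOf_eq] at hy
  obtain ⟨e, he, hmem⟩ := hy
  refine ⟨c.kn e, ?_, ?_⟩
  · have := c.kn_lt e; rwa [he] at this
  · have h2 := c.en_kn e
    rw [he] at h2
    rwa [h2]

noncomputable def rho [Fintype E] : ℝ :=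
  if h : (Finset.univ : Finset E).Nonempty then
    Finset.univ.sup' h (fun e => |c.x (c.α e) (c.kn e)|) else 0

lemma rho_nonneg [Fintype E] : 0 ≤ c.rho := by
  unfold rho
  split
  · next h =>
      obtain ⟨e, he⟩ := h
      exact le_trans (abs_nonneg _) (Finset.le_sup' (f := fun e => |c.x (c.α e) (c.kn e)|) he)
  · exact le_rfl

lemma le_rho [Fintype E] {v : V} {k : ℕ} (hk : k < c.d v) : |c.x v k| ≤ c.rho := by
  have h1 : c.α (c.en v k) = v := c.alpha_en hk
  have h2 : c.kn (c.en v k) = k := c.kn_en hk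
  unfold rho
  rw [dif_pos ⟨c.en v k, Finset.mem_univ _⟩]
  calc |c.x v k| = |c.x (c.α (c.en v k)) (c.kn (c.en v k))| := by rw [h1, h2]
    _ ≤ _ := Finset.le_sup' (f := fun e => |c.x (c.α e) (c.kn e)|) (Finset.mem_univ _)

lemma rho_lt_one [Fintype E] : c.rho < 1 := by
  unfold rho
  split
  · next h =>
      rw [Finset.sup'_lt_iff]
      intro e _
      exact (c.hx _ _ (c.kn_lt e)).1
  · norm_num


lemma F_subset [Fintype V] [Fintype E] (v : V) : c.F v ⊆ Set.Icc (0:ℝ) 1 := by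
  classical
  haveI : Nonempty V := ⟨v⟩
  set m : V → ℝ := fun w => sInf (c.F w) with hm
  set M : V → ℝ := fun w => sSup (c.F w) with hM
  have hmmem : ∀ w, m w ∈ c.F w := fun w => ((c.hFc w).1).sInf_mem (c.hFc w).2
  have hMmem : ∀ w, M w ∈ c.F w := fun w => ((c.hFc w).1).sSup_mem (c.hFc w).2
  have hmle : ∀ w, ∀ y ∈ c.F w, m w ≤ y := fun w y hy => csInf_le ((c.hFc w).1).bddBelow hy
  have hMge : ∀ w, ∀ y ∈ c.F w, y ≤ M w := fun w y hy => le_csSup ((c.hFc w).1).bddAbove hy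
  have hVne : (Finset.univ : Finset V).Nonempty := Finset.univ_nonempty
  set c₁ : ℝ := max (Finset.univ.sup' hVne (fun w => max (-(m w)) (M w - 1))) 0 with hc₁
  have hc₁0 : (0:ℝ) ≤ c₁ := le_max_right _ _
  have hc₁m : ∀ w, -(m w) ≤ c₁ := fun w =>
    le_trans (le_trans (le_max_left _ _)
      (Finset.le_sup' (f := fun w => max (-(m w)) (M w - 1)) (Finset.mem_univ w)))
      (le_max_left _ _)
  have hc₁M : ∀ w, M w - 1 ≤ c₁ := fun w =>
    le_trans (le_trans (le_max_right _ _)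
      (Finset.le_sup' (f := fun w => max (-(m w)) (M w - 1)) (Finset.mem_univ w)))
      (le_max_left _ _)
  have key : ∀ w, -(m w) ≤ c.rho * c₁ ∧ M w - 1 ≤ c.rho * c₁ := by
    intro w
    constructor
    · obtain ⟨k, hk, s, hs, heq⟩ := c.mem_decomp (hmmem w)
      have hval := c.hS w k hk s
      rw [heq] at hval
      have hsu1 : m (c.ω (c.en w k)) ≤ s := hmle _ s hs
      have hsu2 : s ≤ M (c.ω (c.en w k)) := hMge _ s hs
      have hbbn : 0 ≤ c.bb w k := c.b1_nonneg hk
      have hXr : |c.x w k| ≤ c.rho := c.le_rho hk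
      rcases lt_or_ge (c.x w k) 0 with hneg | hpos
      · rw [if_pos hneg] at hval
        have h1 : -(m w) ≤ (-(c.x w k)) * (M (c.ω (c.en w k)) - 1) := by
          nlinarith [mul_nonneg (le_of_lt (neg_pos.2 hneg)) (sub_nonneg.2 hsu2)]
        have h2 : (-(c.x w k)) * (M (c.ω (c.en w k)) - 1) ≤ (-(c.x w k)) * c₁ :=
          mul_le_mul_of_nonneg_left (hc₁M _) (by linarith)
        have h3 : (-(c.x w k)) * c₁ ≤ c.rho * c₁ := by
          rw [abs_of_neg hneg] at hXr
          exact mul_le_mul_of_nonneg_right hXr hc₁0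
        linarith
      · rw [if_neg (not_lt.2 hpos)] at hval
        have h1 : -(m w) ≤ (c.x w k) * (-(m (c.ω (c.en w k)))) := by
          nlinarith [mul_nonneg hpos (sub_nonneg.2 hsu1)]
        have h2 : (c.x w k) * (-(m (c.ω (c.en w k)))) ≤ (c.x w k) * c₁ :=
          mul_le_mul_of_nonneg_left (hc₁m _) hpos
        have h3 : (c.x w k) * c₁ ≤ c.rho * c₁ := by
          rw [abs_of_nonneg hpos] at hXr
          exact mul_le_mul_of_nonneg_right hXr hc₁0
        linarith
    · obtain ⟨k, hk, s, hs, heq⟩ := c.mem_decomp (hMmem w)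
      have hval := c.hS w k hk s
      rw [heq] at hval
      have hsu1 : m (c.ω (c.en w k)) ≤ s := hmle _ s hs
      have hsu2 : s ≤ M (c.ω (c.en w k)) := hMge _ s hs
      have hbb1 : c.bb w k + |c.x w k| ≤ 1 := c.b2_le_one hk
      have hXr : |c.x w k| ≤ c.rho := c.le_rho hk
      rcases lt_or_ge (c.x w k) 0 with hneg | hpos
      · rw [if_pos hneg] at hval
        rw [abs_of_neg hneg] at hbb1
        have h1 : M w - 1 ≤ (-(c.x w k)) * (-(m (c.ω (c.en w k)))) := by
          nlinarith [mul_nonneg (le_of_lt (neg_pos.2 hneg)) (sub_nonneg.2 hsu1)]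
        have h2 : (-(c.x w k)) * (-(m (c.ω (c.en w k)))) ≤ (-(c.x w k)) * c₁ :=
          mul_le_mul_of_nonneg_left (hc₁m _) (by linarith)
        have h3 : (-(c.x w k)) * c₁ ≤ c.rho * c₁ := by
          rw [abs_of_neg hneg] at hXr
          exact mul_le_mul_of_nonneg_right hXr hc₁0
        linarith
      · rw [if_neg (not_lt.2 hpos)] at hval
        rw [abs_of_nonneg hpos] at hbb1
        have h1 : M w - 1 ≤ (c.x w k) * (M (c.ω (c.en w k)) - 1) := by
          nlinarith [mul_nonneg hpos (sub_nonneg.2 hsu2)]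
        have h2 : (c.x w k) * (M (c.ω (c.en w k)) - 1) ≤ (c.x w k) * c₁ :=
          mul_le_mul_of_nonneg_left (hc₁M _) hpos
        have h3 : (c.x w k) * c₁ ≤ c.rho * c₁ := by
          rw [abs_of_nonneg hpos] at hXr
          exact mul_le_mul_of_nonneg_right hXr hc₁0
        linarith
  have hfix : c₁ ≤ c.rho * c₁ := by
    have h0 : (0:ℝ) ≤ c.rho * c₁ := mul_nonneg c.rho_nonneg hc₁0
    obtain ⟨w0, _, hw0⟩ := Finset.exists_mem_eq_sup' hVne (fun w => max (-(m w)) (M w - 1))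
    have hle : Finset.univ.sup' hVne (fun w => max (-(m w)) (M w - 1)) ≤ c.rho * c₁ := by
      rw [hw0]
      exact max_le (key w0).1 (key w0).2
    exact max_le hle h0
  have hc1zero : c₁ = 0 := by
    have := c.rho_lt_one
    nlinarith
  intro y hy
  have h1 : -(m v) ≤ 0 := by rw [← hc1zero]; exact hc₁m v
  have h2 : M v - 1 ≤ 0 := by rw [← hc1zero]; exact hc₁M v
  exact ⟨by have := hmle v y hy; linarith, by have := hMge v y hy; linarith⟩

lemma zero_one_mem [Fintype V] [Fintype E] (v : V) : (0:ℝ) ∈ c.F v ∧ (1:ℝ) ∈ c.F v := by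
  classical
  haveI : Nonempty V := ⟨v⟩
  set m : V → ℝ := fun w => sInf (c.F w) with hm
  set M : V → ℝ := fun w => sSup (c.F w) with hM
  have hmmem : ∀ w, m w ∈ c.F w := fun w => ((c.hFc w).1).sInf_mem (c.hFc w).2
  have hMmem : ∀ w, M w ∈ c.F w := fun w => ((c.hFc w).1).sSup_mem (c.hFc w).2
  have hmle : ∀ w, ∀ y ∈ c.F w, m w ≤ y := fun w y hy => csInf_le ((c.hFc w).1).bddBelow hy
  have hMge : ∀ w, ∀ y ∈ c.F w, y ≤ M w := fun w y hy => le_csSup ((c.hFc w).1).bddAbove hy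
  have hm0 : ∀ w, 0 ≤ m w := fun w => (c.F_subset w (hmmem w)).1
  have hM1 : ∀ w, M w ≤ 1 := fun w => (c.F_subset w (hMmem w)).2
  have hVne : (Finset.univ : Finset V).Nonempty := Finset.univ_nonempty
  set c₂ : ℝ := max (Finset.univ.sup' hVne (fun w => max (m w) (1 - M w))) 0 with hc₂
  have hc₂0 : (0:ℝ) ≤ c₂ := le_max_right _ _
  have hc₂m : ∀ w, m w ≤ c₂ := fun w =>
    le_trans (le_trans (le_max_left _ _)
      (Finset.le_sup' (f := fun w => max (m w) (1 - M w)) (Finset.mem_univ w)))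
      (le_max_left _ _)
  have hc₂M : ∀ w, 1 - M w ≤ c₂ := fun w =>
    le_trans (le_trans (le_max_right _ _)
      (Finset.le_sup' (f := fun w => max (m w) (1 - M w)) (Finset.mem_univ w)))
      (le_max_left _ _)
  have key : ∀ w, m w ≤ c.rho * c₂ ∧ 1 - M w ≤ c.rho * c₂ := by
    intro w
    have hk0 : 0 < c.d w := by have := c.hd2 w; omega
    have hk1 : c.d w - 1 < c.d w := by have := c.hd2 w; omega
    constructor
    · set u := c.ω (c.en w 0) with hu
      have hXr : |c.x w 0| ≤ c.rho := c.le_rho hk0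
      rcases lt_or_ge (c.x w 0) 0 with hneg | hpos
      · have helem : c.S (c.en w 0) (M u) ∈ c.F w :=
          c.piece_sub (c.alpha_en hk0) ⟨M u, hMmem u, rfl⟩
        have hval := c.hS w 0 hk0 (M u)
        rw [if_pos hneg, c.hbb0 w] at hval
        have hle := hmle w _ helem
        have h1 : m w ≤ (-(c.x w 0)) * (1 - M u) := by rw [hval] at hle; linarith
        have h2 : (-(c.x w 0)) * (1 - M u) ≤ (-(c.x w 0)) * c₂ :=
          mul_le_mul_of_nonneg_left (hc₂M u) (by linarith)
        have h3 : (-(c.x w 0)) * c₂ ≤ c.rho * c₂ := by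
          rw [abs_of_neg hneg] at hXr
          exact mul_le_mul_of_nonneg_right hXr hc₂0
        linarith
      · have helem : c.S (c.en w 0) (m u) ∈ c.F w :=
          c.piece_sub (c.alpha_en hk0) ⟨m u, hmmem u, rfl⟩
        have hval := c.hS w 0 hk0 (m u)
        rw [if_neg (not_lt.2 hpos), c.hbb0 w] at hval
        have hle := hmle w _ helem
        have h1 : m w ≤ (c.x w 0) * (m u) := by rw [hval] at hle; linarith
        have h2 : (c.x w 0) * (m u) ≤ (c.x w 0) * c₂ :=
          mul_le_mul_of_nonneg_left (hc₂m u) hpos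
        have h3 : (c.x w 0) * c₂ ≤ c.rho * c₂ := by
          rw [abs_of_nonneg hpos] at hXr
          exact mul_le_mul_of_nonneg_right hXr hc₂0
        linarith
    · set k1 := c.d w - 1 with hk1def
      set u := c.ω (c.en w k1) with hu
      have hXr : |c.x w k1| ≤ c.rho := c.le_rho hk1
      have hlast : c.bb w k1 + |c.x w k1| = 1 := c.b2_last w
      rcases lt_or_ge (c.x w k1) 0 with hneg | hpos
      · have helem : c.S (c.en w k1) (m u) ∈ c.F w :=
          c.piece_sub (c.alpha_en hk1) ⟨m u, hmmem u, rfl⟩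
        have hval := c.hS w k1 hk1 (m u)
        rw [if_pos hneg] at hval
        rw [abs_of_neg hneg] at hlast hXr
        have hle := hMge w _ helem
        have h1 : 1 - M w ≤ (-(c.x w k1)) * (m u) := by rw [hval] at hle; nlinarith
        have h2 : (-(c.x w k1)) * (m u) ≤ (-(c.x w k1)) * c₂ :=
          mul_le_mul_of_nonneg_left (hc₂m u) (by linarith)
        have h3 : (-(c.x w k1)) * c₂ ≤ c.rho * c₂ :=
          mul_le_mul_of_nonneg_right hXr hc₂0
        linarith
      · have helem : c.S (c.en w k1) (M u) ∈ c.F w :=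
          c.piece_sub (c.alpha_en hk1) ⟨M u, hMmem u, rfl⟩
        have hval := c.hS w k1 hk1 (M u)
        rw [if_neg (not_lt.2 hpos)] at hval
        rw [abs_of_nonneg hpos] at hlast hXr
        have hle := hMge w _ helem
        have h1 : 1 - M w ≤ (c.x w k1) * (1 - M u) := by rw [hval] at hle; nlinarith
        have h2 : (c.x w k1) * (1 - M u) ≤ (c.x w k1) * c₂ :=
          mul_le_mul_of_nonneg_left (hc₂M u) hpos
        have h3 : (c.x w k1) * c₂ ≤ c.rho * c₂ :=
          mul_le_mul_of_nonneg_right hXr hc₂0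
        linarith
  have hfix : c₂ ≤ c.rho * c₂ := by
    have h0 : (0:ℝ) ≤ c.rho * c₂ := mul_nonneg c.rho_nonneg hc₂0
    obtain ⟨w0, _, hw0⟩ := Finset.exists_mem_eq_sup' hVne (fun w => max (m w) (1 - M w))
    have hle : Finset.univ.sup' hVne (fun w => max (m w) (1 - M w)) ≤ c.rho * c₂ := by
      rw [hw0]
      exact max_le (key w0).1 (key w0).2
    exact max_le hle h0
  have hc2zero : c₂ = 0 := by
    have := c.rho_lt_one
    nlinarith
  have h1 : m v ≤ 0 := by rw [← hc2zero]; exact hc₂m v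
  have h2 : 1 - M v ≤ 0 := by rw [← hc2zero]; exact hc₂M v
  constructor
  · have : m v = 0 := le_antisymm h1 (hm0 v)
    rw [← this]; exact hmmem v
  · have : M v = 1 := le_antisymm (hM1 v) (by linarith)
    rw [← this]; exact hMmem v

lemma zero_mem [Fintype V] [Fintype E] (v : V) : (0:ℝ) ∈ c.F v := (c.zero_one_mem v).1

lemma one_mem [Fintype V] [Fintype E] (v : V) : (1:ℝ) ∈ c.F v := (c.zero_one_mem v).2

lemma b2_mono {v : V} {k k' : ℕ} (h : k ≤ k') (h' : k' < c.d v) :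
    c.bb v k + |c.x v k| ≤ c.bb v k' + |c.x v k'| := by
  rcases eq_or_lt_of_le h with rfl | hlt
  · exact le_rfl
  · have h1 := c.b2_lt_b1 hlt h'
    have h2 := abs_nonneg (c.x v k')
    have := c.hδ0
    linarith

lemma b1_memF [Fintype V] [Fintype E] {v : V} {k : ℕ} (hk : k < c.d v) :
    c.bb v k ∈ c.F v := by
  rcases lt_or_ge (c.x v k) 0 with hneg | hpos
  · have h := c.hS v k hk 1
    rw [if_pos hneg] at h
    have h2 : c.S (c.en v k) 1 = c.bb v k := by rw [h]; ring
    rw [← h2]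
    exact c.piece_sub (c.alpha_en hk) ⟨1, c.one_mem _, rfl⟩
  · have h := c.hS v k hk 0
    rw [if_neg (not_lt.2 hpos)] at h
    have h2 : c.S (c.en v k) 0 = c.bb v k := by rw [h]; ring
    rw [← h2]
    exact c.piece_sub (c.alpha_en hk) ⟨0, c.zero_mem _, rfl⟩

lemma b2_memF [Fintype V] [Fintype E] {v : V} {k : ℕ} (hk : k < c.d v) :
    c.bb v k + |c.x v k| ∈ c.F v := by
  rcases lt_or_ge (c.x v k) 0 with hneg | hpos
  · have h := c.hS v k hk 0
    rw [if_pos hneg] at h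
    have h2 : c.S (c.en v k) 0 = c.bb v k + |c.x v k| := by
      rw [h, abs_of_neg hneg]; ring
    rw [← h2]
    exact c.piece_sub (c.alpha_en hk) ⟨0, c.zero_mem _, rfl⟩
  · have h := c.hS v k hk 1
    rw [if_neg (not_lt.2 hpos)] at h
    have h2 : c.S (c.en v k) 1 = c.bb v k + |c.x v k| := by
      rw [h, abs_of_nonneg hpos]; ring
    rw [← h2]
    exact c.piece_sub (c.alpha_en hk) ⟨1, c.one_mem _, rfl⟩

lemma mem_hull [Fintype V] [Fintype E] {v : V} {y : ℝ} (hy : y ∈ c.F v) :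
    ∃ k, k < c.d v ∧ y ∈ c.S (c.en v k) '' c.F (c.ω (c.en v k)) ∧
      y ∈ Set.Icc (c.bb v k) (c.bb v k + |c.x v k|) := by
  obtain ⟨k, hk, hmem⟩ := c.mem_decomp hy
  refine ⟨k, hk, hmem, ?_⟩
  obtain ⟨s, hs, rfl⟩ := hmem
  exact c.S_mem_Icc hk (c.F_subset _ hs)

lemma gap_empty [Fintype V] [Fintype E] {v : V} {k : ℕ} (hk : k + 1 < c.d v)
    {y : ℝ} (hy : y ∈ c.F v) :
    y ∉ Set.Ioo (c.bb v k + |c.x v k|) (c.bb v (k + 1)) := by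
  rintro ⟨h1, h2⟩
  obtain ⟨k3, hk3, _, hIcc⟩ := c.mem_hull hy
  rcases le_or_gt k3 k with hle | hgt
  · have := c.b2_mono hle (by omega : k < c.d v)
    have := hIcc.2
    linarith
  · have := c.b1_mono hgt hk3
    have := hIcc.1
    linarith

lemma gap_bound [Fintype V] [Fintype E] : ∀ n : ℕ, ∀ (v : V) (c0 t : ℝ), c.δ < t → 0 ≤ c0 →
    c0 + t ≤ 1 → (∀ y ∈ c.F v, y ∉ Set.Ioo c0 (c0 + t)) → t ≤ c.rho ^ n := by
  intro n
  induction n with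
  | zero =>
    intro v c0 t ht h0 h1 _
    simpa using by linarith
  | succ n ih =>
    intro v c0 t ht h0 h1 havoid
    classical
    have hd0 := c.hd2 v
    have ht0 : 0 < t := lt_trans c.hδ0 ht
    set P : ℕ → Prop := fun k => c.bb v k ≤ c0 with hPdef
    haveI : DecidablePred P := Classical.decPred P
    set k0 : ℕ := Nat.findGreatest P (c.d v - 1) with hk0
    have hk0le : k0 ≤ c.d v - 1 := Nat.findGreatest_le _
    have hk0lt : k0 < c.d v := by omega
    have hP0 : P 0 := by simp only [hPdef]; rw [c.hbb0 v]; exact h0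
    have hPk0 : c.bb v k0 ≤ c0 := Nat.findGreatest_spec (m := 0) (by omega) hP0
    rcases lt_or_ge c0 (c.bb v k0 + |c.x v k0|) with hcase | hcase
    · -- c0 lies (weakly) inside the hull of piece k0
      have hB2F : c.bb v k0 + |c.x v k0| ∈ c.F v := c.b2_memF hk0lt
      have hub : c0 + t ≤ c.bb v k0 + |c.x v k0| := by
        by_contra hcon
        exact havoid _ hB2F ⟨hcase, by linarith⟩
      have hXr : |c.x v k0| ≤ c.rho := c.le_rho hk0lt
      have hX1 : |c.x v k0| < 1 := (c.hx v k0 hk0lt).1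
      have hXne : c.x v k0 ≠ 0 := (c.hx v k0 hk0lt).2
      have hXpos : (0:ℝ) < |c.x v k0| := abs_pos.2 hXne
      have hSf := c.hS v k0 hk0lt
      have happly : t / |c.x v k0| ≤ c.rho ^ n → t ≤ c.rho ^ (n + 1) := by
        intro h
        rw [div_le_iff₀ hXpos] at h
        calc t ≤ c.rho ^ n * |c.x v k0| := h
          _ ≤ c.rho ^ n * c.rho :=
              mul_le_mul_of_nonneg_left hXr (pow_nonneg c.rho_nonneg n)
          _ = c.rho ^ (n + 1) := by rw [pow_succ]
      have htt' : c.δ < t / |c.x v k0| := by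
        have h2 : t ≤ t / |c.x v k0| := by
          rw [le_div_iff₀ hXpos]
          nlinarith [mul_lt_mul_of_pos_left hX1 ht0]
        linarith
      rcases lt_or_ge (c.x v k0) 0 with hneg | hpos
      · -- negative ratio
        have habs : |c.x v k0| = -(c.x v k0) := abs_of_neg hneg
        set X := c.x v k0 with hXdef
        set B := c.bb v k0 - X with hBdef
        have hBeq : B = c.bb v k0 + |X| := by rw [habs, hBdef]; ring
        set c0' := (B - c0 - t) / (-X) with hc0'
        have hnX : (0:ℝ) < -X := by linarith
        apply happly
        apply ih (c.ω (c.en v k0)) c0' (t / |X|) htt'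
        · apply div_nonneg _ hnX.le
          rw [hBeq]
          linarith
        · rw [habs, hc0', ← add_div, div_le_one hnX]
          have he : B - c0 - t + t = B - c0 := by ring
          rw [he]
          linarith
        · intro y hy hyIoo
          obtain ⟨hy1, hy2⟩ := hyIoo
          have hyv : c.S (c.en v k0) y ∈ c.F v :=
            c.piece_sub (c.alpha_en hk0lt) ⟨y, hy, rfl⟩
          have hSy : c.S (c.en v k0) y = X * y + B := by
            rw [hSf y, if_pos hneg]; ring
          rw [habs, hc0', ← add_div] at hy2
          have he : B - c0 - t + t = B - c0 := by ring
          rw [he] at hy2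
          have hy2' : y * (-X) < B - c0 := (lt_div_iff₀ hnX).1 hy2
          have hy1' : B - c0 - t < y * (-X) := (div_lt_iff₀ hnX).1 (by rw [← hc0']; exact hy1)
          exact havoid _ hyv ⟨by rw [hSy]; linarith, by rw [hSy]; linarith⟩
      · -- positive ratio
        have habs : |c.x v k0| = c.x v k0 := abs_of_nonneg hpos
        set X := c.x v k0 with hXdef
        have hXp : (0:ℝ) < X := by rw [habs] at hXpos; exact hXpos
        set c0' := (c0 - c.bb v k0) / X with hc0'
        apply happly
        apply ih (c.ω (c.en v k0)) c0' (t / |X|) htt'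
        · exact div_nonneg (by linarith) hXp.le
        · rw [habs, hc0', ← add_div, div_le_one hXp]
          rw [habs] at hub
          linarith
        · intro y hy hyIoo
          obtain ⟨hy1, hy2⟩ := hyIoo
          have hyv : c.S (c.en v k0) y ∈ c.F v :=
            c.piece_sub (c.alpha_en hk0lt) ⟨y, hy, rfl⟩
          have hSy : c.S (c.en v k0) y = X * y + c.bb v k0 := by
            rw [hSf y, if_neg (not_lt.2 hpos)]; ring
          rw [habs, hc0', ← add_div] at hy2
          have hy2' : y * X < c0 - c.bb v k0 + t := (lt_div_iff₀ hXp).1 hy2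
          have hy1' : c0 - c.bb v k0 < y * X := (div_lt_iff₀ hXp).1 (by rw [← hc0']; exact hy1)
          exact havoid _ hyv ⟨by rw [hSy]; linarith, by rw [hSy]; linarith⟩
    · -- gap case: contradiction
      rcases (by omega : k0 = c.d v - 1 ∨ k0 + 1 ≤ c.d v - 1) with h | h
      · exfalso
        have hB := c.b2_last v
        rw [← h] at hB
        linarith
      · exfalso
        have hnP : ¬ P (k0 + 1) := Nat.findGreatest_is_greatest (by omega) h
        have hlt : c0 < c.bb v (k0 + 1) := lt_of_not_ge hnP
        have hBF : c.bb v (k0 + 1) ∈ c.F v := c.b1_memF (by omega)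
        have hub : c0 + t ≤ c.bb v (k0 + 1) := by
          by_contra hcon
          exact havoid _ hBF ⟨hlt, by linarith⟩
        have hstep := c.b1_succ (v := v) (k := k0) (by omega)
        linarith

lemma no_big_gap [Fintype V] [Fintype E] (v : V) (c0 t : ℝ) (ht : c.δ < t) (h0 : 0 ≤ c0)
    (h1 : c0 + t ≤ 1) : ∃ y ∈ c.F v, y ∈ Set.Ioo c0 (c0 + t) := by
  by_contra hcon
  push_neg at hcon
  have ht0 : 0 < t := lt_trans c.hδ0 ht
  obtain ⟨n, hn⟩ := exists_pow_lt_of_lt_one ht0 c.rho_lt_one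
  have := c.gap_bound n v c0 t ht h0 h1 (fun y hy hmem => hcon y hy hmem)
  linarith

lemma S_eq (e : E) (t : ℝ) : c.S e t = c.x (c.α e) (c.kn e) * t
    + (c.bb (c.α e) (c.kn e)
      - c.x (c.α e) (c.kn e) * (if c.x (c.α e) (c.kn e) < 0 then 1 else 0)) := by
  have h := c.hS (c.α e) (c.kn e) (c.kn_lt e) t
  rw [c.en_kn e] at h
  rw [h]; ring

lemma xe_ne (e : E) : c.x (c.α e) (c.kn e) ≠ 0 := (c.hx _ _ (c.kn_lt e)).2

lemma S_inj (e : E) : Function.Injective (c.S e) := by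
  intro a b h
  rw [c.S_eq e a, c.S_eq e b] at h
  have h2 : c.x (c.α e) (c.kn e) * a = c.x (c.α e) (c.kn e) * b := by linarith
  exact mul_left_cancel₀ (c.xe_ne e) h2

lemma piece_hull [Fintype V] [Fintype E] {e : E} {v : V} (he : c.α e = v) :
    c.S e '' c.F (c.ω e) ⊆
      Set.Icc (c.bb v (c.kn e)) (c.bb v (c.kn e) + |c.x v (c.kn e)|) := by
  rintro y ⟨t, ht, rfl⟩
  have hk : c.kn e < c.d v := by have := c.kn_lt e; rwa [he] at this
  have hen : c.en v (c.kn e) = e := by have := c.en_kn e; rwa [he] at this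
  have := c.S_mem_Icc (v := v) (k := c.kn e) hk (c.F_subset _ ht)
  rwa [hen] at this

lemma blk_sub_F : ∀ (l : List E) (v u : V), pt c.α c.ω l v u →
    blk c.S c.F l u ⊆ c.F v := by
  intro l
  induction l with
  | nil =>
    intro v u h
    cases h
    exact fun y hy => hy
  | cons e l ih =>
    intro v u h
    obtain ⟨he, hp⟩ := h
    calc blk c.S c.F (e :: l) u = c.S e '' blk c.S c.F l u := rfl
      _ ⊆ c.S e '' c.F (c.ω e) := Set.image_mono (ih _ _ hp)
      _ ⊆ c.F v := c.piece_sub he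

lemma blk_nonempty : ∀ (l : List E) (u : V), (blk c.S c.F l u).Nonempty := by
  intro l
  induction l with
  | nil => intro u; exact (c.hFc u).2
  | cons e l ih => intro u; exact (ih u).image _

lemma blk_prefix : ∀ (l₁ : List E) (l₂ : List E) (v w u : V), pt c.α c.ω l₁ v w →
    pt c.α c.ω l₂ w u → blk c.S c.F (l₁ ++ l₂) u ⊆ blk c.S c.F l₁ w := by
  intro l₁
  induction l₁ with
  | nil =>
    intro l₂ v w u h1 h2
    cases h1
    exact c.blk_sub_F l₂ _ _ h2
  | cons e l ih =>
    intro l₂ v w u h1 h2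
    obtain ⟨he, hp⟩ := h1
    exact Set.image_mono (ih l₂ _ _ _ hp h2)

lemma blk_disjoint [Fintype V] [Fintype E] : ∀ (l₁ l₂ : List E) (v u₁ u₂ : V),
    pt c.α c.ω l₁ v u₁ → pt c.α c.ω l₂ v u₂ → l₁.length = l₂.length → l₁ ≠ l₂ →
    ∀ y, y ∈ blk c.S c.F l₁ u₁ → y ∈ blk c.S c.F l₂ u₂ → False := by
  intro l₁
  induction l₁ with
  | nil =>
    intro l₂ v u₁ u₂ _ _ hlen hne _ _ _
    exact hne (by cases l₂ with
      | nil => rfl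
      | cons e t => simp at hlen)
  | cons e₁ t₁ ih =>
    intro l₂ v u₁ u₂ hp1 hp2 hlen hne y hy1 hy2
    cases l₂ with
    | nil => simp at hlen
    | cons e₂ t₂ =>
      obtain ⟨he1, hq1⟩ := hp1
      obtain ⟨he2, hq2⟩ := hp2
      by_cases heq : e₁ = e₂
      · subst heq
        have htne : t₁ ≠ t₂ := fun h => hne (by rw [h])
        obtain ⟨a, ha, haeq⟩ := hy1
        obtain ⟨b, hb, hbeq⟩ := hy2
        have hab : a = b := c.S_inj e₁ (by rw [haeq, hbeq])
        subst hab
        exact ih t₂ _ _ _ hq1 hq2 (by simpa using hlen) htne a ha hb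
      · have hk1 : c.kn e₁ < c.d v := by have := c.kn_lt e₁; rwa [he1] at this
        have hk2 : c.kn e₂ < c.d v := by have := c.kn_lt e₂; rwa [he2] at this
        have hkne : c.kn e₁ ≠ c.kn e₂ := by
          intro h
          apply heq
          have q1 : c.en v (c.kn e₁) = e₁ := by have := c.en_kn e₁; rwa [he1] at this
          have q2 : c.en v (c.kn e₂) = e₂ := by have := c.en_kn e₂; rwa [he2] at this
          rw [← q1, ← q2, h]
        have hIcc1 := c.piece_hull he1 (Set.image_mono (c.blk_sub_F t₁ _ _ hq1) hy1)
        have hIcc2 := c.piece_hull he2 (Set.image_mono (c.blk_sub_F t₂ _ _ hq2) hy2)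
        rcases lt_or_gt_of_ne hkne with h | h
        · have := c.b2_lt_b1 h hk2
          have := c.hδ0
          have := hIcc1.2
          have := hIcc2.1
          linarith
        · have := c.b2_lt_b1 h hk1
          have := c.hδ0
          have := hIcc1.1
          have := hIcc2.2
          linarith

lemma one_step [Fintype V] [Fintype E] (v₀ v : V) (μ a : ℝ) (hμ : μ ≠ 0) (hμ1 : |μ| < 1)
    (him : (fun t => μ * t + a) '' c.F v₀ ⊆ c.F v) :
    ∃ k, k < c.d v ∧ ∃ μ' a', μ' ≠ 0 ∧ |μ'| ≤ 1 ∧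
      (∀ t : ℝ, μ * t + a = c.S (c.en v k) (μ' * t + a')) ∧
      (fun t => μ' * t + a') '' c.F v₀ ⊆ c.F (c.ω (c.en v k)) := by
  set lo := a + min μ 0 with hlo_def
  set hi := a + max μ 0 with hhi_def
  have hlo_mem : lo ∈ (fun t => μ * t + a) '' c.F v₀ := by
    rcases lt_or_gt_of_ne hμ with hneg | hpos
    · exact ⟨1, c.one_mem v₀, by simp [hlo_def, min_eq_left hneg.le]; ring⟩
    · exact ⟨0, c.zero_mem v₀, by simp [hlo_def, min_eq_right hpos.le]⟩
  have hhi_mem : hi ∈ (fun t => μ * t + a) '' c.F v₀ := by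
    rcases lt_or_gt_of_ne hμ with hneg | hpos
    · exact ⟨0, c.zero_mem v₀, by simp [hhi_def, max_eq_right hneg.le]⟩
    · exact ⟨1, c.one_mem v₀, by simp [hhi_def, max_eq_left hpos.le]; ring⟩
  have hG_Icc : ∀ y ∈ (fun t => μ * t + a) '' c.F v₀, y ∈ Set.Icc lo hi := by
    rintro y ⟨t, ht, rfl⟩
    obtain ⟨ht0, ht1⟩ := c.F_subset v₀ ht
    dsimp only
    rcases lt_or_gt_of_ne hμ with hneg | hpos
    · rw [hlo_def, hhi_def, min_eq_left hneg.le, max_eq_right hneg.le]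
      constructor <;> nlinarith
    · rw [hlo_def, hhi_def, min_eq_right hpos.le, max_eq_left hpos.le]
      constructor <;> nlinarith
  have hdiff : hi - lo = |μ| := by
    rcases lt_or_gt_of_ne hμ with hneg | hpos
    · rw [hlo_def, hhi_def, min_eq_left hneg.le, max_eq_right hneg.le, abs_of_neg hneg]; ring
    · rw [hlo_def, hhi_def, min_eq_right hpos.le, max_eq_left hpos.le, abs_of_pos hpos]; ring
  obtain ⟨k₁, hk₁, hpc₁, hI₁⟩ := c.mem_hull (him hlo_mem)
  obtain ⟨k₂, hk₂, hpc₂, hI₂⟩ := c.mem_hull (him hhi_mem)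
  have hlohi : lo ≤ hi := by rw [hlo_def, hhi_def]; have := min_le_max (a := μ) (b := 0); linarith
  by_cases hk12 : k₁ = k₂
  · -- exact one child contains the whole image
    subst hk12
    refine ⟨k₁, hk₁, ?_⟩
    have hGpiece : (fun t => μ * t + a) '' c.F v₀ ⊆
        c.S (c.en v k₁) '' c.F (c.ω (c.en v k₁)) := by
      intro y hy
      obtain ⟨k₃, hk₃, hpc₃, hI₃⟩ := c.mem_hull (him hy)
      have hyIcc := hG_Icc y hy
      by_cases h31 : k₃ = k₁
      · subst h31; exact hpc₃
      · exfalso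
        rcases lt_or_gt_of_ne h31 with h | h
        · have := c.b2_lt_b1 h hk₁
          have := c.hδ0
          have h5 := hI₃.2
          have h6 := hI₁.1
          have h7 := hyIcc.1
          linarith
        · have := c.b2_lt_b1 h hk₃
          have := c.hδ0
          have h5 := hI₃.1
          have h6 := hI₂.2
          have h7 := hyIcc.2
          linarith
    set X := c.x v k₁ with hXdef
    have hXne : X ≠ 0 := (c.hx v k₁ hk₁).2
    set A := c.bb v k₁ - X * (if X < 0 then 1 else 0) with hAdef
    have hSf : ∀ t : ℝ, c.S (c.en v k₁) t = X * t + A := by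
      intro t; rw [c.hS v k₁ hk₁ t]; ring
    have hμX : |μ| ≤ |X| := by
      have h5 := hI₁.1
      have h6 := hI₂.2
      linarith [hdiff]
    refine ⟨μ / X, (a - A) / X, div_ne_zero hμ hXne, ?_, ?_, ?_⟩
    · rw [abs_div, div_le_one (abs_pos.2 hXne)]
      exact hμX
    · intro t
      rw [hSf]
      field_simp
      ring
    · rintro y ⟨t, ht, rfl⟩
      have hmem : μ * t + a ∈ c.S (c.en v k₁) '' c.F (c.ω (c.en v k₁)) :=
        hGpiece ⟨t, ht, rfl⟩
      obtain ⟨z, hz, hzeq⟩ := hmem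
      have : z = μ / X * t + (a - A) / X := by
        apply c.S_inj (c.en v k₁)
        rw [hzeq, hSf]
        field_simp
        ring
      dsimp only
      rw [← this]
      exact hz
  · -- two children: impossible because of the δ-gap
    exfalso
    have hk12' : k₁ < k₂ := by
      rcases lt_or_gt_of_ne hk12 with h | h
      · exact h
      · exfalso
        have := c.b2_lt_b1 h hk₁
        have := c.hδ0
        have h5 := hI₁.1
        have h6 := hI₂.2
        linarith
    have hk₁1 : k₁ + 1 < c.d v := by omega
    have hstep : c.bb v (k₁ + 1) = c.bb v k₁ + |c.x v k₁| + c.δ := c.b1_succ hk₁1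
    have hb1mono : c.bb v (k₁ + 1) ≤ c.bb v k₂ := c.b1_mono (by omega) hk₂
    -- the gap (B2 k₁, bb (k₁+1)) is inside [lo,hi]; pull it back to v₀
    have hμpos : 0 < |μ| := abs_pos.2 hμ
    have htt' : c.δ < c.δ / |μ| := by
      have h2 : c.δ * |μ| < c.δ * 1 := by
        have := c.hδ0
        exact mul_lt_mul_of_pos_left hμ1 this
      rw [lt_div_iff₀ hμpos]
      linarith
    have hB2lo : lo ≤ c.bb v k₁ + |c.x v k₁| := hI₁.2
    have hB2lo' : c.bb v k₁ + |c.x v k₁| < c.bb v (k₁ + 1) := by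
      have := c.hδ0; linarith
    have hb1hi : c.bb v (k₁ + 1) ≤ hi := le_trans hb1mono hI₂.1
    have key : ∃ y ∈ c.F v₀,
        μ * y + a ∈ Set.Ioo (c.bb v k₁ + |c.x v k₁|) (c.bb v (k₁ + 1)) := by
      rcases lt_or_gt_of_ne hμ with hneg | hpos
      · have hnμ : (0:ℝ) < -μ := by linarith
        have habs : |μ| = -μ := abs_of_neg hneg
        have hlo' : lo = a + μ := by rw [hlo_def, min_eq_left hneg.le]
        have hhi' : hi = a := by rw [hhi_def, max_eq_right hneg.le]; ring
        obtain ⟨y, hy, hyI⟩ := c.no_big_gap v₀ ((a - c.bb v (k₁+1)) / (-μ)) (c.δ / |μ|) htt'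
          (div_nonneg (by linarith) hnμ.le)
          (by
            rw [habs, ← add_div, div_le_one hnμ]
            linarith)
        refine ⟨y, hy, ?_⟩
        obtain ⟨hy1, hy2⟩ := hyI
        rw [habs, ← add_div] at hy2
        have hy2' : y * (-μ) < a - c.bb v (k₁+1) + c.δ := (lt_div_iff₀ hnμ).1 hy2
        have hy1' : a - c.bb v (k₁+1) < y * (-μ) := (div_lt_iff₀ hnμ).1 hy1
        constructor
        · nlinarith
        · nlinarith
      · have habs : |μ| = μ := abs_of_pos hpos
        have hlo' : lo = a := by rw [hlo_def, min_eq_right hpos.le]; ring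
        have hhi' : hi = a + μ := by rw [hhi_def, max_eq_left hpos.le]
        obtain ⟨y, hy, hyI⟩ := c.no_big_gap v₀ ((c.bb v k₁ + |c.x v k₁| - a) / μ) (c.δ / |μ|) htt'
          (div_nonneg (by linarith) hpos.le)
          (by
            rw [habs, ← add_div, div_le_one hpos]
            linarith)
        refine ⟨y, hy, ?_⟩
        obtain ⟨hy1, hy2⟩ := hyI
        rw [habs, ← add_div] at hy2
        have hy2' : y * μ < c.bb v k₁ + |c.x v k₁| - a + c.δ := (lt_div_iff₀ hpos).1 hy2
        have hy1' : c.bb v k₁ + |c.x v k₁| - a < y * μ := (div_lt_iff₀ hpos).1 hy1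
        constructor
        · nlinarith
        · nlinarith
    obtain ⟨y, hy, hyIoo⟩ := key
    have : μ * y + a ∈ c.F v := him ⟨y, hy, rfl⟩
    exact c.gap_empty hk₁1 this hyIoo

lemma descent [Fintype V] [Fintype E] (v₀ : V) : ∀ n : ℕ, ∀ (v : V) (μ a : ℝ), μ ≠ 0 →
    |μ| ≤ 1 → c.rho ^ n < |μ| → ((fun t => μ * t + a) '' c.F v₀ ⊆ c.F v) →
    ∃ (l : List E) (u : V) (lam cst : ℝ), pt c.α c.ω l v u ∧ (l = [] → |μ| = 1) ∧
      ((fun t => μ * t + a) '' c.F v₀ ⊆ blk c.S c.F l u) ∧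
      blk c.S c.F l u = (fun t => lam * t + cst) '' c.F u ∧ |μ| = |lam| := by
  intro n
  induction n with
  | zero =>
    intro v μ a hμ hμ1 hpow _
    exfalso
    simp only [pow_zero] at hpow
    linarith
  | succ n ih =>
    intro v μ a hμ hμ1 hpow him
    rcases eq_or_lt_of_le hμ1 with heq | hlt
    · refine ⟨[], v, 1, 0, rfl, fun _ => heq, him, ?_, by rw [heq]; simp⟩
      show c.F v = _
      simp
    · obtain ⟨k, hk, μ', a', hμ'ne, hμ'1, hcomp, him'⟩ := c.one_step v₀ v μ a hμ hlt him
      set X := c.x v k with hXdef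
      have hXne : X ≠ 0 := (c.hx v k hk).2
      have hXr : |X| ≤ c.rho := c.le_rho hk
      have hXpos : (0:ℝ) < |X| := abs_pos.2 hXne
      have hrhopos : (0:ℝ) < c.rho := lt_of_lt_of_le hXpos hXr
      set A := c.bb v k - X * (if X < 0 then 1 else 0) with hAdef
      have hSf : ∀ t : ℝ, c.S (c.en v k) t = X * t + A := by
        intro t; rw [c.hS v k hk t]; ring
      have hfac : μ = X * μ' := by
        have h0 := hcomp 0
        have h1 := hcomp 1
        rw [hSf] at h0 h1
        nlinarith [h0, h1]
      have habsfac : |μ| = |X| * |μ'| := by rw [hfac, abs_mul]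
      have hpow' : c.rho ^ n < |μ'| := by
        have h2 : |X| * |μ'| ≤ c.rho * |μ'| :=
          mul_le_mul_of_nonneg_right hXr (abs_nonneg μ')
        have h3 : c.rho ^ (n + 1) = c.rho * c.rho ^ n := by rw [pow_succ]; ring
        have h4 : c.rho * c.rho ^ n < c.rho * |μ'| := by
          rw [← h3]
          calc c.rho ^ (n+1) < |μ| := hpow
            _ = |X| * |μ'| := habsfac
            _ ≤ c.rho * |μ'| := h2
        exact lt_of_mul_lt_mul_left h4 hrhopos.le
      obtain ⟨l, u, lam, cst, hpt, _, hsub, hblk, habs⟩ :=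
        ih (c.ω (c.en v k)) μ' a' hμ'ne hμ'1 hpow' him'
      refine ⟨c.en v k :: l, u, X * lam, X * cst + A, ⟨c.alpha_en hk, hpt⟩,
        fun h => by simp at h, ?_, ?_, ?_⟩
      · rintro y ⟨t, ht, rfl⟩
        dsimp only
        rw [hcomp t]
        exact ⟨μ' * t + a', hsub ⟨t, ht, rfl⟩, rfl⟩
      · show c.S (c.en v k) '' blk c.S c.F l u = _
        rw [hblk, ← Set.image_comp]
        have hfun : (c.S (c.en v k)) ∘ (fun t => lam * t + cst)
            = fun t => (X * lam) * t + (X * cst + A) := by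
          funext t
          simp only [Function.comp_apply]
          rw [hSf]
          ring
        rw [hfun]
      · rw [habsfac, habs, abs_mul]

lemma fill [Fintype V] [Fintype E] (v₀ u : V) (μ a lam cst : ℝ) (hμ : μ ≠ 0)
    (hsub : (fun t => μ * t + a) '' c.F v₀ ⊆ (fun t => lam * t + cst) '' c.F u)
    (habs : |μ| = |lam|) :
    (∀ y ∈ c.F v₀, y ∈ c.F u) ∨ (∀ y ∈ c.F v₀, 1 - y ∈ c.F u) := by
  have hlamne : lam ≠ 0 := by
    intro h
    rw [h, abs_zero, abs_eq_zero] at habs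
    exact hμ habs
  have hglo : a + min μ 0 ∈ (fun t => μ * t + a) '' c.F v₀ := by
    rcases lt_or_gt_of_ne hμ with hneg | hpos
    · exact ⟨1, c.one_mem v₀, by simp [min_eq_left hneg.le]; ring⟩
    · exact ⟨0, c.zero_mem v₀, by simp [min_eq_right hpos.le]⟩
  have hghi : a + max μ 0 ∈ (fun t => μ * t + a) '' c.F v₀ := by
    rcases lt_or_gt_of_ne hμ with hneg | hpos
    · exact ⟨0, c.zero_mem v₀, by simp [max_eq_right hneg.le]⟩
    · exact ⟨1, c.one_mem v₀, by simp [max_eq_left hpos.le]; ring⟩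
  have hψIcc : ∀ y ∈ (fun t => lam * t + cst) '' c.F u,
      y ∈ Set.Icc (cst + min lam 0) (cst + max lam 0) := by
    rintro y ⟨t, ht, rfl⟩
    obtain ⟨ht0, ht1⟩ := c.F_subset u ht
    dsimp only
    rcases lt_or_gt_of_ne hlamne with hneg | hpos
    · rw [min_eq_left hneg.le, max_eq_right hneg.le]
      constructor <;> nlinarith
    · rw [min_eq_right hpos.le, max_eq_left hpos.le]
      constructor <;> nlinarith
  have e1 : cst + min lam 0 ≤ a + min μ 0 := (hψIcc _ (hsub hglo)).1
  have e2 : a + max μ 0 ≤ cst + max lam 0 := (hψIcc _ (hsub hghi)).2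
  have hdμ : max μ 0 - min μ 0 = |μ| := by
    rw [max_sub_min_eq_abs]; simp
  have hdlam : max lam 0 - min lam 0 = |lam| := by
    rw [max_sub_min_eq_abs]; simp
  have hEq1 : a + min μ 0 = cst + min lam 0 := by linarith
  rcases abs_eq_abs.1 habs with h | h
  · left
    subst h
    have hac : a = cst := by linarith
    subst hac
    intro y hy
    obtain ⟨z, hz, hzeq⟩ := hsub ⟨y, hy, rfl⟩
    dsimp only at hzeq
    have : z = y := mul_left_cancel₀ hlamne (by linarith)
    rwa [← this]
  · right
    subst h
    have hac : a - cst = lam := by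
      rcases lt_or_gt_of_ne hlamne with hneg | hpos
      · rw [min_eq_left hneg.le, min_eq_right (by linarith : (0:ℝ) ≤ -lam)] at hEq1
        linarith
      · rw [min_eq_right hpos.le, min_eq_left (by linarith : -lam ≤ (0:ℝ))] at hEq1
        linarith
    intro y hy
    obtain ⟨z, hz, hzeq⟩ := hsub ⟨y, hy, rfl⟩
    dsimp only at hzeq
    have : z = 1 - y := mul_left_cancel₀ hlamne (by nlinarith)
    rwa [← this]

end Ctx

section PathLemmas

variable {V E : Type} {α ω : E → V}

lemma pt_append (α ω : E → V) : ∀ (l₁ l₂ : List E) (v u : V),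
    pt α ω (l₁ ++ l₂) v u ↔ ∃ w, pt α ω l₁ v w ∧ pt α ω l₂ w u := by
  intro l₁
  induction l₁ with
  | nil =>
    intro l₂ v u
    constructor
    · intro h; exact ⟨v, rfl, h⟩
    · rintro ⟨w, rfl, h⟩; exact h
  | cons e l ih =>
    intro l₂ v u
    constructor
    · rintro ⟨he, h⟩
      obtain ⟨w, h1, h2⟩ := (ih l₂ _ u).1 h
      exact ⟨w, ⟨he, h1⟩, h2⟩
    · rintro ⟨w, ⟨he, h1⟩, h2⟩
      exact ⟨he, (ih l₂ _ u).2 ⟨w, h1, h2⟩⟩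

lemma pt_end_unique : ∀ (l : List E) (v u u' : V),
    pt α ω l v u → pt α ω l v u' → u = u' := by
  intro l
  induction l with
  | nil =>
    intro v u u' h h'
    cases h; cases h'; rfl
  | cons e t ih =>
    intro v u u' h h'
    exact ih (ω e) u u' h.2 h'.2

lemma pt_last_mem : ∀ (l : List E) (v u : V), pt α ω l v u → l ≠ [] →
    ∃ e ∈ l, ω e = u := by
  intro l
  induction l with
  | nil => intro v u _ h; exact absurd rfl h
  | cons e t ih =>
    intro v u hp _
    obtain ⟨he, ht⟩ := hp
    cases t with
    | nil => exact ⟨e, by simp, ht⟩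
    | cons f t' =>
      obtain ⟨g, hg, hgu⟩ := ih (ω e) u ht (by simp)
      exact ⟨g, List.mem_cons_of_mem e hg, hgu⟩

lemma pt_of_chain : ∀ (p : List E) (a b : V), p ≠ [] →
    List.Chain' (fun e f => ω e = α f) p → (∀ e ∈ p.head?, α e = a) →
    (∀ e ∈ p.getLast?, ω e = b) → pt α ω p a b := by
  intro p
  induction p with
  | nil => intro a b h; exact absurd rfl h
  | cons e t ih =>
    intro a b _ hch hhd hlast
    have ha : α e = a := hhd e (by simp)
    cases t with
    | nil =>
      refine ⟨ha, ?_⟩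
      show ω e = b
      exact hlast e (by simp)
    | cons f t' =>
      obtain ⟨hef, hch'⟩ := List.isChain_cons_cons.1 hch
      refine ⟨ha, ?_⟩
      apply ih (ω e) b (by simp) hch'
      · intro g hg
        simp only [List.head?_cons, Option.mem_some_iff] at hg
        rw [← hg]
        exact hef.symm
      · intro g hg
        apply hlast
        rw [List.getLast?_cons_cons]
        exact hg

lemma pt_of_isPath {p : List E} {a b : V} (h : IsPathFromTo α ω p a b) :
    pt α ω p a b :=
  pt_of_chain p a b h.1 h.2.1 h.2.2.1 h.2.2.2

lemma pt_suffix_avoid (i₀ : V) :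
    ∀ (n : ℕ) (q : List E) (b : V), q.length ≤ n → pt α ω q i₀ b → b ≠ i₀ → q ≠ [] →
    ∃ q', q' ≠ [] ∧ pt α ω q' i₀ b ∧ ∀ e ∈ q', ω e ≠ i₀ := by
  intro n
  induction n with
  | zero =>
    intro q b hlen _ _ hne
    cases q with
    | nil => exact absurd rfl hne
    | cons e t => simp at hlen
  | succ n ih =>
    intro q b hlen hpt hb hne
    by_cases hall : ∀ e ∈ q, ω e ≠ i₀
    · exact ⟨q, hne, hpt, hall⟩
    · push_neg at hall
      obtain ⟨e, he, hωe⟩ := hall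
      obtain ⟨q₁, q₂, rfl⟩ := List.append_of_mem he
      obtain ⟨w, _, hw2⟩ := (pt_append α ω q₁ (e :: q₂) i₀ b).1 hpt
      obtain ⟨_, hq₂⟩ := hw2
      rw [hωe] at hq₂
      have hq₂ne : q₂ ≠ [] := by
        rintro rfl
        exact hb hq₂.symm
      apply ih q₂ b ?_ hq₂ hb hq₂ne
      have := @List.length_append E q₁ (e :: q₂)
      simp only [List.length_cons] at this
      omega

lemma pt_repeat (L : List E) (w : V) (hL : pt α ω L w w) (hLne : L ≠ []) :
    ∀ n : ℕ, ∃ l : List E, pt α ω l w w ∧ n ≤ l.length ∧ ∀ e ∈ l, e ∈ L := by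
  intro n
  induction n with
  | zero => exact ⟨[], rfl, by simp, by simp⟩
  | succ n ih =>
    obtain ⟨l, h1, h2, h3⟩ := ih
    refine ⟨L ++ l, (pt_append α ω L l w w).2 ⟨w, hL, h1⟩, ?_, ?_⟩
    · have hLl : 1 ≤ L.length := List.length_pos_iff.2 hLne
      rw [List.length_append]
      omega
    · intro e he
      rcases List.mem_append.1 he with h | h
      · exact h
      · exact h3 e h

end PathLemmas

end Stmt13Aux

open Stmt13Aux in
theorem stmt13 {V E : Type} [Fintype V] [Fintype E]
    (α ω : E → V)
    (d : V → ℕ) (hd : ∀ v, d v = Nat.card {e : E // α e = v}) (hd2 : ∀ v, 2 ≤ d v)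
    -- strong connectivity
    (hconn : ∀ a b : V, ∃ p : List E, IsPathFromTo α ω p a b)
    -- a vertex i₀ outside some directed circuit
    (i₀ : V)
    (hcirc : ∃ (L : List E) (w₀ : V), IsPathFromTo α ω L w₀ w₀ ∧
      ∀ e ∈ L, α e ≠ i₀ ∧ ω e ≠ i₀)
    -- enumeration of the edges leaving each vertex
    (en : V → ℕ → E) (hen : ∀ v, Set.BijOn (en v) (Set.Iio (d v)) {e : E | α e = v})
    -- parameters of the construction 𝔉(x)
    (δ : ℝ) (hδ0 : 0 < δ) (hδ : ∀ i, δ < 1 / ((d i : ℝ) - 1))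
    (x : V → ℕ → ℝ) (hx : ∀ i k, k < d i → |x i k| < 1 ∧ x i k ≠ 0)
    (hxsum : ∀ i, ∑ k ∈ Finset.range (d i), |x i k| = 1 - ((d i : ℝ) - 1) * δ)
    (bb : V → ℕ → ℝ)
    (hbb0 : ∀ i, bb i 0 = 0)
    (hbbs : ∀ i k, k + 1 < d i →
      bb i (k + 1) = (∑ t ∈ Finset.range (k + 1), |x i t|) + (k + 1) * δ)
    (S : E → ℝ → ℝ)
    (hS : ∀ i k, k < d i → ∀ t : ℝ,
      S (en i k) t = x i k * t + bb i k - x i k * (if x i k < 0 then 1 else 0))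
    -- attractors of 𝔉(x)
    (F : V → Set ℝ)
    (hFc : ∀ v, IsCompact (F v) ∧ (F v).Nonempty)
    (hFeq : ∀ v, F v = ⋃ e ∈ {e : E | α e = v}, S e '' F (ω e))
    -- the two interval conditions: for every j ≠ i₀, |x_{i₀}^{(1)}| and 1 - |x_{i₀}^{(1)}|
    -- each lie in some basic gap of F_j
    (hin1 : ∀ j : V, j ≠ i₀ → ∃ m : ℕ, m + 1 < d j ∧
      |x i₀ 0| ∈ Set.Ioo ((∑ t ∈ Finset.range (m + 1), |x j t|) + m * δ)
        ((∑ t ∈ Finset.range (m + 1), |x j t|) + (m + 1) * δ))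
    (hin2 : ∀ j : V, j ≠ i₀ → ∃ m : ℕ, m + 1 < d j ∧
      1 - |x i₀ 0| ∈ Set.Ioo ((∑ t ∈ Finset.range (m + 1), |x j t|) + m * δ)
        ((∑ t ∈ Finset.range (m + 1), |x j t|) + (m + 1) * δ)) :
    -- F_{i₀} is not the attractor of any standard IFS
    ¬ ∃ (ι : Type) (_ : Fintype ι) (_ : Nonempty ι) (r s : ι → ℝ),
      (∀ i, |r i| < 1 ∧ r i ≠ 0) ∧
      (∀ i j, r i = r j → s i = s j → i = j) ∧
      F i₀ = ⋃ i, (fun t => r i * t + s i) '' F i₀ := by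
  rintro ⟨ι, hfin, hne, r, s, hr, hinj, hF⟩
  set c : Ctx V E :=
    ⟨α, ω, d, en, δ, x, bb, S, F, hd2, hen, hδ0, hx, hxsum, hbb0, hbbs, hS, hFc, hFeq⟩
    with hc
  haveI : Fintype ι := hfin
  -- p is the special point of F i₀
  have hdi₀ : 0 < d i₀ := by have := hd2 i₀; omega
  have hpmem : |x i₀ 0| ∈ F i₀ := by
    have h := c.b2_memF (v := i₀) (k := 0) hdi₀
    rw [show c.bb i₀ 0 = bb i₀ 0 from rfl, hbb0 i₀, zero_add] at h
    exact h
  -- every map of the IFS leads back to a block over i₀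
  have key : ∀ i : ι, ∃ l : List E, l ≠ [] ∧ pt c.α c.ω l i₀ i₀ ∧
      (fun t => r i * t + s i) '' F i₀ ⊆ blk c.S c.F l i₀ := by
    intro i
    have him : (fun t => r i * t + s i) '' F i₀ ⊆ F i₀ := by
      have h1 : (fun t => r i * t + s i) '' F i₀ ⊆
          ⋃ j, (fun t => r j * t + s j) '' F i₀ :=
        Set.subset_iUnion (fun j => (fun t => r j * t + s j) '' F i₀) i
      rwa [← hF] at h1
    obtain ⟨hri1, hri2⟩ := hr i
    obtain ⟨n, hn⟩ := exists_pow_lt_of_lt_one (abs_pos.2 hri2) c.rho_lt_one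
    obtain ⟨l, u, lam, cst, hpt, hnil, hsub, hblk, habs⟩ :=
      c.descent i₀ n i₀ (r i) (s i) hri2 hri1.le hn him
    have hlne : l ≠ [] := fun h => absurd (hnil h) (ne_of_lt hri1)
    have hsub2 : (fun t => r i * t + s i) '' c.F i₀ ⊆ (fun t => lam * t + cst) '' c.F u := by
      rw [← hblk]; exact hsub
    have hdisj := c.fill i₀ u (r i) (s i) lam cst hri2 hsub2 habs
    have hu : u = i₀ := by
      by_contra hu
      rcases hdisj with hcase | hcase
      · obtain ⟨m, hm, hmem⟩ := hin1 u hu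
        have hpin : |x i₀ 0| ∈ c.F u := hcase _ hpmem
        apply c.gap_empty (v := u) (k := m) hm hpin
        have h1 : bb u m + |x u m|
            = (∑ t ∈ Finset.range (m + 1), |x u t|) + (m : ℝ) * δ := by
          cases m with
          | zero =>
            rw [hbb0 u, Finset.sum_range_succ (f := fun t => |x u t|) (n := 0),
              Finset.sum_range_zero]
            push_cast
            ring
          | succ k =>
            rw [Finset.sum_range_succ (f := fun t => |x u t|) (n := k + 1),
              hbbs u k (by omega)]
            push_cast
            ring
        have h0' : bb u (m + 1)
            = (∑ t ∈ Finset.range (m + 1), |x u t|) + ((m : ℝ) + 1) * δ :=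
          hbbs u m hm
        show |x i₀ 0| ∈ Set.Ioo (bb u m + |x u m|) (bb u (m + 1))
        rw [h1, h0']
        exact hmem
      · obtain ⟨m, hm, hmem⟩ := hin2 u hu
        have hpin : 1 - |x i₀ 0| ∈ c.F u := hcase _ hpmem
        apply c.gap_empty (v := u) (k := m) hm hpin
        have h1 : bb u m + |x u m|
            = (∑ t ∈ Finset.range (m + 1), |x u t|) + (m : ℝ) * δ := by
          cases m with
          | zero =>
            rw [hbb0 u, Finset.sum_range_succ (f := fun t => |x u t|) (n := 0),
              Finset.sum_range_zero]
            push_cast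
            ring
          | succ k =>
            rw [Finset.sum_range_succ (f := fun t => |x u t|) (n := k + 1),
              hbbs u k (by omega)]
            push_cast
            ring
        have h0' : bb u (m + 1)
            = (∑ t ∈ Finset.range (m + 1), |x u t|) + ((m : ℝ) + 1) * δ :=
          hbbs u m hm
        show (1 - |x i₀ 0|) ∈ Set.Ioo (bb u m + |x u m|) (bb u (m + 1))
        rw [h1, h0']
        exact hmem
    rw [hu] at hpt hsub
    exact ⟨l, hlne, hpt, hsub⟩
  choose ll hll using key
  -- the circuit avoiding i₀ and a connecting path
  obtain ⟨L, w₀, hLpath, hLavoid⟩ := hcirc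
  have hLpt : pt α ω L w₀ w₀ := pt_of_isPath hLpath
  have hLne : L ≠ [] := hLpath.1
  have hw₀ : w₀ ≠ i₀ := by
    cases L with
    | nil => exact absurd rfl hLne
    | cons e t =>
      have h1 : α e = w₀ := hLpath.2.2.1 e (by simp)
      have h2 : α e ≠ i₀ := (hLavoid e (by simp)).1
      rw [← h1]
      exact h2
  obtain ⟨q0, hq0⟩ := hconn i₀ w₀
  have hq0pt : pt α ω q0 i₀ w₀ := pt_of_isPath hq0
  obtain ⟨q', hq'ne, hq'pt, hq'avoid⟩ :=
    pt_suffix_avoid i₀ q0.length q0 w₀ le_rfl hq0pt hw₀ hq0.1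
  set N : ℕ := Finset.univ.sup (fun i : ι => (ll i).length) with hN
  obtain ⟨lrep, hrep_pt, hrep_len, hrep_mem⟩ := pt_repeat L w₀ hLpt hLne N
  set π : List E := q' ++ lrep with hπ
  have hπpt : pt α ω π i₀ w₀ := (pt_append α ω q' lrep i₀ w₀).2 ⟨w₀, hq'pt, hrep_pt⟩
  have hπavoid : ∀ e ∈ π, ω e ≠ i₀ := by
    intro e he
    rcases List.mem_append.1 he with h | h
    · exact hq'avoid e h
    · exact (hLavoid e (hrep_mem e h)).2
  have hπlen : N ≤ π.length := by
    rw [hπ, List.length_append]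
    omega
  -- a point in the deep block along π
  obtain ⟨ξ, hξ⟩ := c.blk_nonempty π w₀
  have hξF : ξ ∈ F i₀ := c.blk_sub_F π i₀ w₀ hπpt hξ
  rw [hF] at hξF
  obtain ⟨i, hξi⟩ := Set.mem_iUnion.1 hξF
  have hξblk1 : ξ ∈ blk c.S c.F (ll i) i₀ := (hll i).2.2 hξi
  set n : ℕ := (ll i).length with hn
  have hnN : n ≤ N := by
    rw [hn, hN]
    exact Finset.le_sup (f := fun i : ι => (ll i).length) (Finset.mem_univ i)
  have hn1 : 1 ≤ n := by
    rw [hn]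
    have := (hll i).1
    cases hl : ll i with
    | nil => exact absurd hl this
    | cons e t => simp [hl]
  have hsplit : π.take n ++ π.drop n = π := List.take_append_drop n π
  have hπpt' : pt α ω (π.take n ++ π.drop n) i₀ w₀ := by rw [hsplit]; exact hπpt
  obtain ⟨u', hu'1, hu'2⟩ := (pt_append α ω (π.take n) (π.drop n) i₀ w₀).1 hπpt'
  have hξblk2 : ξ ∈ blk c.S c.F (π.take n) u' := by
    apply c.blk_prefix (π.take n) (π.drop n) i₀ u' w₀ hu'1 hu'2
    rw [hsplit]
    exact hξ
  have htklen : (π.take n).length = n := by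
    rw [List.length_take]
    omega
  have htkne : π.take n ≠ [] := by
    intro h
    rw [h] at htklen
    simp at htklen
    omega
  have hu'ne : u' ≠ i₀ := by
    obtain ⟨e, he, heu⟩ := pt_last_mem (π.take n) i₀ u' hu'1 htkne
    rw [← heu]
    exact hπavoid e (List.take_subset n π he)
  have hne_list : π.take n ≠ ll i := by
    intro h
    rw [h] at hu'1
    exact hu'ne (pt_end_unique (ll i) i₀ u' i₀ hu'1 (hll i).2.1)
  exact c.blk_disjoint (π.take n) (ll i) i₀ u' i₀ hu'1 (hll i).2.1
    (by rw [htklen]) hne_list ξ hξblk2 hξblk1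
end

section
/- Let (V,E) be a strongly connected digraph with d_v ≥ 2 for all v ∈ V, and suppose every directed circuit in (V,E) goes through the vertex u ∈ V. Then for any GD-IFS of similarities on ℝ based on (V,E) with attractors (F_w)_{w∈V}, the set F_u is the attractor of some standard IFS on ℝ; moreover, if the GD-IFS satisfies the COSC then F_u is the attractor of a standard IFS on ℝ satisfying the COSC. -/
/-- The composition of the similarity maps along a list of edges. -/
noncomputable def Sl {E : Type} (ρ c : E → ℝ) : List E → ℝ → ℝ
  | [] => fun t => t
  | e :: p => fun t => ρ e * Sl ρ c p t + c e


namespace SlAux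

variable {V E : Type} {α ω : E → V} {ρ c : E → ℝ} {F : V → Set ℝ}

lemma Sl_cons (e : E) (p : List E) (t : ℝ) :
    Sl ρ c (e :: p) t = ρ e * Sl ρ c p t + c e := rfl

lemma Sl_append (p q : List E) (t : ℝ) :
    Sl ρ c (p ++ q) t = Sl ρ c p (Sl ρ c q t) := by
  induction p with
  | nil => rfl
  | cons e p ih => simp [Sl_cons, ih]

lemma Sl_affine (p : List E) (t : ℝ) :
    Sl ρ c p t = (p.map ρ).prod * t + Sl ρ c p 0 := by
  induction p generalizing t with
  | nil => simp [Sl]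
  | cons e p ih =>
    simp only [Sl_cons, List.map_cons, List.prod_cons]
    rw [ih t, ih 0]
    ring

lemma prod_abs_le (hρ : ∀ e, |ρ e| < 1) (p : List E) : |(p.map ρ).prod| ≤ 1 := by
  induction p with
  | nil => simp
  | cons e p ih =>
    simp only [List.map_cons, List.prod_cons, abs_mul]
    calc |ρ e| * |(p.map ρ).prod| ≤ 1 * 1 :=
          mul_le_mul (hρ e).le ih (abs_nonneg _) zero_le_one
      _ = 1 := one_mul 1

lemma prod_abs_lt (hρ : ∀ e, |ρ e| < 1) (p : List E) (hp : p ≠ []) :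
    |(p.map ρ).prod| < 1 := by
  cases p with
  | nil => exact absurd rfl hp
  | cons e p =>
    simp only [List.map_cons, List.prod_cons, abs_mul]
    calc |ρ e| * |(p.map ρ).prod| ≤ |ρ e| * 1 :=
          mul_le_mul_of_nonneg_left (prod_abs_le hρ p) (abs_nonneg _)
      _ = |ρ e| := mul_one _
      _ < 1 := hρ e

lemma prod_ne_zero (hρ : ∀ e, ρ e ≠ 0) (p : List E) : (p.map ρ).prod ≠ 0 := by
  induction p with
  | nil => simp
  | cons e p ih => simp [List.prod_cons, hρ e, ih]

lemma Sl_injective (hρ : ∀ e, ρ e ≠ 0) (p : List E) : Function.Injective (Sl ρ c p) := by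
  intro a b hab
  rw [Sl_affine p a, Sl_affine p b] at hab
  have h : (p.map ρ).prod * a = (p.map ρ).prod * b := by linarith
  exact mul_left_cancel₀ (prod_ne_zero hρ p) h

lemma Sl_image_subset (G : V → Set ℝ)
    (hG : ∀ e, (fun t => ρ e * t + c e) '' G (ω e) ⊆ G (α e)) :
    ∀ (p : List E), p ≠ [] → p.Chain' (fun e f => ω e = α f) →
      ∀ {v w : V}, (∀ e ∈ p.head?, α e = v) → (∀ e ∈ p.getLast?, ω e = w) →
      Sl ρ c p '' G w ⊆ G v := by
  intro p
  induction p with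
  | nil => intro h; exact absurd rfl h
  | cons e p ih =>
    intro _ hch v w hh hl
    have hv : α e = v := hh e rfl
    cases p with
    | nil =>
      have hw : ω e = w := hl e rfl
      subst hv; subst hw
      intro x hx
      obtain ⟨y, hy, rfl⟩ := hx
      exact hG e ⟨y, hy, rfl⟩
    | cons f p' =>
      rw [List.Chain', List.isChain_cons_cons] at hch
      have hl' : ∀ g ∈ (f :: p').getLast?, ω g = w := by
        intro g hg; exact hl g (by rwa [List.getLast?_cons_cons])
      have h1 : Sl ρ c (f :: p') '' G w ⊆ G (α f) :=
        ih (List.cons_ne_nil _ _) hch.2 (fun g hg => by simp_all) hl'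
      intro x hx
      obtain ⟨y, hy, rfl⟩ := hx
      rw [Sl_cons]
      subst hv
      apply hG e
      refine ⟨Sl ρ c (f :: p') y, ?_, rfl⟩
      rw [hch.1]
      exact h1 ⟨y, hy, rfl⟩

lemma avoid_length_le [Fintype V] (u : V)
    (hcirc : ∀ (w : V) (p : List E), IsPathFromTo α ω p w w → ∃ e ∈ p, α e = u)
    (q : List E) (hch : q.Chain' (fun e f => ω e = α f)) (hq : ∀ e ∈ q, α e ≠ u) :
    q.length ≤ Fintype.card V := by
  have hnd : (q.map α).Nodup := by
    rw [List.nodup_iff_injective_get]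
    intro i j hij
    by_contra hne
    have hne' : (i : ℕ) ≠ (j : ℕ) := fun h => hne (Fin.ext h)
    wlog hlt : (i : ℕ) < (j : ℕ) generalizing i j
    · exact this hij.symm (fun h => hne h.symm) hne'.symm (by omega)
    have hjlen : (j : ℕ) < q.length := by
      have := j.isLt; simpa using this
    have hilen : (i : ℕ) < q.length := lt_trans hlt hjlen
    have hgets : α (q.get ⟨i, hilen⟩) = α (q.get ⟨j, hjlen⟩) := by
      have h1 : (q.map α).get i = α (q.get ⟨i, hilen⟩) := by simp
      have h2 : (q.map α).get j = α (q.get ⟨j, hjlen⟩) := by simp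
      rw [← h1, ← h2] at *
      · exact hij
    set r : List E := (q.drop (i : ℕ)).take ((j : ℕ) - (i : ℕ)) with hr
    have hrlen : r.length = (j : ℕ) - (i : ℕ) := by
      simp [hr, List.length_take, List.length_drop]
      omega
    have hrne : r ≠ [] := by
      apply List.ne_nil_of_length_pos
      omega
    have hrget : ∀ (m : ℕ) (h : m < r.length), r[m] = q[(i : ℕ) + m]'(by omega) := by
      intro m h
      simp [hr]
    have hinf : r <:+: q :=
      ((q.drop (i : ℕ)).take_prefix _).isInfix.trans (q.drop_suffix _).isInfix
    have hrch : r.Chain' (fun e f => ω e = α f) := hch.infix hinf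
    have hhead : ∀ e ∈ r.head?, α e = α (q.get ⟨i, hilen⟩) := by
      intro e he
      rw [List.head?_eq_head hrne] at he
      have hh0 : r.head hrne = r[0]'(by omega) := by
        simp [List.head_eq_getElem]
      simp only [Option.mem_def, Option.some_inj] at he
      subst he
      rw [hh0, hrget 0 (by omega)]
      simp [List.get_eq_getElem]
    have hlast : ∀ e ∈ r.getLast?, ω e = α (q.get ⟨i, hilen⟩) := by
      intro e he
      rw [List.getLast?_eq_getLast (l := r) hrne] at he
      simp only [Option.mem_def, Option.some_inj] at he
      subst he
      have hgl : r.getLast hrne = r[r.length - 1]'(by omega) := List.getLast_eq_getElem hrne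
      rw [hgl, hrget (r.length - 1) (by omega)]
      have hchain := List.isChain_iff_getElem.mp hch ((j : ℕ) - 1) (by omega)
      have hω : ω (q[(i : ℕ) + (r.length - 1)]'(by omega)) = α (q.get ⟨j, hjlen⟩) := by
        simp only [List.get_eq_getElem] at hchain ⊢
        convert hchain using 3
        all_goals omega
      rw [hω, ← hgets]
    obtain ⟨e, her, heu⟩ := hcirc (α (q.get ⟨i, hilen⟩)) r ⟨hrne, hrch, hhead, hlast⟩
    exact hq e (hinf.subset her) heu
  calc q.length = (q.map α).length := (List.length_map _).symm
    _ ≤ Fintype.card V := hnd.length_le_card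

lemma decomp {p q : List E} (h1 : ¬ p <+: q) (h2 : ¬ q <+: p) :
    ∃ (s : List E) (e f : E) (a b : List E),
      e ≠ f ∧ p = s ++ e :: a ∧ q = s ++ f :: b := by
  induction p generalizing q with
  | nil => exact absurd (List.nil_prefix) h1
  | cons x p' ih =>
    cases q with
    | nil => exact absurd (List.nil_prefix) h2
    | cons y q' =>
      by_cases hxy : x = y
      · subst hxy
        have h1' : ¬ p' <+: q' := fun h => h1 (List.cons_prefix_iff.mpr ⟨q', rfl, h⟩)
        have h2' : ¬ q' <+: p' := fun h => h2 (List.cons_prefix_iff.mpr ⟨p', rfl, h⟩)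
        obtain ⟨s, e, f, a, b, hef, hp, hq⟩ := ih h1' h2'
        exact ⟨x :: s, e, f, a, b, hef, by simp [hp], by simp [hq]⟩
      · exact ⟨[], x, y, p', q', hxy, rfl, rfl⟩

lemma reach (u : V)
    (hd2 : ∀ v, 2 ≤ Nat.card {e : E // α e = v})
    (hFeq : ∀ v, F v = ⋃ e ∈ {e : E | α e = v}, (fun t => ρ e * t + c e) '' F (ω e)) :
    ∀ (n : ℕ) (v : V), v ≠ u →
    (∀ q : List E, q.Chain' (fun e f => ω e = α f) → (∀ e ∈ q, α e ≠ u) →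
      (∀ e ∈ q.head?, α e = v) → q.length ≤ n) →
    ∀ x ∈ F v, ∃ q : List E, q ≠ [] ∧ q.Chain' (fun e f => ω e = α f) ∧
      (∀ e ∈ q.head?, α e = v) ∧ (∀ e ∈ q.getLast?, ω e = u) ∧
      (∀ e ∈ q, α e ≠ u) ∧ x ∈ Sl ρ c q '' (F u) := by
  intro n
  induction n with
  | zero =>
    intro v hvu hbound x hx
    exfalso
    have hpos : 0 < Nat.card {e : E // α e = v} := by have := hd2 v; omega
    have hne : Nonempty {e : E // α e = v} := (Nat.card_pos_iff.mp hpos).1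
    obtain ⟨e, he⟩ := hne
    have := hbound [e] (List.isChain_singleton e)
      (by intro f hf; simp at hf; subst hf; rw [he]; exact hvu)
      (by intro f hf; simp at hf; subst hf; exact he)
    simp at this
  | succ n ih =>
    intro v hvu hbound x hx
    rw [hFeq v] at hx
    simp only [Set.mem_iUnion, Set.mem_setOf_eq, exists_prop] at hx
    obtain ⟨e, he, y, hy, rfl⟩ := hx
    by_cases hwe : ω e = u
    · refine ⟨[e], List.cons_ne_nil _ _, List.isChain_singleton e, ?_, ?_, ?_, ?_⟩
      · intro f hf; simp at hf; subst hf; exact he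
      · intro f hf; simp at hf; subst hf; exact hwe
      · intro f hf; simp at hf; subst hf; rw [he]; exact hvu
      · exact ⟨y, hwe ▸ hy, rfl⟩
    · have hbound' : ∀ q' : List E, q'.Chain' (fun e f => ω e = α f) →
          (∀ f ∈ q', α f ≠ u) → (∀ f ∈ q'.head?, α f = ω e) → q'.length ≤ n := by
        intro q' h1 h2 h3
        have hc : (e :: q').Chain' (fun e f => ω e = α f) :=
          List.isChain_cons.mpr ⟨fun b hb => (h3 b hb).symm, h1⟩
        have ha : ∀ f ∈ e :: q', α f ≠ u := by
          intro f hf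
          rcases List.mem_cons.mp hf with rfl | hf
          · rw [he]; exact hvu
          · exact h2 f hf
        have hh : ∀ f ∈ (e :: q').head?, α f = v := by
          intro f hf; simp at hf; subst hf; exact he
        have := hbound (e :: q') hc ha hh
        simpa using this
      obtain ⟨q, hqne, hqch, hqh, hql, hqa, z, hz, hzeq⟩ := ih (ω e) hwe hbound' y hy
      refine ⟨e :: q, List.cons_ne_nil _ _, ?_, ?_, ?_, ?_, ⟨z, hz, ?_⟩⟩
      · exact List.isChain_cons.mpr ⟨fun b hb => (hqh b hb).symm, hqch⟩
      · intro f hf; simp at hf; subst hf; exact he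
      · intro f hf
        cases q with
        | nil => exact absurd rfl hqne
        | cons g q' => rw [List.getLast?_cons_cons] at hf; exact hql f hf
      · intro f hf
        rcases List.mem_cons.mp hf with rfl | hf
        · rw [he]; exact hvu
        · exact hqa f hf
      · rw [Sl_cons, hzeq]

lemma prefix_free (u : V) {p q : List E}
    (hp : IsPathFromTo α ω p u u ∧ ∀ e ∈ p.tail, α e ≠ u)
    (hq : IsPathFromTo α ω q u u ∧ ∀ e ∈ q.tail, α e ≠ u)
    (hpre : p <+: q) : p = q := by
  obtain ⟨t, rfl⟩ := hpre
  cases t with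
  | nil => simp
  | cons f t' =>
    exfalso
    obtain ⟨⟨hpne, _, _, hplast⟩, _⟩ := hp
    obtain ⟨⟨_, hqch, _, _⟩, hqtail⟩ := hq
    have hf1 : α f = u := by
      have hj := (List.isChain_append.mp hqch).2.2
      have h1 := hj (p.getLast hpne) (by rw [List.getLast?_eq_getLast (l := p) hpne]; rfl)
        f (by simp)
      have h2 := hplast (p.getLast hpne) (by rw [List.getLast?_eq_getLast (l := p) hpne]; rfl)
      rw [← h1, h2]
    have hf2 : f ∈ (p ++ f :: t').tail := by
      cases p with
      | nil => exact absurd rfl hpne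
      | cons x p2 => simp
    exact hqtail f hf2 hf1

end SlAux

open SlAux in
theorem stmt16 {V E : Type} [Fintype V] [Fintype E]
    (α ω : E → V) (ρ c : E → ℝ) (F : V → Set ℝ)
    (hρ : ∀ e, |ρ e| < 1 ∧ ρ e ≠ 0)
    (hd2 : ∀ v, 2 ≤ Nat.card {e : E // α e = v})
    (hFc : ∀ v, IsCompact (F v) ∧ (F v).Nonempty)
    (hFeq : ∀ v, F v = ⋃ e ∈ {e : E | α e = v}, (fun t => ρ e * t + c e) '' F (ω e))
    -- strong connectivity
    (hconn : ∀ a b : V, ∃ p : List E, IsPathFromTo α ω p a b)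
    -- every directed circuit goes through the vertex u
    (u : V)
    (hcirc : ∀ (w : V) (p : List E), IsPathFromTo α ω p w w → ∃ e ∈ p, α e = u) :
    -- F_u is the attractor of some standard IFS
    (∃ (ι : Type) (_ : Fintype ι) (_ : Nonempty ι) (r s : ι → ℝ),
      (∀ i, |r i| < 1 ∧ r i ≠ 0) ∧
      (∀ i j, r i = r j → s i = s j → i = j) ∧
      F u = ⋃ i, (fun t => r i * t + s i) '' F u) ∧
    -- and if the GD-IFS satisfies the COSC, F_u is the attractor of a COSC standard IFS
    ((∃ U : V → Set ℝ,
        (∀ v, (U v).Nonempty ∧ IsOpen (U v) ∧ Bornology.IsBounded (U v) ∧ Convex ℝ (U v)) ∧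
        (∀ e, (fun t => ρ e * t + c e) '' U (ω e) ⊆ U (α e)) ∧
        (∀ e e', e ≠ e' → α e = α e' →
          Disjoint ((fun t => ρ e * t + c e) '' U (ω e))
            ((fun t => ρ e' * t + c e') '' U (ω e')))) →
      ∃ (ι : Type) (_ : Fintype ι) (_ : Nonempty ι) (r s : ι → ℝ),
        (∀ i, |r i| < 1 ∧ r i ≠ 0) ∧
        (∀ i j, r i = r j → s i = s j → i = j) ∧
        (F u = ⋃ i, (fun t => r i * t + s i) '' F u) ∧
        (∃ U : Set ℝ, U.Nonempty ∧ IsOpen U ∧ Bornology.IsBounded U ∧ Convex ℝ U ∧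
          (∀ i, (fun t => r i * t + s i) '' U ⊆ U) ∧
          (Pairwise fun i j =>
            Disjoint ((fun t => r i * t + s i) '' U) ((fun t => r j * t + s j) '' U)))) := by
  classical
  set Pset : Set (List E) := {p | IsPathFromTo α ω p u u ∧ ∀ e ∈ p.tail, α e ≠ u} with hPset
  -- each similarity maps F (ω e) into F (α e)
  have hGF : ∀ e, (fun t => ρ e * t + c e) '' F (ω e) ⊆ F (α e) := by
    intro e
    rw [hFeq (α e)]
    exact Set.subset_biUnion_of_mem
      (u := fun e' => (fun t => ρ e' * t + c e') '' F (ω e')) (show α e = α e from rfl)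
  -- Pset is finite
  have hPfin : Pset.Finite := by
    apply (List.finite_length_le E (Fintype.card V + 1)).subset
    rintro p ⟨⟨hpne, hpch, hph, hpl⟩, hptail⟩
    have htl : p.tail.length ≤ Fintype.card V :=
      avoid_length_le u hcirc p.tail hpch.tail hptail
    have hlt : p.tail.length = p.length - 1 := List.length_tail
    have hpos : 0 < p.length := List.length_pos_iff.mpr hpne
    simp only [Set.mem_setOf_eq]
    omega
  -- Pset is nonempty
  have hPne : Pset.Nonempty := by
    have key : ∀ (n : ℕ) (p : List E), p.length ≤ n → IsPathFromTo α ω p u u →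
        Pset.Nonempty := by
      intro n
      induction n with
      | zero =>
        intro p hl hp
        have := List.length_pos_iff.mpr hp.1
        omega
      | succ n ih =>
        intro p hl hp
        by_cases h : ∀ e ∈ p.tail, α e ≠ u
        · exact ⟨p, hp, h⟩
        · push_neg at h
          obtain ⟨e, het, heu⟩ := h
          obtain ⟨s, t, hst⟩ := List.append_of_mem het
          have hpne := hp.1
          have hpd : p = p.head hpne :: p.tail := (List.cons_head_tail hpne).symm
          have hq : p = (p.head hpne :: s) ++ e :: t := by
            rw [List.cons_append, ← hst]; exact hpd
          have hch : ((p.head hpne :: s) ++ e :: t).Chain' (fun e f => ω e = α f) :=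
            hq ▸ hp.2.1
          have hchsplit := List.isChain_append.mp hch
          refine ih (p.head hpne :: s) ?_ ⟨List.cons_ne_nil _ _, hchsplit.1, ?_, ?_⟩
          · have hlen : p.length = (p.head hpne :: s).length + (e :: t).length := by
              conv_lhs => rw [hq]
              rw [List.length_append]
            simp only [List.length_cons] at hlen ⊢
            omega
          · intro f hf
            simp only [List.head?_cons, Option.mem_def, Option.some_inj] at hf
            subst hf
            have := hp.2.2.1
            exact this _ (by rw [List.head?_eq_head hpne]; rfl)
          · intro f hf
            have := hchsplit.2.2 f hf e (by simp)
            rw [this, heu]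
    obtain ⟨p0, hp0⟩ := hconn u u
    exact key p0.length p0 le_rfl hp0
  -- main identity
  have hcover : F u ⊆ ⋃ p ∈ Pset, Sl ρ c p '' F u := by
    intro x hx
    rw [hFeq u] at hx
    simp only [Set.mem_iUnion, Set.mem_setOf_eq, exists_prop] at hx
    obtain ⟨e, he, y, hy, rfl⟩ := hx
    by_cases hwe : ω e = u
    · refine Set.mem_biUnion (show [e] ∈ Pset from ?_) ⟨y, hwe ▸ hy, rfl⟩
      refine ⟨⟨List.cons_ne_nil _ _, List.isChain_singleton e, ?_, ?_⟩, ?_⟩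
      · intro f hf; simp at hf; subst hf; exact he
      · intro f hf; simp at hf; subst hf; exact hwe
      · intro f hf; simp at hf
    · obtain ⟨q, hqne, hqch, hqh, hql, hqa, z, hz, hzeq⟩ :=
        reach u hd2 hFeq (Fintype.card V) (ω e) hwe
          (fun q' h1 h2 _ => avoid_length_le u hcirc q' h1 h2) y hy
      refine Set.mem_biUnion (show (e :: q) ∈ Pset from ?_)
        ⟨z, hz, by rw [Sl_cons, hzeq]⟩
      refine ⟨⟨List.cons_ne_nil _ _,
        List.isChain_cons.mpr ⟨fun b hb => (hqh b hb).symm, hqch⟩, ?_, ?_⟩, ?_⟩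
      · intro f hf; simp at hf; subst hf; exact he
      · intro f hf
        cases q with
        | nil => exact absurd rfl hqne
        | cons g q' => rw [List.getLast?_cons_cons] at hf; exact hql f hf
      · intro f hf
        exact hqa f hf
  have hmain : F u = ⋃ p ∈ Pset, Sl ρ c p '' F u := by
    refine le_antisymm hcover (Set.iUnion₂_subset ?_)
    rintro p ⟨⟨hpne, hpch, hph, hpl⟩, _⟩
    exact Sl_image_subset F hGF p hpne hpch hph hpl
  -- the index type
  set g : List E → ℝ × ℝ := fun p => ((p.map ρ).prod, Sl ρ c p 0) with hg
  set M : Set (ℝ × ℝ) := g '' Pset with hM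
  have hMfin : M.Finite := hPfin.image g
  haveI : Fintype ↥M := hMfin.fintype
  haveI : Nonempty ↥M := (hPne.image g).to_subtype
  have hSl_eq : ∀ p : List E, (fun t => (g p).1 * t + (g p).2) = Sl ρ c p := by
    intro p
    funext t
    rw [Sl_affine p t]
  have hcontr : ∀ i : ↥M, |(i : ℝ × ℝ).1| < 1 ∧ (i : ℝ × ℝ).1 ≠ 0 := by
    intro i
    obtain ⟨p, hp, hgp⟩ := i.2
    rw [← hgp]
    exact ⟨prod_abs_lt (fun e => (hρ e).1) p hp.1.1,
      prod_ne_zero (fun e => (hρ e).2) p⟩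
  have hinj : ∀ i j : ↥M, (i : ℝ × ℝ).1 = (j : ℝ × ℝ).1 →
      (i : ℝ × ℝ).2 = (j : ℝ × ℝ).2 → i = j :=
    fun i j h1 h2 => Subtype.ext (Prod.ext h1 h2)
  have hunion : F u = ⋃ i : ↥M, (fun t => (i : ℝ × ℝ).1 * t + (i : ℝ × ℝ).2) '' F u := by
    apply Set.Subset.antisymm
    · intro x hx
      rw [hmain] at hx
      simp only [Set.mem_iUnion, exists_prop] at hx
      obtain ⟨p, hp, hxp⟩ := hx
      exact Set.mem_iUnion.mpr ⟨⟨g p, Set.mem_image_of_mem g hp⟩, by rw [hSl_eq p]; exact hxp⟩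
    · intro x hx
      obtain ⟨i, hxi⟩ := Set.mem_iUnion.mp hx
      obtain ⟨p, hp, hgp⟩ := i.2
      have heqf := hSl_eq p
      rw [hgp] at heqf
      rw [hmain]
      exact Set.mem_biUnion hp (heqf ▸ hxi)
  constructor
  · exact ⟨↥M, inferInstance, inferInstance, fun i => (i : ℝ × ℝ).1, fun i => (i : ℝ × ℝ).2,
      hcontr, hinj, hunion⟩
  · rintro ⟨U, hU1, hU2, hU3⟩
    refine ⟨↥M, inferInstance, inferInstance, fun i => (i : ℝ × ℝ).1, fun i => (i : ℝ × ℝ).2,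
      hcontr, hinj, hunion, U u, (hU1 u).1, (hU1 u).2.1, (hU1 u).2.2.1, (hU1 u).2.2.2, ?_, ?_⟩
    · -- maps U u into itself
      intro i
      obtain ⟨p, hp, hgp⟩ := i.2
      have : (fun t => (i : ℝ × ℝ).1 * t + (i : ℝ × ℝ).2) = Sl ρ c p := by
        rw [← hgp]; exact hSl_eq p
      rw [this]
      exact Sl_image_subset U hU2 p hp.1.1 hp.1.2.1 hp.1.2.2.1 hp.1.2.2.2
    · -- pairwise disjoint
      -- a helper: images of tails land in the right set
      have htail : ∀ (s₀ : List E) (e₀ : E) (a₀ : List E), (s₀ ++ e₀ :: a₀) ∈ Pset →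
          Sl ρ c a₀ '' U u ⊆ U (ω e₀) := by
        intro s₀ e₀ a₀ hmem
        obtain ⟨⟨hne0, hch0, hh0, hl0⟩, _⟩ := hmem
        have hch1 : (e₀ :: a₀).Chain' (fun e f => ω e = α f) :=
          (List.isChain_append.mp hch0).2.1
        have hl1 : ∀ f ∈ (e₀ :: a₀).getLast?, ω f = u := by
          intro f hf
          exact hl0 f (by rwa [List.getLast?_append_of_ne_nil s₀ (List.cons_ne_nil _ _)])
        cases a₀ with
        | nil =>
          have hωu : ω e₀ = u := hl1 e₀ rfl
          intro x hx
          obtain ⟨y, hy, rfl⟩ := hx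
          show Sl ρ c [] y ∈ U (ω e₀)
          rw [hωu]
          exact hy
        | cons f₀ a₁ =>
          rw [List.Chain', List.isChain_cons_cons] at hch1
          refine Sl_image_subset U hU2 (f₀ :: a₁) (List.cons_ne_nil _ _) hch1.2 ?_ ?_
          · intro f hf; simp at hf; subst hf; exact hch1.1.symm
          · intro f hf
            exact hl1 f (by rwa [List.getLast?_cons_cons])
      intro i j hij
      obtain ⟨p, hp, hgp⟩ := i.2
      obtain ⟨p', hp', hgp'⟩ := j.2
      have hpp' : p ≠ p' := by
        intro h
        exact hij (Subtype.ext (by rw [← hgp, ← hgp', h]))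
      have hnp : ¬ p <+: p' := fun h => hpp' (prefix_free u hp hp' h)
      have hnp' : ¬ p' <+: p := fun h => hpp' (prefix_free u hp' hp h).symm
      obtain ⟨s₀, e, f, a, b, hef, hpe, hqe⟩ := decomp hnp hnp'
      have hαef : α e = α f := by
        cases s₀ with
        | nil =>
          simp only [List.nil_append] at hpe hqe
          have h1 : α e = u := by
            have := hp.1.2.2.1
            rw [hpe] at this
            exact this e rfl
          have h2 : α f = u := by
            have := hp'.1.2.2.1
            rw [hqe] at this
            exact this f rfl
          rw [h1, h2]
        | cons x s₁ =>
          have hc1 := (List.isChain_append.mp (hpe ▸ hp.1.2.1)).2.2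
          have hc2 := (List.isChain_append.mp (hqe ▸ hp'.1.2.1)).2.2
          have hlne : (x :: s₁) ≠ [] := List.cons_ne_nil _ _
          have h1 := hc1 ((x :: s₁).getLast hlne)
            (by rw [List.getLast?_eq_getLast hlne]; rfl) e rfl
          have h2 := hc2 ((x :: s₁).getLast hlne)
            (by rw [List.getLast?_eq_getLast hlne]; rfl) f rfl
          rw [← h1, ← h2]
      have h1 : Sl ρ c p '' U u ⊆ Sl ρ c s₀ '' ((fun t => ρ e * t + c e) '' U (ω e)) := by
        rw [hpe]
        rintro x ⟨y, hy, rfl⟩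
        rw [Sl_append s₀ (e :: a) y]
        exact ⟨Sl ρ c (e :: a) y, ⟨Sl ρ c a y, htail s₀ e a (hpe ▸ hp) ⟨y, hy, rfl⟩, rfl⟩, rfl⟩
      have h2 : Sl ρ c p' '' U u ⊆ Sl ρ c s₀ '' ((fun t => ρ f * t + c f) '' U (ω f)) := by
        rw [hqe]
        rintro x ⟨y, hy, rfl⟩
        rw [Sl_append s₀ (f :: b) y]
        exact ⟨Sl ρ c (f :: b) y, ⟨Sl ρ c b y, htail s₀ f b (hqe ▸ hp') ⟨y, hy, rfl⟩, rfl⟩, rfl⟩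
      have hdisj := hU3 e f hef hαef
      have hdisj2 : Disjoint (Sl ρ c s₀ '' ((fun t => ρ e * t + c e) '' U (ω e)))
          (Sl ρ c s₀ '' ((fun t => ρ f * t + c f) '' U (ω f))) :=
        (Set.disjoint_image_iff (Sl_injective (fun e => (hρ e).2) s₀)).mpr hdisj
      have him : (fun t => (i : ℝ × ℝ).1 * t + (i : ℝ × ℝ).2) = Sl ρ c p := by
        rw [← hgp]; exact hSl_eq p
      have him' : (fun t => (j : ℝ × ℝ).1 * t + (j : ℝ × ℝ).2) = Sl ρ c p' := by
        rw [← hgp']; exact hSl_eq p'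
      rw [him, him']
      exact hdisj2.mono h1 h2
end

section
/- Let (V,E) be a strongly connected digraph with d_w ≥ 2 for each w ∈ V, and let (F_w)_{w∈V} be the attractors of a GD-IFS of similarities on ℝ based on (V,E) satisfying the CSSC, with conv F_w = [0,1] for every w ∈ V. Suppose for some vertex u ∈ V: (1) there is a directed circuit that does not pass through u; (2) there is a δ > 0 such that every basic gap at every vertex has length δ (i.e. λ_w^{(k)} = δ for all w ∈ V and 1 ≤ k ≤ d_w − 1); (3) for each vertex v ≠ u, F_u ⊄ F_v and 1 − F_u ⊄ F_v, where 1 − F_u := {1 − t : t ∈ F_u}. Then F_u is not the attractor of any standard IFS on ℝ. -/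
open Set

namespace Stmt18Aux

variable {V E : Type}

/-- Path predicate allowing empty paths. -/
def PF (α ω : E → V) : V → List E → Prop
  | _, [] => True
  | v, e :: p => α e = v ∧ PF α ω (ω e) p

/-- End vertex of a path starting at `v`. -/
def endV (ω : E → V) : V → List E → V
  | v, [] => v
  | _, e :: p => endV ω (ω e) p

def Aρ (ρ : E → ℝ) (p : List E) : ℝ := (p.map ρ).prod

def Bc (ρ c : E → ℝ) : List E → ℝ
  | [] => 0
  | e :: p => ρ e * Bc ρ c p + c e

/-- The composed similarity along a path. -/
def Sm (ρ c : E → ℝ) (p : List E) (t : ℝ) : ℝ := Aρ ρ p * t + Bc ρ c p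

/-- The cylinder interval of a path. -/
def Cyl (ρ c : E → ℝ) (p : List E) : Set ℝ := Sm ρ c p '' Icc 0 1

variable {α ω : E → V} {ρ c : E → ℝ}

@[simp] lemma Aρ_nil : Aρ ρ ([] : List E) = 1 := rfl
@[simp] lemma Bc_nil : Bc ρ c ([] : List E) = 0 := rfl
@[simp] lemma Aρ_cons (e : E) (p : List E) : Aρ ρ (e :: p) = ρ e * Aρ ρ p := by
  simp [Aρ]
@[simp] lemma Bc_cons (e : E) (p : List E) : Bc ρ c (e :: p) = ρ e * Bc ρ c p + c e := rfl

@[simp] lemma Sm_nil (t : ℝ) : Sm ρ c [] t = t := by simp [Sm]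

lemma Sm_cons (e : E) (p : List E) (t : ℝ) :
    Sm ρ c (e :: p) t = ρ e * Sm ρ c p t + c e := by
  simp [Sm]; ring

lemma Aρ_append (p q : List E) : Aρ ρ (p ++ q) = Aρ ρ p * Aρ ρ q := by
  simp [Aρ]

lemma Bc_append (p q : List E) : Bc ρ c (p ++ q) = Aρ ρ p * Bc ρ c q + Bc ρ c p := by
  induction p with
  | nil => simp
  | cons e p ih => simp [ih]; ring

lemma Sm_append (p q : List E) (t : ℝ) :
    Sm ρ c (p ++ q) t = Sm ρ c p (Sm ρ c q t) := by
  simp [Sm, Aρ_append, Bc_append]; ring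

lemma endV_append (p q : List E) (v : V) :
    endV ω v (p ++ q) = endV ω (endV ω v p) q := by
  induction p generalizing v with
  | nil => simp [endV]
  | cons e p ih => simp [endV, ih]

lemma PF_append {p q : List E} {v : V} (hp : PF α ω v p) (hq : PF α ω (endV ω v p) q) :
    PF α ω v (p ++ q) := by
  induction p generalizing v with
  | nil => simpa [endV] using hq
  | cons e p ih => exact ⟨hp.1, ih hp.2 (by simpa [endV] using hq)⟩

lemma PF_prefix_split {s s' : List E} {v : V} (h : PF α ω v (s ++ s')) :
    PF α ω v s ∧ PF α ω (endV ω v s) s' := by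
  induction s generalizing v with
  | nil => exact ⟨trivial, by simpa [endV] using h⟩
  | cons e p ih =>
    obtain ⟨h1, h2⟩ := h
    obtain ⟨h3, h4⟩ := ih h2
    exact ⟨⟨h1, h3⟩, by simpa [endV] using h4⟩

lemma endV_eq_omega_getLast {p : List E} (hp : p ≠ []) (v : V) :
    endV ω v p = ω (p.getLast hp) := by
  induction p generalizing v with
  | nil => simp at hp
  | cons e p ih =>
    cases p with
    | nil => simp [endV]
    | cons f q => simpa [endV] using ih (by simp) (ω e)


lemma aff_Icc (a b x y : ℝ) (h : x ≤ y) :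
    (fun t => a * t + b) '' Icc x y
      = Icc (min (a * x + b) (a * y + b)) (max (a * x + b) (a * y + b)) := by
  rcases lt_trichotomy a 0 with ha | ha | ha
  · have hxy : a * y + b ≤ a * x + b := by nlinarith
    have : (fun t => a * t + b) = (fun t => (-a) * t + b) ∘ Neg.neg := by
      funext t; simp only [Function.comp_apply]; ring
    rw [this, Set.image_comp]
    rw [Set.image_neg_Icc]
    rw [show ((fun t => (-a) * t + b) '' Icc (-y) (-x)) = Icc ((-a) * (-y) + b) ((-a) * (-x) + b)
      from Set.image_affine_Icc' (by linarith) b (-y) (-x)]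
    rw [min_eq_right hxy, max_eq_left hxy]
    ring_nf
  · subst ha
    simp only [zero_mul, zero_add, min_self, max_self]
    rw [Set.Icc_self]
    ext t
    simp only [mem_image, mem_singleton_iff]
    constructor
    · rintro ⟨s, _, rfl⟩; rfl
    · rintro rfl; exact ⟨x, ⟨le_refl x, h⟩, rfl⟩
  · have hxy : a * x + b ≤ a * y + b := by nlinarith
    rw [Set.image_affine_Icc' ha b x y, min_eq_left hxy, max_eq_right hxy]

lemma aff_Ioo (a b x y : ℝ) (ha : a ≠ 0) (hxy0 : x ≤ y) :
    (fun t => a * t + b) '' Ioo x y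
      = Ioo (min (a * x + b) (a * y + b)) (max (a * x + b) (a * y + b)) := by
  rcases lt_or_gt_of_ne ha with ha' | ha'
  · have hxy : a * y + b ≤ a * x + b := by nlinarith
    have : (fun t => a * t + b) = (fun t => (-a) * t + b) ∘ Neg.neg := by
      funext t; simp only [Function.comp_apply]; ring
    rw [this, Set.image_comp, Set.image_neg_Ioo]
    rw [Set.image_affine_Ioo (by linarith) b (-y) (-x)]
    rw [min_eq_right hxy, max_eq_left hxy]
    ring_nf
  · have hxy : a * x + b ≤ a * y + b := by nlinarith
    rw [Set.image_affine_Ioo ha' b x y, min_eq_left hxy, max_eq_right hxy]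


lemma affine_pullback {K K' : Set ℝ} {r s : ℝ} (hr : r ≠ 0)
    (hmem : ∀ t, t ∈ K' → r * t + s ∈ K)
    {a b : ℝ} (hab : a < b)
    (haX : min s (r + s) ≤ a) (hbY : b ≤ max s (r + s))
    (hgap0 : Ioo a b ∩ K = ∅) :
    ∃ a' b', a' ∈ Icc (0:ℝ) 1 ∧ b' ∈ Icc (0:ℝ) 1 ∧ Ioo a' b' ∩ K' = ∅ ∧
      b - a = |r| * (b' - a') := by
  rcases lt_or_gt_of_ne hr with hneg | hpos
  · have hmin : min s (r + s) = r + s := min_eq_right (by linarith)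
    have hmax : max s (r + s) = s := max_eq_left (by linarith)
    rw [hmin] at haX; rw [hmax] at hbY
    refine ⟨(b - s) / r, (a - s) / r, ⟨?_, ?_⟩, ⟨?_, ?_⟩, ?_, ?_⟩
    · apply div_nonneg_of_nonpos (by linarith) hneg.le
    · rw [div_le_one_of_neg hneg]; linarith
    · apply div_nonneg_of_nonpos (by linarith) hneg.le
    · rw [div_le_one_of_neg hneg]; linarith
    · ext t
      simp only [mem_inter_iff, mem_Ioo, mem_empty_iff_false, iff_false, not_and, and_imp]
      intro h1 h2 htF
      have hz : r * t + s ∈ Ioo a b ∩ K := by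
        refine ⟨⟨?_, ?_⟩, hmem t htF⟩
        · have := (lt_div_iff_of_neg hneg).mp h2
          linarith
        · have := (div_lt_iff_of_neg hneg).mp h1
          linarith
      rw [hgap0] at hz; exact hz
    · rw [abs_of_neg hneg]
      field_simp
      ring
  · have hmin : min s (r + s) = s := min_eq_left (by linarith)
    have hmax : max s (r + s) = r + s := max_eq_right (by linarith)
    rw [hmin] at haX; rw [hmax] at hbY
    refine ⟨(a - s) / r, (b - s) / r, ⟨?_, ?_⟩, ⟨?_, ?_⟩, ?_, ?_⟩
    · apply div_nonneg (by linarith) hpos.le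
    · rw [div_le_one hpos]; linarith
    · apply div_nonneg (by linarith) hpos.le
    · rw [div_le_one hpos]; linarith
    · ext t
      simp only [mem_inter_iff, mem_Ioo, mem_empty_iff_false, iff_false, not_and, and_imp]
      intro h1 h2 htF
      have hz : r * t + s ∈ Ioo a b ∩ K := by
        refine ⟨⟨?_, ?_⟩, hmem t htF⟩
        · have := (div_lt_iff₀ hpos).mp h1
          linarith
        · have := (lt_div_iff₀ hpos).mp h2
          linarith
      rw [hgap0] at hz; exact hz
    · rw [abs_of_pos hpos]
      field_simp
      ring


structure GD (V E : Type) where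
  α : E → V
  ω : E → V
  ρ : E → ℝ
  c : E → ℝ
  F : V → Set ℝ
  en : V → ℕ → E
  d : V → ℕ
  δ : ℝ
  hδ : 0 < δ
  hρ : ∀ e, |ρ e| < 1 ∧ ρ e ≠ 0
  hFc : ∀ v, IsCompact (F v) ∧ (F v).Nonempty
  hFeq : ∀ v, F v = ⋃ e ∈ {e : E | α e = v}, (fun t => ρ e * t + c e) '' F (ω e)
  hCSSC : ∀ e e', e ≠ e' → α e = α e' →
      Disjoint ((fun t => ρ e * t + c e) '' convexHull ℝ (F (ω e)))
        ((fun t => ρ e' * t + c e') '' convexHull ℝ (F (ω e')))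
  hconv : ∀ w, convexHull ℝ (F w) = Set.Icc 0 1
  hen : ∀ v, Set.BijOn (en v) (Set.Iio (d v)) {e : E | α e = v}
  hd2 : ∀ v, 2 ≤ d v
  horder : ∀ v j k, j < k → k < d v →
      sSup ((fun t => ρ (en v j) * t + c (en v j)) '' convexHull ℝ (F (ω (en v j)))) ≤
      sInf ((fun t => ρ (en v k) * t + c (en v k)) '' convexHull ℝ (F (ω (en v k))))
  hgap : ∀ v k, k + 1 < d v →
      sInf ((fun t => ρ (en v (k+1)) * t + c (en v (k+1))) ''
        convexHull ℝ (F (ω (en v (k+1))))) -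
      sSup ((fun t => ρ (en v k) * t + c (en v k)) '' convexHull ℝ (F (ω (en v k)))) = δ

namespace GD

variable {V E : Type} (G : GD V E)

/-- left endpoint of the `k`-th child hull at `v` -/
def X (v : V) (k : ℕ) : ℝ := min (G.c (G.en v k)) (G.ρ (G.en v k) + G.c (G.en v k))
/-- right endpoint -/
def Y (v : V) (k : ℕ) : ℝ := max (G.c (G.en v k)) (G.ρ (G.en v k) + G.c (G.en v k))

lemma FsubIcc (v : V) : G.F v ⊆ Icc 0 1 := by
  rw [← G.hconv v]; exact subset_convexHull ℝ _

lemma mem0F (v : V) : (0 : ℝ) ∈ G.F v ∧ (1 : ℝ) ∈ G.F v := by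
  obtain ⟨hc, hne⟩ := G.hFc v
  have hbdd : BddBelow (G.F v) := hc.bddBelow
  have hbdd' : BddAbove (G.F v) := hc.bddAbove
  have hm : sInf (G.F v) ∈ G.F v := hc.sInf_mem hne
  have hM : sSup (G.F v) ∈ G.F v := hc.sSup_mem hne
  have hsub : G.F v ⊆ Icc (sInf (G.F v)) (sSup (G.F v)) := fun x hx =>
    ⟨csInf_le hbdd hx, le_csSup hbdd' hx⟩
  have h1 : Icc (0:ℝ) 1 ⊆ Icc (sInf (G.F v)) (sSup (G.F v)) := by
    rw [← G.hconv v]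
    exact convexHull_min hsub (convex_Icc _ _)
  have h0 : (0:ℝ) ∈ Icc (sInf (G.F v)) (sSup (G.F v)) := h1 ⟨le_refl 0, by norm_num⟩
  have h1' : (1:ℝ) ∈ Icc (sInf (G.F v)) (sSup (G.F v)) := h1 ⟨by norm_num, le_refl 1⟩
  have hmem : G.F v ⊆ Icc 0 1 := G.FsubIcc v
  have : sInf (G.F v) = 0 := le_antisymm h0.1 (hmem hm).1
  have h2 : sSup (G.F v) = 1 := le_antisymm (hmem hM).2 h1'.2
  constructor
  · rwa [← this]
  · rwa [← h2]

lemma hull_img (e : E) :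
    (fun t => G.ρ e * t + G.c e) '' convexHull ℝ (G.F (G.ω e))
      = Icc (min (G.c e) (G.ρ e + G.c e)) (max (G.c e) (G.ρ e + G.c e)) := by
  rw [G.hconv (G.ω e), aff_Icc _ _ _ _ (by norm_num : (0:ℝ) ≤ 1)]
  norm_num

lemma edge_img_subset {e : E} {v : V} (he : G.α e = v) :
    (fun t => G.ρ e * t + G.c e) '' G.F (G.ω e) ⊆ G.F v := by
  rw [G.hFeq v]
  exact subset_biUnion_of_mem (u := fun e => (fun t => G.ρ e * t + G.c e) '' G.F (G.ω e)) he

lemma XY_memF {v : V} {k : ℕ} (hk : k < G.d v) : G.X v k ∈ G.F v ∧ G.Y v k ∈ G.F v := by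
  have he : G.α (G.en v k) = v := (G.hen v).mapsTo hk
  set e := G.en v k
  have h0 : G.c e ∈ G.F v := by
    have := G.edge_img_subset he (Set.mem_image_of_mem _ (G.mem0F (G.ω e)).1)
    simpa using this
  have h1 : G.ρ e + G.c e ∈ G.F v := by
    have := G.edge_img_subset he (Set.mem_image_of_mem _ (G.mem0F (G.ω e)).2)
    simpa [mul_one] using this
  constructor
  · rcases min_cases (G.c e) (G.ρ e + G.c e) with ⟨h, _⟩ | ⟨h, _⟩ <;>
      rw [X, show G.en v k = e from rfl, h] <;> assumption
  · rcases max_cases (G.c e) (G.ρ e + G.c e) with ⟨h, _⟩ | ⟨h, _⟩ <;>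
      rw [Y, show G.en v k = e from rfl, h] <;> assumption

lemma X_le_Y (v : V) (k : ℕ) : G.X v k ≤ G.Y v k := min_le_max

lemma X_nonneg {v : V} {k : ℕ} (hk : k < G.d v) : 0 ≤ G.X v k :=
  ((G.FsubIcc v) (G.XY_memF hk).1).1

lemma Y_le_one {v : V} {k : ℕ} (hk : k < G.d v) : G.Y v k ≤ 1 :=
  ((G.FsubIcc v) (G.XY_memF hk).2).2

lemma Y_sub_X {v : V} (k : ℕ) : G.Y v k - G.X v k = |G.ρ (G.en v k)| := by
  rw [Y, X, max_sub_min_eq_abs]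
  rw [abs_sub_comm]
  simp

lemma order' {v : V} {j k : ℕ} (hjk : j < k) (hk : k < G.d v) : G.Y v j ≤ G.X v k := by
  have := G.horder v j k hjk hk
  rwa [G.hull_img, G.hull_img, csSup_Icc min_le_max, csInf_Icc min_le_max] at this

lemma gap' {v : V} {k : ℕ} (hk : k + 1 < G.d v) : G.X v (k+1) = G.Y v k + G.δ := by
  have := G.hgap v k hk
  rw [G.hull_img, G.hull_img, csSup_Icc min_le_max, csInf_Icc min_le_max] at this
  simp only [X, Y]
  linarith

lemma decompose {v : V} {z : ℝ} (hz : z ∈ G.F v) :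
    ∃ k < G.d v, z ∈ Icc (G.X v k) (G.Y v k) := by
  rw [G.hFeq v] at hz
  simp only [mem_iUnion, mem_setOf_eq, exists_prop] at hz
  obtain ⟨e, he, hze⟩ := hz
  obtain ⟨k, hk, rfl⟩ := (G.hen v).surjOn he
  refine ⟨k, hk, ?_⟩
  have : z ∈ (fun t => G.ρ (G.en v k) * t + G.c (G.en v k)) ''
      convexHull ℝ (G.F (G.ω (G.en v k))) :=
    image_mono (subset_convexHull ℝ _) hze
  rwa [G.hull_img] at this

lemma X_zero (v : V) : G.X v 0 = 0 := by
  obtain ⟨k, hk, hz⟩ := G.decompose (G.mem0F v).1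
  have hX0 : G.X v k = 0 := le_antisymm hz.1 (G.X_nonneg hk)
  rcases Nat.eq_zero_or_pos k with rfl | hkpos
  · exact hX0
  · exfalso
    obtain ⟨k', rfl⟩ : ∃ k', k = k' + 1 := ⟨k - 1, by omega⟩
    have hg := G.gap' (v := v) (k := k') (by omega)
    have hXk' := G.X_nonneg (v := v) (k := k') (by omega)
    have hXY := G.X_le_Y v k'
    have := G.hδ
    linarith

lemma Y_last (v : V) : G.Y v (G.d v - 1) = 1 := by
  obtain ⟨k, hk, hz⟩ := G.decompose (G.mem0F v).2
  have hY1 : G.Y v k = 1 := le_antisymm (G.Y_le_one hk) hz.2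
  rcases Nat.lt_or_ge k (G.d v - 1) with hlt | hge
  · exfalso
    have hk1 : k + 1 < G.d v := by omega
    have := G.gap' hk1
    have hX : G.X v (k+1) ≤ 1 := le_trans (G.X_le_Y v (k+1)) (G.Y_le_one (by omega))
    have := G.hδ
    linarith [G.gap' hk1]
  · have : k = G.d v - 1 := by omega
    rwa [← this]

lemma slice {v : V} {k : ℕ} (hk : k < G.d v) :
    G.F v ∩ Icc (G.X v k) (G.Y v k)
      = (fun t => G.ρ (G.en v k) * t + G.c (G.en v k)) '' G.F (G.ω (G.en v k)) := by
  apply Subset.antisymm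
  · rintro z ⟨hzF, hzI⟩
    rw [G.hFeq v] at hzF
    simp only [mem_iUnion, mem_setOf_eq, exists_prop] at hzF
    obtain ⟨e, he, hze⟩ := hzF
    obtain ⟨j, hj, rfl⟩ := (G.hen v).surjOn he
    rcases eq_or_ne j k with rfl | hjk
    · exact hze
    · exfalso
      have hne : G.en v j ≠ G.en v k := fun h => hjk ((G.hen v).injOn hj hk h)
      have hαα : G.α (G.en v j) = G.α (G.en v k) := by
        rw [show G.α (G.en v j) = v from (G.hen v).mapsTo hj,
          show G.α (G.en v k) = v from (G.hen v).mapsTo hk]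
      have hdisj := G.hCSSC _ _ hne hαα
      have hz1 : z ∈ (fun t => G.ρ (G.en v j) * t + G.c (G.en v j)) ''
          convexHull ℝ (G.F (G.ω (G.en v j))) :=
        image_mono (subset_convexHull ℝ _) hze
      have hz2 : z ∈ (fun t => G.ρ (G.en v k) * t + G.c (G.en v k)) ''
          convexHull ℝ (G.F (G.ω (G.en v k))) := by
        rw [G.hull_img]; exact hzI
      exact Set.disjoint_left.mp hdisj hz1 hz2
  · intro z hz
    refine ⟨G.edge_img_subset ((G.hen v).mapsTo hk) hz, ?_⟩
    have : z ∈ (fun t => G.ρ (G.en v k) * t + G.c (G.en v k)) ''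
        convexHull ℝ (G.F (G.ω (G.en v k))) :=
      image_mono (subset_convexHull ℝ _) hz
    rwa [G.hull_img] at this

lemma vgap {v : V} {k : ℕ} (hk : k + 1 < G.d v) :
    Ioo (G.Y v k) (G.X v (k+1)) ∩ G.F v = ∅ := by
  ext z
  simp only [mem_inter_iff, mem_Ioo, mem_empty_iff_false, iff_false, not_and, and_imp]
  intro h1 h2 hzF
  obtain ⟨j, hj, hzj⟩ := G.decompose hzF
  rcases Nat.lt_or_ge j (k+1) with hjk | hjk
  · have : z ≤ G.Y v k := by
      rcases Nat.lt_or_ge j k with h | h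
      · exact le_trans hzj.2 (le_trans (G.order' h (by omega)) (G.X_le_Y v k))
      · have : j = k := by omega
        subst this; exact hzj.2
    linarith
  · have : G.X v (k+1) ≤ z := by
      rcases Nat.lt_or_ge (k+1) j with h | h
      · exact le_trans (le_trans (G.X_le_Y v (k+1)) (G.order' h hj)) hzj.1
      · have : j = k + 1 := by omega
        subst this; exact hzj.1
    linarith

noncomputable def rmax [Fintype E] [Nonempty E] (G : GD V E) : ℝ :=
  Finset.univ.sup' Finset.univ_nonempty (fun e => |G.ρ e|)

lemma rmax_lt_one [Fintype E] [Nonempty E] : G.rmax < 1 := by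
  rw [rmax, Finset.sup'_lt_iff]
  intro e _
  exact (G.hρ e).1

lemma le_rmax [Fintype E] [Nonempty E] (e : E) : |G.ρ e| ≤ G.rmax := by
  rw [rmax]; exact Finset.le_sup' (fun e => |G.ρ e|) (Finset.mem_univ e)

lemma rmax_nonneg [Fintype E] [Nonempty E] : 0 ≤ G.rmax :=
  le_trans (abs_nonneg _) (G.le_rmax (Classical.arbitrary E))

lemma pullback_Ioo {e : E} {v : V} (heα : G.α e = v) {a b : ℝ} (hab : a < b)
    (haX : min (G.c e) (G.ρ e + G.c e) ≤ a) (hbY : b ≤ max (G.c e) (G.ρ e + G.c e))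
    (hgap0 : Ioo a b ∩ G.F v = ∅) :
    ∃ a' b', a' ∈ Icc (0:ℝ) 1 ∧ b' ∈ Icc (0:ℝ) 1 ∧ Ioo a' b' ∩ G.F (G.ω e) = ∅ ∧
      b - a = |G.ρ e| * (b' - a') := by
  exact affine_pullback (G.hρ e).2
    (fun t ht => G.edge_img_subset heα (mem_image_of_mem _ ht)) hab haX hbY hgap0

lemma gap_aux [Fintype E] [Nonempty E] (n : ℕ) :
    ∀ (v : V) (a b : ℝ), a ∈ Icc (0:ℝ) 1 → b ∈ Icc (0:ℝ) 1 → Ioo a b ∩ G.F v = ∅ →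
      b - a ≤ max G.δ (G.rmax ^ n) := by
  induction n with
  | zero =>
    intro v a b ha hb _
    calc b - a ≤ 1 := by linarith [ha.1, hb.2]
    _ ≤ max G.δ (G.rmax ^ 0) := by rw [pow_zero]; exact le_max_right _ _
  | succ n ih =>
    intro v a b ha hb hgap0
    rcases le_or_gt b a with hab | hab
    · have : (0:ℝ) ≤ max G.δ (G.rmax ^ (n+1)) := le_trans G.hδ.le (le_max_left _ _)
      linarith
    classical
    set k₀ := Nat.findGreatest (fun k => G.X v k ≤ a) (G.d v - 1) with hk₀def
    have hd2 := G.hd2 v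
    have hspec : G.X v k₀ ≤ a := by
      rw [hk₀def]
      exact Nat.findGreatest_spec (P := fun k => G.X v k ≤ a) (m := 0) (Nat.zero_le _)
        (by show G.X v 0 ≤ a; rw [G.X_zero]; exact ha.1)
    have hk₀le : k₀ ≤ G.d v - 1 := by
      rw [hk₀def]; exact Nat.findGreatest_le _
    have hk₀lt : k₀ < G.d v := by omega
    rcases le_or_gt b (G.Y v k₀) with hbY | hbY
    · -- a, b inside child k₀; recurse
      have heα : G.α (G.en v k₀) = v := (G.hen v).mapsTo hk₀lt
      obtain ⟨a', b', ha', hb', hempty, hlen⟩ :=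
        G.pullback_Ioo heα hab hspec hbY hgap0
      have hrec := ih (G.ω (G.en v k₀)) a' b' ha' hb' hempty
      have hρr : |G.ρ (G.en v k₀)| ≤ G.rmax := G.le_rmax _
      have hba' : 0 ≤ b' - a' := by
        by_contra h
        push_neg at h
        have h1 : |G.ρ (G.en v k₀)| * (b' - a') ≤ 0 :=
          mul_nonpos_of_nonneg_of_nonpos (abs_nonneg _) (by linarith)
        linarith [hlen ▸ h1]
      have h1 : b - a ≤ G.rmax * max G.δ (G.rmax ^ n) := by
        rw [hlen]
        exact mul_le_mul hρr hrec hba' G.rmax_nonneg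
      have hr0 := G.rmax_nonneg
      have hr1 := G.rmax_lt_one
      rcases le_total G.δ (G.rmax ^ n) with h | h
      · rw [max_eq_right h] at h1
        have : G.rmax * G.rmax ^ n = G.rmax ^ (n+1) := by ring
        rw [this] at h1
        exact le_trans h1 (le_max_right _ _)
      · rw [max_eq_left h] at h1
        have : G.rmax * G.δ ≤ G.δ := by nlinarith [G.hδ]
        exact le_trans (le_trans h1 this) (le_max_left _ _)
    · -- b beyond child k₀
      have hYa : G.Y v k₀ ≤ a := by
        by_contra h
        push_neg at h
        have : G.Y v k₀ ∈ Ioo a b ∩ G.F v := ⟨⟨h, hbY⟩, (G.XY_memF hk₀lt).2⟩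
        rw [hgap0] at this
        exact this
      rcases Nat.lt_or_ge k₀ (G.d v - 1) with hlt | hge
      · have hk1 : k₀ + 1 < G.d v := by omega
        have hmax : ¬ G.X v (k₀ + 1) ≤ a :=
          Nat.findGreatest_is_greatest (P := fun k => G.X v k ≤ a) (n := G.d v - 1)
            (by rw [← hk₀def]; omega) (by omega)
        push_neg at hmax
        have hXb : b ≤ G.X v (k₀ + 1) := by
          by_contra h
          push_neg at h
          have : G.X v (k₀+1) ∈ Ioo a b ∩ G.F v := ⟨⟨hmax, h⟩, (G.XY_memF hk1).1⟩
          rw [hgap0] at this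
          exact this
        have := G.gap' hk1
        have : b - a ≤ G.δ := by linarith
        exact le_trans this (le_max_left _ _)
      · have hk₀eq : k₀ = G.d v - 1 := by omega
        have h1 : G.Y v k₀ = 1 := by rw [hk₀eq, G.Y_last]
        have : b ≤ a := le_trans (le_trans hb.2 h1.ge) hYa
        linarith

lemma gap_le [Fintype E] [Nonempty E] {v : V} {a b : ℝ}
    (ha : a ∈ Icc (0:ℝ) 1) (hb : b ∈ Icc (0:ℝ) 1) (h : Ioo a b ∩ G.F v = ∅) :
    b - a ≤ G.δ := by
  by_contra hc
  push_neg at hc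
  have hall : ∀ n, b - a ≤ G.rmax ^ n := by
    intro n
    have := G.gap_aux n v a b ha hb h
    rcases max_cases G.δ (G.rmax ^ n) with ⟨hm, _⟩ | ⟨hm, _⟩
    · rw [hm] at this; linarith
    · rwa [hm] at this
  have htend : Filter.Tendsto (fun n => G.rmax ^ n) Filter.atTop (nhds 0) :=
    tendsto_pow_atTop_nhds_zero_of_lt_one G.rmax_nonneg G.rmax_lt_one
  have : b - a ≤ 0 := ge_of_tendsto' htend hall
  linarith [G.hδ]

lemma endpoints_memF {e : E} {v : V} (he : G.α e = v) :
    G.c e ∈ G.F v ∧ G.ρ e + G.c e ∈ G.F v := by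
  constructor
  · have := G.edge_img_subset he (Set.mem_image_of_mem _ (G.mem0F (G.ω e)).1)
    simpa using this
  · have := G.edge_img_subset he (Set.mem_image_of_mem _ (G.mem0F (G.ω e)).2)
    simpa [mul_one] using this

lemma hull_img01 (e : E) :
    (fun t => G.ρ e * t + G.c e) '' Icc 0 1
      = Icc (min (G.c e) (G.ρ e + G.c e)) (max (G.c e) (G.ρ e + G.c e)) := by
  rw [aff_Icc _ _ _ _ (by norm_num : (0:ℝ) ≤ 1)]
  norm_num

lemma edge_img01_subset {e : E} {v : V} (he : G.α e = v) :
    (fun t => G.ρ e * t + G.c e) '' Icc 0 1 ⊆ Icc 0 1 := by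
  rw [G.hull_img01 e]
  obtain ⟨h0, h1⟩ := G.endpoints_memF he
  have h0' := G.FsubIcc v h0
  have h1' := G.FsubIcc v h1
  apply Icc_subset_Icc
  · exact le_min h0'.1 h1'.1
  · exact max_le h0'.2 h1'.2

lemma edge_inj (e : E) : Function.Injective (fun t => G.ρ e * t + G.c e) := by
  intro x y hxy
  simp only at hxy
  have : G.ρ e * x = G.ρ e * y := by linarith
  exact mul_left_cancel₀ (G.hρ e).2 this

lemma Cyl_cons (e : E) (p : List E) :
    Cyl G.ρ G.c (e :: p) = (fun t => G.ρ e * t + G.c e) '' Cyl G.ρ G.c p := by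
  have hf : Sm G.ρ G.c (e :: p) = fun t => G.ρ e * (Sm G.ρ G.c p t) + G.c e :=
    funext (Sm_cons e p)
  simp only [Cyl, Set.image_image]
  rw [hf]

lemma cyl_subset_Icc {v : V} {p : List E} (h : PF G.α G.ω v p) :
    Cyl G.ρ G.c p ⊆ Icc 0 1 := by
  induction p generalizing v with
  | nil =>
    intro z hz
    obtain ⟨t, ht, rfl⟩ := hz
    simpa using ht
  | cons e p ih =>
    rw [G.Cyl_cons]
    exact subset_trans (image_mono (ih h.2)) (G.edge_img01_subset h.1)

lemma Sm_image_F_subset {v : V} {p : List E} (h : PF G.α G.ω v p) :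
    Sm G.ρ G.c p '' G.F (endV G.ω v p) ⊆ G.F v := by
  induction p generalizing v with
  | nil =>
    intro z hz
    obtain ⟨t, ht, rfl⟩ := hz
    simpa [endV] using ht
  | cons e p ih =>
    have hf : Sm G.ρ G.c (e :: p) = fun t => G.ρ e * (Sm G.ρ G.c p t) + G.c e :=
      funext (Sm_cons e p)
    have him := Set.image_image (fun t => G.ρ e * t + G.c e) (Sm G.ρ G.c p)
      (G.F (endV G.ω v (e :: p)))
    rw [hf, ← him]
    refine subset_trans (image_mono ?_) (G.edge_img_subset h.1)
    exact ih h.2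

lemma Aρ_ne_zero (p : List E) : Aρ G.ρ p ≠ 0 := by
  induction p with
  | nil => simp
  | cons e p ih =>
    rw [Aρ_cons]
    exact mul_ne_zero (G.hρ e).2 ih

lemma Sm_injective (p : List E) : Function.Injective (Sm G.ρ G.c p) := by
  intro s t h
  simp only [Sm] at h
  have := G.Aρ_ne_zero p
  have : Aρ G.ρ p * s = Aρ G.ρ p * t := by linarith
  exact mul_left_cancel₀ (G.Aρ_ne_zero p) this

lemma abs_Aρ_le (p : List E) [Fintype E] [Nonempty E] :
    |Aρ G.ρ p| ≤ G.rmax ^ p.length := by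
  induction p with
  | nil => simp
  | cons e p ih =>
    rw [Aρ_cons, abs_mul, List.length_cons, pow_succ']
    exact mul_le_mul (G.le_rmax e) ih (abs_nonneg _) G.rmax_nonneg

lemma abs_Aρ_pos (p : List E) : 0 < |Aρ G.ρ p| := abs_pos.mpr (G.Aρ_ne_zero p)

lemma cyl_inter {v : V} {p : List E} (h : PF G.α G.ω v p) :
    G.F v ∩ Cyl G.ρ G.c p = Sm G.ρ G.c p '' G.F (endV G.ω v p) := by
  induction p generalizing v with
  | nil =>
    simp only [Cyl, endV]
    have : Sm G.ρ G.c ([] : List E) '' Icc 0 1 = Icc 0 1 := by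
      have hf : Sm G.ρ G.c ([] : List E) = id := funext (fun t => Sm_nil t)
      rw [hf, image_id]
    rw [this]
    have hf : Sm G.ρ G.c ([] : List E) '' G.F v = G.F v := by
      have hf : Sm G.ρ G.c ([] : List E) = id := funext (fun t => Sm_nil t)
      rw [hf, image_id]
    rw [hf]
    exact inter_eq_left.mpr (G.FsubIcc v)
  | cons e p ih =>
    apply Subset.antisymm
    · rintro z ⟨hzF, hzC⟩
      rw [G.Cyl_cons] at hzC
      obtain ⟨y', hy', rfl⟩ := hzC
      have hz' : (fun t => G.ρ e * t + G.c e) y' ∈ G.F v := hzF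
      rw [G.hFeq v] at hz'
      simp only [mem_iUnion, mem_setOf_eq, exists_prop] at hz'
      obtain ⟨e', he', hze'⟩ := hz'
      rcases eq_or_ne e' e with rfl | hne
      · obtain ⟨y, hy, hyy⟩ := hze'
        have : y = y' := G.edge_inj e' hyy
        subst this
        have hyC : y ∈ G.F (G.ω e') ∩ Cyl G.ρ G.c p := ⟨hy, hy'⟩
        rw [ih h.2] at hyC
        obtain ⟨t, ht, rfl⟩ := hyC
        refine ⟨t, ht, ?_⟩
        rw [Sm_cons]
      · exfalso
        have hαα : G.α e' = G.α e := by rw [he', h.1]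
        have hdisj := G.hCSSC e' e hne hαα
        have hz1 : (fun t => G.ρ e * t + G.c e) y' ∈
            (fun t => G.ρ e' * t + G.c e') '' convexHull ℝ (G.F (G.ω e')) :=
          image_mono (subset_convexHull ℝ _) hze'
        have hz2 : (fun t => G.ρ e * t + G.c e) y' ∈
            (fun t => G.ρ e * t + G.c e) '' convexHull ℝ (G.F (G.ω e)) := by
          rw [G.hconv (G.ω e)]
          exact mem_image_of_mem _ (G.cyl_subset_Icc h.2 hy')
        exact Set.disjoint_left.mp hdisj hz1 hz2
    · intro z hz
      refine ⟨G.Sm_image_F_subset h hz, ?_⟩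
      have : endV G.ω v (e :: p) = endV G.ω (G.ω e) p := rfl
      rw [this] at hz
      obtain ⟨t, ht, rfl⟩ := hz
      exact ⟨t, (G.FsubIcc _) ht, rfl⟩

lemma cyl_comparable {s t : List E} {v : V} (hs : PF G.α G.ω v s) (ht : PF G.α G.ω v t)
    (hne : (Cyl G.ρ G.c s ∩ Cyl G.ρ G.c t).Nonempty) : s <+: t ∨ t <+: s := by
  induction s generalizing t v with
  | nil => exact Or.inl (List.nil_prefix)
  | cons e s' ih =>
    cases t with
    | nil => exact Or.inr (List.nil_prefix)
    | cons f t' =>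
      obtain ⟨z, hz1, hz2⟩ := hne
      rcases eq_or_ne e f with rfl | hef
      · have hz1' : z ∈ (fun x => G.ρ e * x + G.c e) '' Cyl G.ρ G.c s' := by
          rwa [G.Cyl_cons] at hz1
        have hz2' : z ∈ (fun x => G.ρ e * x + G.c e) '' Cyl G.ρ G.c t' := by
          rwa [G.Cyl_cons] at hz2
        obtain ⟨y1, hy1, hye1⟩ := hz1'
        obtain ⟨y2, hy2, hye2⟩ := hz2'
        have : y1 = y2 := G.edge_inj e (by rw [hye1, hye2])
        subst this
        rcases ih hs.2 ht.2 ⟨y1, hy1, hy2⟩ with h | h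
        · exact Or.inl (List.cons_prefix_cons.mpr ⟨rfl, h⟩)
        · exact Or.inr (List.cons_prefix_cons.mpr ⟨rfl, h⟩)
      · exfalso
        have hαα : G.α e = G.α f := by rw [hs.1, ht.1]
        have hdisj := G.hCSSC e f hef hαα
        have hz1' : z ∈ (fun x => G.ρ e * x + G.c e) '' convexHull ℝ (G.F (G.ω e)) := by
          rw [G.hconv (G.ω e)]
          rw [G.Cyl_cons] at hz1
          exact image_mono (G.cyl_subset_Icc hs.2) hz1
        have hz2' : z ∈ (fun x => G.ρ f * x + G.c f) '' convexHull ℝ (G.F (G.ω f)) := by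
          rw [G.hconv (G.ω f)]
          rw [G.Cyl_cons] at hz2
          exact image_mono (G.cyl_subset_Icc ht.2) hz2
        exact Set.disjoint_left.mp hdisj hz1' hz2'

lemma Sm_single (e : E) (t : ℝ) : Sm G.ρ G.c [e] t = G.ρ e * t + G.c e := by
  simp [Sm, Aρ, Bc]

lemma Cyl_append (p q : List E) :
    Cyl G.ρ G.c (p ++ q) = Sm G.ρ G.c p '' Cyl G.ρ G.c q := by
  have hf : Sm G.ρ G.c (p ++ q) = fun t => Sm G.ρ G.c p (Sm G.ρ G.c q t) :=
    funext (Sm_append p q)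
  simp only [Cyl, Set.image_image]
  rw [hf]

lemma cyl_eq_Icc (p : List E) :
    Cyl G.ρ G.c p = Icc (min (Sm G.ρ G.c p 0) (Sm G.ρ G.c p 1))
      (max (Sm G.ρ G.c p 0) (Sm G.ρ G.c p 1)) := by
  rw [Cyl, show Sm G.ρ G.c p = fun t => Aρ G.ρ p * t + Bc G.ρ G.c p from rfl,
    aff_Icc _ _ _ _ (by norm_num : (0:ℝ) ≤ 1)]

lemma Sm_sub (p : List E) (x y : ℝ) :
    Sm G.ρ G.c p y - Sm G.ρ G.c p x = Aρ G.ρ p * (y - x) := by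
  simp only [Sm]; ring

/-- Key copy lemma: any affine self-map of `F u` is (up to reflection) a cylinder map
to a circuit through `u`. -/
lemma copy_lemma [Fintype E] [Nonempty E] {u : V}
    (hsub : ∀ v : V, v ≠ u → ¬ (G.F u ⊆ G.F v) ∧ ¬ ((fun t => 1 - t) '' G.F u ⊆ G.F v))
    {r s : ℝ} (hr1 : |r| < 1) (hr0 : r ≠ 0)
    (hmap : (fun t => r * t + s) '' G.F u ⊆ G.F u) :
    ∃ p : List E, p ≠ [] ∧ PF G.α G.ω u p ∧ endV G.ω u p = u ∧
      (fun t => r * t + s) '' G.F u ⊆ Cyl G.ρ G.c p := by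
  classical
  have hrpos : 0 < |r| := abs_pos.mpr hr0
  have hJ : (fun t => r * t + s) '' Icc 0 1 = Icc (min s (r + s)) (max s (r + s)) := by
    rw [aff_Icc _ _ _ _ (by norm_num : (0:ℝ) ≤ 1)]; norm_num
  have hsF : s ∈ G.F u := by
    have := hmap (mem_image_of_mem _ (G.mem0F u).1)
    simpa using this
  have hrsF : r + s ∈ G.F u := by
    have := hmap (mem_image_of_mem _ (G.mem0F u).2)
    simpa [mul_one] using this
  have hs01 := G.FsubIcc u hsF
  have hrs01 := G.FsubIcc u hrsF
  set J : Set ℝ := Icc (min s (r + s)) (max s (r + s)) with hJdef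
  have hJsub01 : J ⊆ Icc 0 1 :=
    Icc_subset_Icc (le_min hs01.1 hrs01.1) (max_le hs01.2 hrs01.2)
  -- the predicate: a cylinder of depth n containing J
  set P : ℕ → Prop := fun n => ∃ p : List E,
    PF G.α G.ω u p ∧ p.length = n ∧ J ⊆ Cyl G.ρ G.c p with hPdef
  have hP0 : P 0 := by
    refine ⟨[], trivial, rfl, ?_⟩
    have : Cyl G.ρ G.c ([] : List E) = Icc 0 1 := by
      rw [Cyl, show Sm G.ρ G.c ([] : List E) = id from funext (fun t => Sm_nil t), image_id]
    rw [this]; exact hJsub01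
  -- length bound for cylinders containing J
  have hlb : ∀ p : List E, J ⊆ Cyl G.ρ G.c p → |r| ≤ |Aρ G.ρ p| := by
    intro p hp
    rw [G.cyl_eq_Icc] at hp
    have hJne : min s (r + s) ≤ max s (r + s) := min_le_max
    have h2 := (Icc_subset_Icc_iff hJne).mp hp
    have e1 : max s (r + s) - min s (r + s) = |r| := by
      rw [max_sub_min_eq_abs]; simp [abs_sub_comm]
    have e2 : max (Sm G.ρ G.c p 0) (Sm G.ρ G.c p 1) -
        min (Sm G.ρ G.c p 0) (Sm G.ρ G.c p 1) = |Aρ G.ρ p| := by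
      rw [max_sub_min_eq_abs, abs_sub_comm, G.Sm_sub]
      simp
    linarith [h2.1, h2.2]
  obtain ⟨N, hN⟩ : ∃ N, G.rmax ^ N < |r| := by
    have htend : Filter.Tendsto (fun n => G.rmax ^ n) Filter.atTop (nhds 0) :=
      tendsto_pow_atTop_nhds_zero_of_lt_one G.rmax_nonneg G.rmax_lt_one
    have := (htend.eventually (eventually_lt_nhds hrpos)).exists
    simpa using this
  have hbound : ∀ n, P n → n < N := by
    rintro n ⟨p, _, hlen, hpJ⟩
    by_contra h
    push_neg at h
    have h1 : |Aρ G.ρ p| ≤ G.rmax ^ n := hlen ▸ G.abs_Aρ_le p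
    have h2 : G.rmax ^ n ≤ G.rmax ^ N :=
      pow_le_pow_of_le_one G.rmax_nonneg G.rmax_lt_one.le h
    linarith [hlb p hpJ]
  set n₀ := Nat.findGreatest P N with hn₀def
  have hPn₀ : P n₀ := by
    rw [hn₀def]; exact Nat.findGreatest_spec (Nat.zero_le _) hP0
  have hnotP : ¬ P (n₀ + 1) := by
    apply Nat.findGreatest_is_greatest (by rw [← hn₀def]; omega)
    have := hbound n₀ hPn₀
    omega
  obtain ⟨p, hpPF, hplen, hpJ⟩ := hPn₀
  set w := endV G.ω u p with hwdef
  -- endpoints of J land in the slice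
  have hinter := G.cyl_inter hpPF
  have hg0 : s ∈ Sm G.ρ G.c p '' G.F w := by
    rw [← hinter]
    exact ⟨hsF, hpJ ⟨min_le_left _ _, le_max_left _ _⟩⟩
  have hg1 : r + s ∈ Sm G.ρ G.c p '' G.F w := by
    rw [← hinter]
    exact ⟨hrsF, hpJ ⟨min_le_right _ _, le_max_right _ _⟩⟩
  obtain ⟨a₀, ha₀F, ha₀⟩ := hg0
  obtain ⟨b₀, hb₀F, hb₀⟩ := hg1
  have hab₀ : a₀ ≠ b₀ := by
    intro h
    rw [h, hb₀] at ha₀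
    exact hr0 (by linarith)
  set A0 := min a₀ b₀ with hA0def
  set B0 := max a₀ b₀ with hB0def
  have hA0B0 : A0 < B0 := min_lt_max.mpr hab₀
  have hA0F : A0 ∈ G.F w := by
    rcases min_cases a₀ b₀ with ⟨h, _⟩ | ⟨h, _⟩ <;> rw [hA0def, h] <;> assumption
  have hB0F : B0 ∈ G.F w := by
    rcases max_cases a₀ b₀ with ⟨h, _⟩ | ⟨h, _⟩ <;> rw [hB0def, h] <;> assumption
  -- image of [A0, B0] is exactly J
  have himg : Sm G.ρ G.c p '' Icc A0 B0 = J := by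
    rw [show Sm G.ρ G.c p = fun t => Aρ G.ρ p * t + Bc G.ρ G.c p from rfl,
      aff_Icc _ _ _ _ hA0B0.le, hJdef]
    have h1 : Aρ G.ρ p * A0 + Bc G.ρ G.c p = Sm G.ρ G.c p A0 := rfl
    have h2 : Aρ G.ρ p * B0 + Bc G.ρ G.c p = Sm G.ρ G.c p B0 := rfl
    rw [h1, h2]
    rcases le_total a₀ b₀ with h | h
    · rw [hA0def, hB0def, min_eq_left h, max_eq_right h, ha₀, hb₀]
    · rw [hA0def, hB0def, min_eq_right h, max_eq_left h, ha₀, hb₀]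
      rw [min_comm, max_comm]
  -- decompose the endpoints into children of w
  obtain ⟨k0, hk0d, hk0⟩ := G.decompose hA0F
  obtain ⟨k1, hk1d, hk1⟩ := G.decompose hB0F
  have hk0k1 : k0 ≤ k1 := by
    by_contra h
    push_neg at h
    have := G.order' h hk0d
    have : A0 = B0 := le_antisymm hA0B0.le (by linarith [hk1.2, hk0.1])
    linarith
  rcases eq_or_lt_of_le hk0k1 with rfl | hlt
  · -- both endpoints in one child: contradiction with maximality
    exfalso
    apply hnotP
    refine ⟨p ++ [G.en w k0], ?_, by simp [hplen], ?_⟩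
    · exact PF_append hpPF ⟨(G.hen w).mapsTo hk0d, trivial⟩
    · rw [G.Cyl_append]
      intro z hz
      rw [← himg] at hz
      obtain ⟨t, ht, rfl⟩ := hz
      refine mem_image_of_mem _ ?_
      have htI : t ∈ Icc (G.X w k0) (G.Y w k0) :=
        ⟨le_trans hk0.1 ht.1, le_trans ht.2 hk1.2⟩
      have : Icc (G.X w k0) (G.Y w k0) = Cyl G.ρ G.c [G.en w k0] := by
        rw [Cyl, show Sm G.ρ G.c [G.en w k0] = fun t => G.ρ (G.en w k0) * t + G.c (G.en w k0)
          from funext (G.Sm_single (G.en w k0)), G.hull_img01]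
        rfl
      rw [← this]
      exact htI
  · -- endpoints in different children: the standard gap lies inside J
    have hk01d : k0 + 1 < G.d w := by omega
    have hgapX := G.gap' hk01d
    have hIoo_sub : Ioo (G.Y w k0) (G.X w (k0+1)) ⊆ Icc A0 B0 := by
      intro z hz
      constructor
      · exact le_trans hk0.2 hz.1.le
      · refine le_trans hz.2.le (le_trans ?_ hk1.1)
        rcases eq_or_lt_of_le (show k0 + 1 ≤ k1 by omega) with rfl | h
        · exact le_refl _
        · exact le_trans (G.X_le_Y w (k0+1)) (G.order' h hk1d)
    have hYX : G.Y w k0 ≤ G.X w (k0+1) := by linarith [G.hδ]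
    -- the gap pushed up into J
    set P1 := min (Sm G.ρ G.c p (G.Y w k0)) (Sm G.ρ G.c p (G.X w (k0+1))) with hP1def
    set P2 := max (Sm G.ρ G.c p (G.Y w k0)) (Sm G.ρ G.c p (G.X w (k0+1))) with hP2def
    have hGup : Sm G.ρ G.c p '' Ioo (G.Y w k0) (G.X w (k0+1)) = Ioo P1 P2 := by
      rw [show Sm G.ρ G.c p = fun t => Aρ G.ρ p * t + Bc G.ρ G.c p from rfl,
        aff_Ioo _ _ _ _ (G.Aρ_ne_zero p) hYX]
      rfl
    have hP21 : P2 - P1 = |Aρ G.ρ p| * G.δ := by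
      rw [hP2def, hP1def, max_sub_min_eq_abs, G.Sm_sub, abs_mul]
      congr 1
      rw [abs_of_pos (by linarith [G.hδ] : (0:ℝ) < G.X w (k0+1) - G.Y w k0)]
      linarith
    have hP1P2 : P1 < P2 := by
      have := G.abs_Aρ_pos p
      have := G.hδ
      nlinarith
    have hGupJ : Ioo P1 P2 ⊆ J := by
      rw [← hGup, ← himg]
      exact image_mono hIoo_sub
    have hGupF : Ioo P1 P2 ∩ G.F u = ∅ := by
      ext z
      simp only [mem_inter_iff, mem_empty_iff_false, iff_false, not_and]
      intro hz1 hz2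
      have hzC : z ∈ Cyl G.ρ G.c p := by
        have := hpJ (hGupJ hz1)
        exact this
      have : z ∈ Sm G.ρ G.c p '' G.F w := by rw [← hinter]; exact ⟨hz2, hzC⟩
      obtain ⟨y, hyF, hy⟩ := this
      rw [← hGup] at hz1
      obtain ⟨y', hy', hy'eq⟩ := hz1
      have : y' = y := G.Sm_injective p (by rw [hy'eq, hy])
      subst this
      have : y' ∈ Ioo (G.Y w k0) (G.X w (k0+1)) ∩ G.F w := ⟨hy', hyF⟩
      rw [G.vgap hk01d] at this
      exact this
    -- endpoints of the gap are within J
    have hend : min s (r + s) ≤ P1 ∧ P2 ≤ max s (r + s) := by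
      constructor
      · by_contra h
        push_neg at h
        set t := min ((P1 + P2)/2) ((P1 + min s (r + s))/2) with htdef
        have ht1 : P1 < t := by
          rw [htdef]; apply lt_min <;> linarith
        have ht2 : t < P2 := by
          rw [htdef]
          apply lt_of_le_of_lt (min_le_left _ _)
          linarith
        have := hGupJ ⟨ht1, ht2⟩
        have h3 : t < min s (r + s) := by
          rw [htdef]
          apply lt_of_le_of_lt (min_le_right _ _)
          linarith
        exact absurd this.1 (by linarith)
      · by_contra h
        push_neg at h
        set t := max ((P1 + P2)/2) ((P2 + max s (r + s))/2) with htdef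
        have ht1 : t < P2 := by
          rw [htdef]; apply max_lt <;> linarith
        have ht2 : P1 < t := by
          rw [htdef]
          apply lt_of_lt_of_le _ (le_max_left _ _)
          linarith
        have := hGupJ ⟨ht2, ht1⟩
        have h3 : max s (r + s) < t := by
          rw [htdef]
          apply lt_of_lt_of_le _ (le_max_right _ _)
          linarith
        exact absurd this.2 (by linarith)
    -- pull the gap back through g and apply the gap length bound
    obtain ⟨a', b', ha', hb', hempty', hlen'⟩ :=
      affine_pullback hr0 (fun t ht => hmap (mem_image_of_mem _ ht)) hP1P2
        hend.1 hend.2 hGupF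
    have hb'a' : b' - a' ≤ G.δ := G.gap_le ha' hb' hempty'
    have hAple : |Aρ G.ρ p| ≤ |r| := by
      have h1 : |Aρ G.ρ p| * G.δ ≤ |r| * G.δ := by
        rw [← hP21, hlen']
        have : 0 ≤ |r| := abs_nonneg r
        nlinarith
      have := G.hδ
      nlinarith
    have hAeq : |Aρ G.ρ p| = |r| := le_antisymm hAple (hlb p hpJ)
    -- J = Cyl p, equal endpoints
    have hcylI := G.cyl_eq_Icc p
    have hJne : min s (r + s) ≤ max s (r + s) := min_le_max
    have hsub2 := (Icc_subset_Icc_iff hJne).mp (hcylI ▸ hpJ)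
    have e1 : max s (r + s) - min s (r + s) = |r| := by
      rw [max_sub_min_eq_abs]; simp [abs_sub_comm]
    have e2 : max (Sm G.ρ G.c p 0) (Sm G.ρ G.c p 1) -
        min (Sm G.ρ G.c p 0) (Sm G.ρ G.c p 1) = |Aρ G.ρ p| := by
      rw [max_sub_min_eq_abs, abs_sub_comm, G.Sm_sub]; simp
    have hminJ : min s (r + s) = min (Sm G.ρ G.c p 0) (Sm G.ρ G.c p 1) := by
      linarith [hsub2.1, hsub2.2]
    have hmaxJ : max s (r + s) = max (Sm G.ρ G.c p 0) (Sm G.ρ G.c p 1) := by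
      linarith [hsub2.1, hsub2.2]
    -- identify g with Sm p or its reflection
    have hSm0 : Sm G.ρ G.c p 0 = Bc G.ρ G.c p := by simp [Sm]
    have hSm1 : Sm G.ρ G.c p 1 = Aρ G.ρ p + Bc G.ρ G.c p := by simp [Sm]
    have hcases : (r = Aρ G.ρ p ∧ s = Bc G.ρ G.c p) ∨
        (r = - Aρ G.ρ p ∧ s = Aρ G.ρ p + Bc G.ρ G.c p) := by
      rw [hSm0, hSm1] at hminJ hmaxJ
      rcases le_total s (r + s) with h1 | h1 <;>
        rcases le_total (Bc G.ρ G.c p) (Aρ G.ρ p + Bc G.ρ G.c p) with h2 | h2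
      · left
        rw [min_eq_left h1, min_eq_left h2] at hminJ
        rw [max_eq_right h1, max_eq_right h2] at hmaxJ
        constructor <;> linarith
      · right
        rw [min_eq_left h1, min_eq_right h2] at hminJ
        rw [max_eq_right h1, max_eq_left h2] at hmaxJ
        constructor <;> linarith
      · right
        rw [min_eq_right h1, min_eq_left h2] at hminJ
        rw [max_eq_left h1, max_eq_right h2] at hmaxJ
        constructor <;> linarith
      · left
        rw [min_eq_right h1, min_eq_right h2] at hminJ
        rw [max_eq_left h1, max_eq_left h2] at hmaxJ
        constructor <;> linarith
    -- g maps F u into Sm p '' F w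
    have hgsub : (fun t => r * t + s) '' G.F u ⊆ Sm G.ρ G.c p '' G.F w := by
      rw [← hinter]
      intro z hz
      constructor
      · exact hmap hz
      · apply hpJ
        obtain ⟨t, ht, rfl⟩ := hz
        exact hJ ▸ mem_image_of_mem (fun t => r * t + s) (G.FsubIcc u ht)
    have hFsub : G.F u ⊆ G.F w ∨ (fun t => 1 - t) '' G.F u ⊆ G.F w := by
      rcases hcases with ⟨hre, hse⟩ | ⟨hre, hse⟩
      · left
        intro x hx
        have : (fun t => r * t + s) x ∈ Sm G.ρ G.c p '' G.F w :=
          hgsub (mem_image_of_mem _ hx)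
        obtain ⟨y, hyF, hy⟩ := this
        have : Sm G.ρ G.c p y = Sm G.ρ G.c p x := by
          rw [hy]; simp only [Sm, hre, hse]
        have := G.Sm_injective p this
        rwa [← this]
      · right
        rintro z ⟨x, hx, rfl⟩
        have : (fun t => r * t + s) x ∈ Sm G.ρ G.c p '' G.F w :=
          hgsub (mem_image_of_mem _ hx)
        obtain ⟨y, hyF, hy⟩ := this
        have heq : Sm G.ρ G.c p y = Sm G.ρ G.c p (1 - x) := by
          rw [hy]; simp only [Sm, hre, hse]; ring
        have := G.Sm_injective p heq
        show (1 - x) ∈ G.F w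
        rwa [← this]
    have hwu : w = u := by
      by_contra hne
      rcases hFsub with h | h
      · exact (hsub w hne).1 h
      · exact (hsub w hne).2 h
    have hpne : p ≠ [] := by
      intro h
      rw [h] at hAeq
      simp [Aρ] at hAeq
      rw [← hAeq] at hr1
      simp at hr1
    refine ⟨p, hpne, hpPF, by rw [← hwdef]; exact hwu, ?_⟩
    intro z hz
    apply hpJ
    obtain ⟨t, ht, rfl⟩ := hz
    exact hJ ▸ mem_image_of_mem (fun t => r * t + s) (G.FsubIcc u ht)

end GD
end Stmt18Aux

namespace Stmt18Aux

variable {V E : Type}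

lemma PF_of_chain {α ω : E → V} :
    ∀ (p : List E) (v : V), p.Chain' (fun e f => ω e = α f) →
      (∀ e ∈ p.head?, α e = v) → PF α ω v p := by
  intro p
  induction p with
  | nil => intro v _ _; trivial
  | cons e q ih =>
    intro v hch hhd
    have h1 : α e = v := hhd e (by simp)
    obtain ⟨h2, h3⟩ := List.isChain_cons.mp hch
    exact ⟨h1, ih (ω e) h3 (fun f hf => (h2 f hf).symm)⟩

lemma PF_of_IsPathFromTo {α ω : E → V} {p : List E} {a b : V}
    (h : IsPathFromTo α ω p a b) : PF α ω a p ∧ endV ω a p = b := by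
  obtain ⟨hne, hch, hhd, hlast⟩ := h
  refine ⟨PF_of_chain p a hch hhd, ?_⟩
  rw [endV_eq_omega_getLast hne]
  exact hlast _ (List.getLast?_eq_getLast hne)

/-- iterated concatenation of a loop -/
def iterL (L : List E) : ℕ → List E
  | 0 => []
  | n + 1 => L ++ iterL L n

lemma iterL_PF {α ω : E → V} {L : List E} {w₀ : V}
    (hPF : PF α ω w₀ L) (hend : endV ω w₀ L = w₀) (n : ℕ) :
    PF α ω w₀ (iterL L n) ∧ endV ω w₀ (iterL L n) = w₀ := by
  induction n with
  | zero => exact ⟨trivial, rfl⟩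
  | succ n ih =>
    constructor
    · exact PF_append hPF (by rw [hend]; exact ih.1)
    · rw [iterL, endV_append, hend, ih.2]

lemma iterL_length (L : List E) (n : ℕ) : (iterL L n).length = n * L.length := by
  induction n with
  | zero => simp [iterL]
  | succ n ih => rw [iterL, List.length_append, ih]; ring

lemma mem_iterL {L : List E} {e : E} {n : ℕ} (h : e ∈ iterL L n) : e ∈ L := by
  induction n with
  | zero => simp [iterL] at h
  | succ n ih =>
    rw [iterL, List.mem_append] at h
    rcases h with h | h
    · exact h
    · exact ih h

end Stmt18Aux


open Stmt18Aux Set in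
theorem stmt18 {V E : Type} [Fintype V] [Fintype E]
    (α ω : E → V) (ρ c : E → ℝ) (F : V → Set ℝ)
    (hρ : ∀ e, |ρ e| < 1 ∧ ρ e ≠ 0)
    (hFc : ∀ v, IsCompact (F v) ∧ (F v).Nonempty)
    (hFeq : ∀ v, F v = ⋃ e ∈ {e : E | α e = v}, (fun t => ρ e * t + c e) '' F (ω e))
    (d : V → ℕ) (hd : ∀ v, d v = Nat.card {e : E // α e = v}) (hd2 : ∀ v, 2 ≤ d v)
    -- strong connectivity
    (hconn : ∀ a b : V, ∃ p : List E, IsPathFromTo α ω p a b)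
    -- the GD-IFS satisfies the CSSC
    (hCSSC : ∀ e e', e ≠ e' → α e = α e' →
      Disjoint ((fun t => ρ e * t + c e) '' convexHull ℝ (F (ω e)))
        ((fun t => ρ e' * t + c e') '' convexHull ℝ (F (ω e'))))
    -- conv F_w = [0,1] for every w
    (hconv : ∀ w, convexHull ℝ (F w) = Set.Icc 0 1)
    -- ordered enumeration of edges leaving each vertex, and basic gap lengths
    (en : V → ℕ → E) (hen : ∀ v, Set.BijOn (en v) (Set.Iio (d v)) {e : E | α e = v})
    (horder : ∀ v j k, j < k → k < d v →
      sSup ((fun t => ρ (en v j) * t + c (en v j)) '' convexHull ℝ (F (ω (en v j)))) ≤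
      sInf ((fun t => ρ (en v k) * t + c (en v k)) '' convexHull ℝ (F (ω (en v k)))))
    (lam : V → ℕ → ℝ)
    (hlam : ∀ v k, k + 1 < d v → lam v k =
      sInf ((fun t => ρ (en v (k+1)) * t + c (en v (k+1))) ''
        convexHull ℝ (F (ω (en v (k+1))))) -
      sSup ((fun t => ρ (en v k) * t + c (en v k)) '' convexHull ℝ (F (ω (en v k)))))
    -- the distinguished vertex u
    (u : V)
    -- (1) a directed circuit not passing through u
    (hcirc : ∃ (L : List E) (w₀ : V), IsPathFromTo α ω L w₀ w₀ ∧
      ∀ e ∈ L, α e ≠ u ∧ ω e ≠ u)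
    -- (2) all basic gaps have the same length δ > 0
    (δ : ℝ) (hδ : 0 < δ) (hgap : ∀ w k, k + 1 < d w → lam w k = δ)
    -- (3) for each vertex v ≠ u, F_u ⊄ F_v and 1 - F_u ⊄ F_v
    (hsub : ∀ v : V, v ≠ u → ¬ (F u ⊆ F v) ∧ ¬ ((fun t => 1 - t) '' F u ⊆ F v)) :
    -- F_u is not the attractor of any standard IFS
    ¬ ∃ (ι : Type) (_ : Fintype ι) (_ : Nonempty ι) (r s : ι → ℝ),
      (∀ i, |r i| < 1 ∧ r i ≠ 0) ∧
      (∀ i j, r i = r j → s i = s j → i = j) ∧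
      F u = ⋃ i, (fun t => r i * t + s i) '' F u := by
  classical
  -- E is nonempty
  have hEne : Nonempty E := by
    have h2 : 0 < Nat.card {e : E // α e = u} := by
      have := hd2 u; rw [hd u] at this; omega
    have := (Nat.card_pos_iff.mp h2).1
    exact ⟨this.some.val⟩
  -- bundle everything
  set G : GD V E := {
    α := α, ω := ω, ρ := ρ, c := c, F := F, en := en, d := d, δ := δ,
    hδ := hδ, hρ := hρ, hFc := hFc, hFeq := hFeq, hCSSC := hCSSC, hconv := hconv,
    hen := hen, hd2 := hd2, horder := horder,
    hgap := fun v k hk => by rw [← hlam v k hk]; exact hgap v k hk } with hGdef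
  rintro ⟨ι, hι, hιne, r, s, hri, -, hFU⟩
  -- each standard IFS map gives a cylinder over a circuit through u
  have hmap : ∀ i, (fun t => r i * t + s i) '' F u ⊆ F u := by
    intro i
    conv_rhs => rw [hFU]
    exact subset_iUnion (fun i => (fun t => r i * t + s i) '' F u) i
  have hcl : ∀ i, ∃ p : List E, p ≠ [] ∧ PF α ω u p ∧ endV ω u p = u ∧
      (fun t => r i * t + s i) '' F u ⊆ Cyl ρ c p := by
    intro i
    exact G.copy_lemma hsub (hri i).1 (hri i).2 (hmap i)
  choose p hpne hpPF hpend hpsub using hcl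
  letI := hι
  set M := Finset.univ.sup (fun i => (p i).length) with hMdef
  have hM : ∀ i, (p i).length ≤ M := fun i =>
    Finset.le_sup (f := fun i => (p i).length) (Finset.mem_univ i)
  -- the circuit avoiding u
  obtain ⟨L, w₀, hLpath, hLavoid⟩ := hcirc
  obtain ⟨hLPF, hLend⟩ := PF_of_IsPathFromTo hLpath
  have hLne : L ≠ [] := hLpath.1
  have hw₀u : w₀ ≠ u := by
    cases L with
    | nil => exact absurd rfl hLne
    | cons e L' =>
      have h1 : α e = w₀ := hLpath.2.2.1 e (by simp)
      have h2 := (hLavoid e (by simp)).1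
      rw [← h1]; exact h2
  -- shortest path from u to w₀
  have hQex : ∃ n, ∃ q : List E, PF α ω u q ∧ endV ω u q = w₀ ∧ q.length = n := by
    obtain ⟨q, hq⟩ := hconn u w₀
    obtain ⟨h1, h2⟩ := PF_of_IsPathFromTo hq
    exact ⟨q.length, q, h1, h2, rfl⟩
  set nq := Nat.find hQex with hnqdef
  obtain ⟨q, hqPF, hqend, hqlen⟩ := Nat.find_spec hQex
  rw [← hnqdef] at hqlen
  have hqmin : ∀ m, m < nq → ¬ ∃ q : List E, PF α ω u q ∧ endV ω u q = w₀ ∧ q.length = m :=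
    fun m hm => Nat.find_min hQex hm
  have hqne : q ≠ [] := by
    intro h
    rw [h] at hqend
    exact hw₀u (by simpa [endV] using hqend.symm)
  -- the long path t_list
  set tl := q ++ iterL L (M + 1) with htldef
  have hiter := iterL_PF hLPF hLend (M + 1)
  have htlPF : PF α ω u tl := PF_append hqPF (by rw [hqend]; exact hiter.1)
  have htlend : endV ω u tl = w₀ := by
    rw [htldef, endV_append, hqend, hiter.2]
  have htllen : M < tl.length := by
    have h1 : 1 ≤ L.length := by
      cases L with
      | nil => exact absurd rfl hLne
      | cons _ _ => simp
    have := iterL_length L (M + 1)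
    rw [htldef, List.length_append, this]
    nlinarith
  -- no nonempty prefix of tl ends at u
  have hpref : ∀ sl : List E, sl ≠ [] → sl <+: tl → endV ω u sl ≠ u := by
    intro sl hslne hslpre hslu
    rcases le_or_gt sl.length q.length with hle | hgt
    · have hslq : sl <+: q :=
        List.prefix_of_prefix_length_le hslpre ⟨iterL L (M+1), rfl⟩ hle
      obtain ⟨s', rfl⟩ := hslq
      obtain ⟨h1, h2⟩ := PF_prefix_split hqPF
      rw [hslu] at h2
      rcases eq_or_ne s' [] with rfl | hs'ne
      · rw [List.append_nil] at hqend
        exact hw₀u (by rw [← hqend, hslu])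
      · have hend' : endV ω u s' = w₀ := by
          rw [← hqend, endV_append, hslu]
        have hlen' : s'.length < nq := by
          rw [← hqlen, List.length_append]
          have : 1 ≤ sl.length := by
            cases sl with
            | nil => exact absurd rfl hslne
            | cons _ _ => simp
          omega
        exact hqmin s'.length hlen' ⟨s', h2, hend', rfl⟩
    · have hqsl : q <+: sl :=
        List.prefix_of_prefix_length_le ⟨iterL L (M+1), rfl⟩ hslpre (by omega)
      obtain ⟨s₂, rfl⟩ := hqsl
      have hs₂ne : s₂ ≠ [] := by
        intro h
        rw [h, List.append_nil] at hgt
        omega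
      have hs₂pre : s₂ <+: iterL L (M + 1) := by
        have := hslpre
        rw [htldef] at this
        exact (List.prefix_append_right_inj q).mp this
      have hend2 : endV ω u (q ++ s₂) = ω (s₂.getLast hs₂ne) := by
        rw [endV_append, endV_eq_omega_getLast hs₂ne]
      have hmem : s₂.getLast hs₂ne ∈ L :=
        mem_iterL (hs₂pre.subset (List.getLast_mem hs₂ne))
      rw [hend2] at hslu
      exact (hLavoid _ hmem).2 hslu
  -- the deep point z
  have h0w : (0:ℝ) ∈ F w₀ := (G.mem0F w₀).1
  set z := Sm ρ c tl 0 with hzdef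
  have hzF : z ∈ F u := by
    have : z ∈ Sm ρ c tl '' F (endV ω u tl) := by
      rw [htlend]
      exact mem_image_of_mem _ h0w
    exact G.Sm_image_F_subset htlPF this
  have hzCyl : z ∈ Cyl ρ c tl := mem_image_of_mem _ (by norm_num : (0:ℝ) ∈ Icc 0 1)
  -- z lies in some standard IFS cylinder
  have : z ∈ ⋃ i, (fun t => r i * t + s i) '' F u := by rw [← hFU]; exact hzF
  obtain ⟨i, hzi⟩ := mem_iUnion.mp this
  have hzpi : z ∈ Cyl ρ c (p i) := hpsub i hzi
  -- comparability
  rcases G.cyl_comparable (hpPF i) htlPF ⟨z, hzpi, hzCyl⟩ with hc | hc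
  · exact hpref (p i) (hpne i) hc (hpend i)
  · have h1 := hc.length_le
    have h2 := hM i
    omega
end

section
/- Let A₁, A₂ ⊂ (0,1) be finite sets with A₁^{ℚ*} ∩ A₂^{ℚ₊*} = ∅, and set A = A₁ ∪ A₂. Then: (a) A₁^{ℚ₊*} ∩ A₁^{ℚ₊}A₂^{ℚ₊*} = ∅; (b) A^{ℚ₊*} = A₁^{ℚ₊*} ∪ A₁^{ℚ₊}A₂^{ℚ₊*}; and (c) for every finite set X ⊆ A₁^{ℚ₊}A₂^{ℚ₊*}, one has X^{ℚ₊*} ⊆ A₁^{ℚ₊}A₂^{ℚ₊*}. -/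
/-- `A^{ℚ*}`: all products `∏ a^(q a)` over nonzero vectors `q` of rationals. -/
def qStar (A : Set ℝ) : Set ℝ :=
  {x | ∃ q : ℝ → ℚ, (∀ a, q a ≠ 0 → a ∈ A) ∧ (Function.support q).Finite ∧ q ≠ 0 ∧
    x = ∏ᶠ a, a ^ ((q a : ℝ))}

/-- `A^{ℚ₊*}`: all products `∏ a^(q a)` over nonzero vectors `q` of nonnegative rationals. -/
def qPosStar (A : Set ℝ) : Set ℝ :=
  {x | ∃ q : ℝ → ℚ, (∀ a, q a ≠ 0 → a ∈ A) ∧ (Function.support q).Finite ∧ q ≠ 0 ∧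
    (∀ a, 0 ≤ q a) ∧ x = ∏ᶠ a, a ^ ((q a : ℝ))}

/-- `A^{ℚ₊} = {1} ∪ A^{ℚ₊*}`. -/
def qPosSet (A : Set ℝ) : Set ℝ := {1} ∪ qPosStar A

open Function Set


noncomputable def pw (q : ℝ → ℚ) : ℝ := ∏ᶠ a, a ^ (q a : ℝ)

lemma pw_eq_prod (q : ℝ → ℚ) (s : Finset ℝ) (hs : support q ⊆ s) :
    pw q = ∏ a ∈ s, a ^ (q a : ℝ) := by
  apply finprod_eq_prod_of_mulSupport_subset
  intro a ha
  by_cases h0 : q a = 0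
  · exact absurd (by simp [h0]) ha
  · exact hs h0

lemma pw_zero : pw 0 = 1 := by
  rw [pw_eq_prod 0 ∅ (by simp)]; simp

lemma pw_pos {q : ℝ → ℚ} (hq : (support q).Finite) (hpos : ∀ a, q a ≠ 0 → (0:ℝ) < a) :
    0 < pw q := by
  rw [pw_eq_prod q hq.toFinset (by simp)]
  apply Finset.prod_pos
  intro a ha
  exact Real.rpow_pos_of_pos (hpos a (by simpa using ha)) _

lemma pw_add {q r : ℝ → ℚ} (hq : (support q).Finite) (hr : (support r).Finite)
    (hposq : ∀ a, q a ≠ 0 → (0:ℝ) < a) (hposr : ∀ a, r a ≠ 0 → (0:ℝ) < a) :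
    pw (q + r) = pw q * pw r := by
  classical
  set s := hq.toFinset ∪ hr.toFinset with hs
  have hss : support q ⊆ s ∧ support r ⊆ s := by
    constructor <;> intro a ha <;> simp [hs] <;> [left; right] <;> simpa using ha
  have hqr : support (q + r) ⊆ s := by
    intro a ha
    rcases Classical.em (q a = 0) with h | h
    · exact hss.2 (fun h' => ha (by simp [Pi.add_apply, h, h']))
    · exact hss.1 h
  rw [pw_eq_prod _ s hqr, pw_eq_prod q s hss.1, pw_eq_prod r s hss.2,
    ← Finset.prod_mul_distrib]
  apply Finset.prod_congr rfl
  intro a ha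
  have hapos : (0:ℝ) < a := by
    simp only [hs, Finset.mem_union, Set.Finite.mem_toFinset, mem_support] at ha
    rcases ha with h | h
    exacts [hposq a h, hposr a h]
  rw [Pi.add_apply, Rat.cast_add, Real.rpow_add hapos]

lemma pw_smul {q : ℝ → ℚ} (c : ℚ) (hq : (support q).Finite)
    (hpos : ∀ a, q a ≠ 0 → (0:ℝ) < a) :
    pw (fun a => c * q a) = pw q ^ (c : ℝ) := by
  have hsub : support (fun a => c * q a) ⊆ hq.toFinset := by
    intro a ha
    have hne : q a ≠ 0 := fun h => ha (show (fun a => c * q a) a = 0 by simp [h])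
    simpa using hne
  rw [pw_eq_prod _ hq.toFinset hsub, pw_eq_prod q hq.toFinset (by simp)]
  rw [← Real.finset_prod_rpow hq.toFinset (fun a => a ^ (q a : ℝ))
    (fun a ha => (Real.rpow_nonneg (hpos a (by simpa using ha)).le _)) (c : ℝ)]
  apply Finset.prod_congr rfl
  intro a ha
  have h0 : (0:ℝ) ≤ a := (hpos a (by simpa using ha)).le
  rw [← Real.rpow_mul h0]
  push_cast
  ring_nf

lemma pw_lt_one {q : ℝ → ℚ} (hq : (support q).Finite)
    (hsub : ∀ a, q a ≠ 0 → a ∈ Set.Ioo (0:ℝ) 1) (hnn : ∀ a, 0 ≤ q a) (hne : q ≠ 0) :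
    pw q < 1 := by
  obtain ⟨a0, ha0⟩ := ne_iff.mp hne
  simp only [Pi.zero_apply] at ha0
  have ha0s : a0 ∈ hq.toFinset := by simpa using ha0
  rw [pw_eq_prod q hq.toFinset (by simp), ← Finset.prod_erase_mul _ _ ha0s]
  have h1 : (∏ a ∈ hq.toFinset.erase a0, a ^ (q a : ℝ)) ≤ 1 := by
    apply Finset.prod_le_one
    · intro a ha
      have ha' : q a ≠ 0 := by simp at ha; exact ha.2
      exact (Real.rpow_pos_of_pos (hsub a ha').1 _).le
    · intro a ha
      have ha' : q a ≠ 0 := by simp at ha; exact ha.2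
      exact Real.rpow_le_one (hsub a ha').1.le (hsub a ha').2.le (by exact_mod_cast hnn a)
  have h2 : a0 ^ (q a0 : ℝ) < 1 :=
    Real.rpow_lt_one (hsub a0 ha0).1.le (hsub a0 ha0).2
      (by exact_mod_cast lt_of_le_of_ne (hnn a0) (Ne.symm ha0))
  have h3 : (0:ℝ) ≤ a0 ^ (q a0 : ℝ) := (Real.rpow_pos_of_pos (hsub a0 ha0).1 _).le
  nlinarith

lemma mem_qPosStar_pw {A : Set ℝ} {q : ℝ → ℚ} (h1 : ∀ a, q a ≠ 0 → a ∈ A)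
    (h2 : (support q).Finite) (h3 : q ≠ 0) (h4 : ∀ a, 0 ≤ q a) : pw q ∈ qPosStar A :=
  ⟨q, h1, h2, h3, h4, rfl⟩

lemma mem_qStar_pw {A : Set ℝ} {q : ℝ → ℚ} (h1 : ∀ a, q a ≠ 0 → a ∈ A)
    (h2 : (support q).Finite) (h3 : q ≠ 0) : pw q ∈ qStar A :=
  ⟨q, h1, h2, h3, rfl⟩

lemma qPosStar_pos {A : Set ℝ} (hA : ∀ a ∈ A, (0:ℝ) < a) {x : ℝ}
    (hx : x ∈ qPosStar A) : 0 < x := by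
  obtain ⟨q, hq1, hq2, hq3, hq4, rfl⟩ := hx
  exact pw_pos hq2 (fun a ha => hA a (hq1 a ha))

lemma qPosSet_pos {A : Set ℝ} (hA : ∀ a ∈ A, (0:ℝ) < a) {x : ℝ}
    (hx : x ∈ qPosSet A) : 0 < x := by
  rcases hx with hx | hx
  · simp only [Set.mem_singleton_iff] at hx; simp [hx]
  · exact qPosStar_pos hA hx

lemma qPosStar_lt_one {A : Set ℝ} (hA : A ⊆ Set.Ioo (0:ℝ) 1) {x : ℝ}
    (hx : x ∈ qPosStar A) : x < 1 := by
  obtain ⟨q, hq1, hq2, hq3, hq4, rfl⟩ := hx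
  exact pw_lt_one hq2 (fun a ha => hA (hq1 a ha)) hq4 hq3

lemma mul_mem_qPosStar_union {A B : Set ℝ} (hA : ∀ a ∈ A, (0:ℝ) < a)
    (hB : ∀ a ∈ B, (0:ℝ) < a) {x y : ℝ}
    (hx : x ∈ qPosStar A) (hy : y ∈ qPosStar B) : x * y ∈ qPosStar (A ∪ B) := by
  obtain ⟨q, hq1, hq2, hq3, hq4, rfl⟩ := hx
  obtain ⟨r, hr1, hr2, hr3, hr4, rfl⟩ := hy
  have hpq : ∀ a, q a ≠ 0 → (0:ℝ) < a := fun a ha => hA a (hq1 a ha)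
  have hpr : ∀ a, r a ≠ 0 → (0:ℝ) < a := fun a ha => hB a (hr1 a ha)
  have key : pw (q + r) ∈ qPosStar (A ∪ B) := by
    apply mem_qPosStar_pw
    · intro a ha
      rcases Classical.em (q a = 0) with h | h
      · right; exact hr1 a (fun h' => ha (by simp [Pi.add_apply, h, h']))
      · left; exact hq1 a h
    · exact (hq2.union hr2).subset (support_add q r)
    · obtain ⟨a, ha⟩ := ne_iff.mp hq3
      simp only [Pi.zero_apply] at ha
      apply ne_iff.mpr ⟨a, ?_⟩
      have h1 : 0 < q a := lt_of_le_of_ne (hq4 a) (Ne.symm ha)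
      have h2 : 0 ≤ r a := hr4 a
      simp only [Pi.add_apply, Pi.zero_apply]
      positivity
    · intro a; exact add_nonneg (hq4 a) (hr4 a)
  rw [pw_add hq2 hr2 hpq hpr] at key
  exact key

lemma mul_mem_qPosStar {A : Set ℝ} (hA : ∀ a ∈ A, (0:ℝ) < a) {x y : ℝ}
    (hx : x ∈ qPosStar A) (hy : y ∈ qPosStar A) : x * y ∈ qPosStar A := by
  have := mul_mem_qPosStar_union hA hA hx hy
  rwa [Set.union_self] at this

lemma mul_mem_qPosSet {A : Set ℝ} (hA : ∀ a ∈ A, (0:ℝ) < a) {x y : ℝ}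
    (hx : x ∈ qPosSet A) (hy : y ∈ qPosSet A) : x * y ∈ qPosSet A := by
  rcases hx with hx | hx <;> rcases hy with hy | hy
  · simp only [Set.mem_singleton_iff] at hx hy; left; simp [hx, hy]
  · simp only [Set.mem_singleton_iff] at hx; subst hx; right; simpa using hy
  · simp only [Set.mem_singleton_iff] at hy; subst hy; right; simpa using hx
  · right; exact mul_mem_qPosStar hA hx hy

lemma rpow_mem_qPosStar {A : Set ℝ} (hA : ∀ a ∈ A, (0:ℝ) < a) {x : ℝ}
    (hx : x ∈ qPosStar A) {c : ℚ} (hc : 0 < c) : x ^ (c : ℝ) ∈ qPosStar A := by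
  obtain ⟨q, hq1, hq2, hq3, hq4, rfl⟩ := hx
  have hpq : ∀ a, q a ≠ 0 → (0:ℝ) < a := fun a ha => hA a (hq1 a ha)
  have key : pw (fun a => c * q a) ∈ qPosStar A := by
    apply mem_qPosStar_pw
    · intro a ha
      exact hq1 a (fun h => ha (by simp [h]))
    · exact hq2.subset (fun a ha => by
        simp only [mem_support] at ha ⊢
        exact fun h => ha (by simp [h]))
    · obtain ⟨a, ha⟩ := ne_iff.mp hq3
      simp only [Pi.zero_apply] at ha
      exact ne_iff.mpr ⟨a, by simp [hc.ne', ha]⟩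
    · intro a; exact mul_nonneg hc.le (hq4 a)
  rwa [pw_smul c hq2 hpq] at key

lemma rpow_mem_qPosSet {A : Set ℝ} (hA : ∀ a ∈ A, (0:ℝ) < a) {x : ℝ}
    (hx : x ∈ qPosSet A) {c : ℚ} (hc : 0 < c) : x ^ (c : ℝ) ∈ qPosSet A := by
  rcases hx with hx | hx
  · simp only [Set.mem_singleton_iff] at hx; left; simp [hx]
  · right; exact rpow_mem_qPosStar hA hx hc

lemma image2_mul_closed {A₁ A₂ : Set ℝ} (hA1 : ∀ a ∈ A₁, (0:ℝ) < a)
    (hA2 : ∀ a ∈ A₂, (0:ℝ) < a) {x y : ℝ}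
    (hx : x ∈ Set.image2 (· * ·) (qPosSet A₁) (qPosStar A₂))
    (hy : y ∈ Set.image2 (· * ·) (qPosSet A₁) (qPosStar A₂)) :
    x * y ∈ Set.image2 (· * ·) (qPosSet A₁) (qPosStar A₂) := by
  obtain ⟨y₁, hy₁, z₁, hz₁, rfl⟩ := hx
  obtain ⟨y₂, hy₂, z₂, hz₂, rfl⟩ := hy
  have hre : (y₁ * z₁ : ℝ) * (y₂ * z₂) = (y₁ * y₂) * (z₁ * z₂) := by ring
  simp only at hre ⊢
  rw [hre]
  exact Set.mem_image2_of_mem (mul_mem_qPosSet hA1 hy₁ hy₂) (mul_mem_qPosStar hA2 hz₁ hz₂)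

theorem stmt19 (A₁ A₂ : Set ℝ) (h1fin : A₁.Finite) (h2fin : A₂.Finite)
    (h1 : A₁ ⊆ Set.Ioo 0 1) (h2 : A₂ ⊆ Set.Ioo 0 1)
    (hsep : qStar A₁ ∩ qPosStar A₂ = ∅) :
    (qPosStar A₁ ∩ Set.image2 (· * ·) (qPosSet A₁) (qPosStar A₂) = ∅) ∧
    (qPosStar (A₁ ∪ A₂) = qPosStar A₁ ∪ Set.image2 (· * ·) (qPosSet A₁) (qPosStar A₂)) ∧
    (∀ X : Set ℝ, X.Finite → X ⊆ Set.image2 (· * ·) (qPosSet A₁) (qPosStar A₂) →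
      qPosStar X ⊆ Set.image2 (· * ·) (qPosSet A₁) (qPosStar A₂)) := by
  classical
  have hA1pos : ∀ a ∈ A₁, (0:ℝ) < a := fun a ha => (h1 ha).1
  have hA2pos : ∀ a ∈ A₂, (0:ℝ) < a := fun a ha => (h2 ha).1
  have hsep' : ∀ x, x ∈ qStar A₁ → x ∉ qPosStar A₂ := by
    intro x hx hx2
    have hmem : x ∈ qStar A₁ ∩ qPosStar A₂ := ⟨hx, hx2⟩
    rw [hsep] at hmem; exact hmem
  refine ⟨?_, ?_, ?_⟩
  · -- part (a)
    rw [Set.eq_empty_iff_forall_notMem]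
    rintro x ⟨hx1, hx2⟩
    obtain ⟨y, hy, z, hz, hyz⟩ := hx2
    simp only at hyz
    have hzlt : z < 1 := qPosStar_lt_one h2 hz
    have hzpos : 0 < z := qPosStar_pos hA2pos hz
    obtain ⟨p, hp1, hp2, hp3, hp4, hp5⟩ := hx1
    have hxp : x = pw p := hp5
    rcases hy with hy | hy
    · -- y = 1
      simp only [Set.mem_singleton_iff] at hy
      subst hy
      rw [one_mul] at hyz
      exact hsep' z (hyz ▸ hxp ▸ mem_qStar_pw hp1 hp2 hp3) hz
    · obtain ⟨p', hp'1, hp'2, hp'3, hp'4, hp'5⟩ := hy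
      have hyp : y = pw p' := hp'5
      have hypos : 0 < y := by
        rw [hyp]; exact pw_pos hp'2 (fun a ha => hA1pos a (hp'1 a ha))
      by_cases hd : p - p' = 0
      · -- p = p', so x = y and z = 1, contradiction
        have hpp : p = p' := by rwa [sub_eq_zero] at hd
        have hxy : x = y := by rw [hxp, hyp, hpp]
        have hz1 : z = 1 := by
          have h' : y * z = y * 1 := by rw [mul_one, hyz, ← hxy]
          exact mul_left_cancel₀ (ne_of_gt hypos) h'
        linarith
      · have hdfin : (support (p - p')).Finite :=
          (hp2.union hp'2).subset (Function.support_sub p p')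
        have hdpos : ∀ a, (p - p') a ≠ 0 → (0:ℝ) < a := by
          intro a ha
          simp only [Pi.sub_apply] at ha
          rcases Classical.em (p a = 0) with h | h
          · exact hA1pos a (hp'1 a (fun h' => ha (by rw [h, h', sub_zero])))
          · exact hA1pos a (hp1 a h)
        have hppos : ∀ a, p' a ≠ 0 → (0:ℝ) < a := fun a ha => hA1pos a (hp'1 a ha)
        have hsum : (p - p') + p' = p := by ring
        have hkey : pw p = pw (p - p') * pw p' := by
          have h := pw_add hdfin hp'2 hdpos hppos
          rwa [hsum] at h
        have hzd : pw (p - p') = z := by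
          have h' : y * pw (p - p') = y * z := by
            calc y * pw (p - p') = pw (p - p') * pw p' := by rw [hyp, mul_comm]
            _ = pw p := hkey.symm
            _ = x := hxp.symm
            _ = y * z := hyz.symm
          exact mul_left_cancel₀ (ne_of_gt hypos) h'
        have hd1 : ∀ a, (p - p') a ≠ 0 → a ∈ A₁ := by
          intro a ha
          simp only [Pi.sub_apply] at ha
          rcases Classical.em (p a = 0) with h | h
          · exact hp'1 a (fun h' => ha (by rw [h, h', sub_zero]))
          · exact hp1 a h
        exact hsep' z (hzd ▸ mem_qStar_pw hd1 hdfin hd) hz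
  · -- part (b)
    apply Set.Subset.antisymm
    · rintro x ⟨q, hq1, hq2, hq3, hq4, hq5⟩
      have hxq : x = pw q := hq5
      set q₁ : ℝ → ℚ := fun a => if a ∈ A₁ then q a else 0 with hq₁def
      set q₂ : ℝ → ℚ := fun a => if a ∈ A₁ then 0 else q a with hq₂def
      have hsum : q = q₁ + q₂ := by
        funext a
        by_cases h : a ∈ A₁ <;> simp [hq₁def, hq₂def, h]
      have hs1 : support q₁ ⊆ support q := by
        intro a ha
        simp only [mem_support, hq₁def] at ha ⊢
        intro h; exact ha (by simp [h])
      have hs2 : support q₂ ⊆ support q := by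
        intro a ha
        simp only [mem_support, hq₂def] at ha ⊢
        intro h; exact ha (by simp [h])
      have hf1 : (support q₁).Finite := hq2.subset hs1
      have hf2 : (support q₂).Finite := hq2.subset hs2
      have hq₁A : ∀ a, q₁ a ≠ 0 → a ∈ A₁ := by
        intro a ha
        by_contra h
        exact ha (by simp [hq₁def, h])
      have hq₂A : ∀ a, q₂ a ≠ 0 → a ∈ A₂ := by
        intro a ha
        have hmem : a ∈ A₁ ∪ A₂ := hq1 a (fun h => ha (by simp [hq₂def, h]))
        have hnot : a ∉ A₁ := fun h => ha (by simp [hq₂def, h])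
        rcases hmem with h | h
        · exact absurd h hnot
        · exact h
      have hp1 : ∀ a, q₁ a ≠ 0 → (0:ℝ) < a := fun a ha => hA1pos a (hq₁A a ha)
      have hp2' : ∀ a, q₂ a ≠ 0 → (0:ℝ) < a := fun a ha => hA2pos a (hq₂A a ha)
      have hsplit : x = pw q₁ * pw q₂ := by
        rw [hxq, hsum]; exact pw_add hf1 hf2 hp1 hp2'
      by_cases h2z : q₂ = 0
      · left
        have hq₁eq : q₁ = q := by rw [hsum, h2z, add_zero]
        rw [hsplit, h2z, pw_zero, mul_one]
        exact mem_qPosStar_pw hq₁A hf1 (hq₁eq ▸ hq3) (fun a => by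
          by_cases h : a ∈ A₁ <;> simp [hq₁def, h, hq4 a])
      · right
        have hzmem : pw q₂ ∈ qPosStar A₂ :=
          mem_qPosStar_pw hq₂A hf2 h2z (fun a => by
            by_cases h : a ∈ A₁ <;> simp [hq₂def, h, hq4 a])
        have hymem : pw q₁ ∈ qPosSet A₁ := by
          by_cases h1z : q₁ = 0
          · left; rw [h1z, pw_zero]; rfl
          · right
            exact mem_qPosStar_pw hq₁A hf1 h1z (fun a => by
              by_cases h : a ∈ A₁ <;> simp [hq₁def, h, hq4 a])
        rw [hsplit]
        exact Set.mem_image2_of_mem hymem hzmem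
    · rintro x (hx | hx)
      · obtain ⟨q, hq1, hq2, hq3, hq4, hq5⟩ := hx
        exact ⟨q, fun a ha => Or.inl (hq1 a ha), hq2, hq3, hq4, hq5⟩
      · obtain ⟨y, hy, z, hz, hyz⟩ := hx
        simp only at hyz
        rcases hy with hy | hy
        · simp only [Set.mem_singleton_iff] at hy
          subst hy
          rw [one_mul] at hyz
          obtain ⟨q, hq1, hq2, hq3, hq4, hq5⟩ := hz
          exact ⟨q, fun a ha => Or.inr (hq1 a ha), hq2, hq3, hq4, hyz ▸ hq5⟩
        · rw [← hyz]
          exact mul_mem_qPosStar_union hA1pos hA2pos hy hz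
  · -- part (c)
    intro X hXfin hX x hx
    obtain ⟨r, hr1, hr2, hr3, hr4, hr5⟩ := hx
    have hxr : x = pw r := hr5
    have hXpos : ∀ t ∈ X, (0:ℝ) < t := by
      intro t ht
      obtain ⟨y, hy, z, hz, hyz⟩ := hX ht
      simp only at hyz
      rw [← hyz]
      exact mul_pos (qPosSet_pos hA1pos hy) (qPosStar_pos hA2pos hz)
    obtain ⟨a0, ha0⟩ := ne_iff.mp hr3
    simp only [Pi.zero_apply] at ha0
    have hne : hr2.toFinset.Nonempty := ⟨a0, by simpa using ha0⟩
    rw [hxr, pw_eq_prod r hr2.toFinset (by simp)]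
    apply Finset.prod_induction_nonempty (fun t => t ^ (r t : ℝ))
      (· ∈ Set.image2 (· * ·) (qPosSet A₁) (qPosStar A₂))
      (fun a b ha hb => image2_mul_closed hA1pos hA2pos ha hb) hne
    intro t ht
    have htr : r t ≠ 0 := by simpa using ht
    have htc : 0 < r t := lt_of_le_of_ne (hr4 t) (Ne.symm htr)
    have htX : t ∈ X := hr1 t htr
    obtain ⟨y, hy, z, hz, hyz⟩ := hX htX
    simp only at hyz
    have hypos : 0 ≤ y := (qPosSet_pos hA1pos hy).le
    have hzpos : 0 ≤ z := (qPosStar_pos hA2pos hz).le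
    set c : ℝ := (r t : ℝ) with hc
    have hfac : t ^ c = y ^ c * z ^ c := by
      rw [← hyz, Real.mul_rpow hypos hzpos]
    rw [hfac]
    exact Set.mem_image2_of_mem (rpow_mem_qPosSet hA1pos hy htc)
      (rpow_mem_qPosStar hA2pos hz htc)
end
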